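/- arXiv:1602.04128 — 14 statements merged into one kernel-verified Lean document; each statement's English description precedes it below -/
import Mathlib

section
/- Let H be a real Hilbert space, let F : H → ℝ be a proper, convex, lower semicontinuous function, and define its Fenchel conjugate F*(u) = sup_{x ∈ H} (⟨u, x⟩ − F(x)) (with values in ℝ ∪ {+∞}). Let w_1, …, w_T ∈ H and g_1, …, g_T ∈ H, and let ε ∈ ℝ. Then Σ_{t=1}^T ⟨g_t, w_t⟩ ≥ F(Σ_{t=1}^T g_t) − ε if and only if for every u ∈ H, Σ_{t=1}^T ⟨g_t, u − w_t⟩ ≤ F*(u) + ε. -/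
open scoped RealInnerProductSpace

/-- Key step (Fenchel–Moreau at a point): for each `δ > 0` there is `v` with
`⟪v, G⟫ - F*(v) ≥ F G - δ`. -/
lemma fenchel_point {H : Type*} [NormedAddCommGroup H] [InnerProductSpace ℝ H]
    [CompleteSpace H]
    (F : H → ℝ) (hconv : ConvexOn ℝ Set.univ F) (hlsc : LowerSemicontinuous F)
    (G : H) {δ : ℝ} (hδ : 0 < δ) :
    ∃ v : H, ∀ x : H, ⟪v, x⟫ - F x ≤ ⟪v, G⟫ - F G + δ := by
  set s : Set (H × ℝ) := {p : H × ℝ | F p.1 ≤ p.2} with hs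
  have hclosed : IsClosed s := by
    have hg : LowerSemicontinuous (fun p : H × ℝ => F p.1 - p.2) := by
      simpa [sub_eq_add_neg] using (hlsc.comp continuous_fst).add
        (continuous_snd.neg.lowerSemicontinuous)
    have := hg.isClosed_preimage 0
    have heq : s = (fun p : H × ℝ => F p.1 - p.2) ⁻¹' Set.Iic 0 := by
      ext p; simp [hs, sub_nonpos]
    rw [heq]; exact this
  have hconvex : Convex ℝ s := by
    have := hconv.convex_epigraph
    simpa [hs] using this
  have hnot : (G, F G - δ) ∉ s := by
    simp only [hs, Set.mem_setOf_eq]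
    push_neg
    linarith
  obtain ⟨f, r, hfr, hr⟩ := geometric_hahn_banach_point_closed hconvex hclosed hnot
  set c : ℝ := f (0, 1) with hc
  have hlin : ∀ (x : H) (t : ℝ), f (x, t) = f (x, 0) + t * c := by
    intro x t
    have : (x, t) = (x, (0 : ℝ)) + t • ((0 : H), (1 : ℝ)) := by
      simp [Prod.ext_iff]
    rw [this, map_add, map_smul]
    simp [hc, smul_eq_mul]
  -- c > 0
  have hGmem : ((G, F G) : H × ℝ) ∈ s := by simp [hs]
  have h1 : r < f (G, F G) := hr _ hGmem
  have h2 : f (G, F G - δ) < r := hfr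
  have hcpos : 0 < c := by
    have e1 := hlin G (F G)
    have e2 := hlin G (F G - δ)
    nlinarith
  refine ⟨-(c⁻¹ • (InnerProductSpace.toDual ℝ H).symm (f.comp (ContinuousLinearMap.inl ℝ H ℝ))), fun x => ?_⟩
  have hinner : ∀ y : H, ⟪-(c⁻¹ • (InnerProductSpace.toDual ℝ H).symm
      (f.comp (ContinuousLinearMap.inl ℝ H ℝ))), y⟫ = -(c⁻¹ * f (y, 0)) := by
    intro y
    rw [inner_neg_left, inner_smul_left]
    simp [InnerProductSpace.toDual_symm_apply]
  rw [hinner x, hinner G]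
  -- from separation: f (G, F G - δ) < r < f (x, F x)
  have hx : ((x, F x) : H × ℝ) ∈ s := by simp [hs]
  have h3 : r < f (x, F x) := hr _ hx
  have e1 := hlin x (F x)
  have e2 := hlin G (F G - δ)
  have key : f (G, 0) + (F G - δ) * c < f (x, 0) + F x * c := by
    rw [← e1, ← e2]; linarith
  have hci : 0 < c⁻¹ := inv_pos.mpr hcpos
  have hcne : c ≠ 0 := ne_of_gt hcpos
  have key2 : c⁻¹ * (f (G, 0) + (F G - δ) * c) < c⁻¹ * (f (x, 0) + F x * c) :=
    mul_lt_mul_of_pos_left key hci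
  have e3 : c⁻¹ * (f (G, 0) + (F G - δ) * c) = c⁻¹ * f (G, 0) + (F G - δ) := by
    field_simp
  have e4 : c⁻¹ * (f (x, 0) + F x * c) = c⁻¹ * f (x, 0) + F x := by
    field_simp
  rw [e3, e4] at key2
  linarith

/-- Reward-Regret relationship (Lemma 1): for a proper convex lower semicontinuous
function `F` on a real Hilbert space, the reward lower bound
`∑ ⟨g_t, w_t⟩ ≥ F(∑ g_t) - ε` holds iff the regret upper bound
`∑ ⟨g_t, u - w_t⟩ ≤ F*(u) + ε` holds for every `u`. -/
theorem stmt_0 {H : Type*} [NormedAddCommGroup H] [InnerProductSpace ℝ H]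
    [CompleteSpace H]
    (F : H → ℝ) (hconv : ConvexOn ℝ Set.univ F) (hlsc : LowerSemicontinuous F)
    (T : ℕ) (w g : ℕ → H) (ε : ℝ) :
    (∑ t ∈ Finset.Icc 1 T, ⟪g t, w t⟫ ≥ F (∑ t ∈ Finset.Icc 1 T, g t) - ε) ↔
    (∀ u : H,
      ((∑ t ∈ Finset.Icc 1 T, ⟪g t, u - w t⟫ : ℝ) : EReal) ≤
        (⨆ x : H, ((⟪u, x⟫ - F x : ℝ) : EReal)) + (ε : EReal)) := by
  set G : H := ∑ t ∈ Finset.Icc 1 T, g t with hG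
  set R : ℝ := ∑ t ∈ Finset.Icc 1 T, ⟪g t, w t⟫ with hR
  have hsum : ∀ u : H, ∑ t ∈ Finset.Icc 1 T, ⟪g t, u - w t⟫ = ⟪u, G⟫ - R := by
    intro u
    simp [hG, hR, inner_sub_right, Finset.sum_sub_distrib, inner_sum, real_inner_comm]
  constructor
  · intro h u
    rw [hsum u]
    have key : ((⟪u, G⟫ - F G : ℝ) : EReal) ≤ ⨆ x : H, ((⟪u, x⟫ - F x : ℝ) : EReal) :=
      le_iSup (fun x : H => ((⟪u, x⟫ - F x : ℝ) : EReal)) G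
    calc ((⟪u, G⟫ - R : ℝ) : EReal) ≤ ((⟪u, G⟫ - F G : ℝ) : EReal) + (ε : EReal) := by
          rw [← EReal.coe_add]
          exact EReal.coe_le_coe_iff.mpr (by linarith [h])
      _ ≤ (⨆ x : H, ((⟪u, x⟫ - F x : ℝ) : EReal)) + (ε : EReal) :=
          add_le_add_left key _
  · intro h
    by_contra hlt
    push_neg at hlt
    set δ : ℝ := (F G - ε - R) / 2 with hδdef
    have hδ : 0 < δ := by simp only [hδdef]; linarith
    obtain ⟨v, hv⟩ := fenchel_point F hconv hlsc G hδ
    have hsup : (⨆ x : H, ((⟪v, x⟫ - F x : ℝ) : EReal)) ≤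
        ((⟪v, G⟫ - F G + δ : ℝ) : EReal) :=
      iSup_le fun x => EReal.coe_le_coe_iff.mpr (hv x)
    have := h v
    rw [hsum v] at this
    have hfinal : ((⟪v, G⟫ - R : ℝ) : EReal) ≤ ((⟪v, G⟫ - F G + δ + ε : ℝ) : EReal) := by
      calc ((⟪v, G⟫ - R : ℝ) : EReal) ≤ (⨆ x : H, ((⟪v, x⟫ - F x : ℝ) : EReal)) + (ε : EReal) := this
        _ ≤ ((⟪v, G⟫ - F G + δ : ℝ) : EReal) + (ε : EReal) := add_le_add_left hsup _
        _ = ((⟪v, G⟫ - F G + δ + ε : ℝ) : EReal) := by rw [← EReal.coe_add]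
    have : ⟪v, G⟫ - R ≤ ⟪v, G⟫ - F G + δ + ε := EReal.coe_le_coe_iff.mp hfinal
    simp only [hδdef] at this
    linarith
end

section
/- Let x ∈ ℝ and let F : [x−1, x+1] → (0, ∞) be logarithmically convex (i.e., ln F is convex). Set β* = (F(x+1) − F(x−1)) / (F(x+1) + F(x−1)). Then β* ∈ (−1, 1); for every β ∈ (−1, 1) one has sup_{g ∈ [−1,1]} F(x+g)/(1 + β* g) ≤ sup_{g ∈ [−1,1]} F(x+g)/(1 + β g); and moreover F(x+1)/(1 + β*) = F(x−1)/(1 − β*), equivalently ln F(x+1) − ln(1 + β*) = ln F(x−1) − ln(1 − β*). -/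
/-- Optimal betting fraction (Theorem 4): for a positive logarithmically convex
function `F` on `[x-1, x+1]`, the fraction
`β* = (F(x+1) - F(x-1))/(F(x+1) + F(x-1))` lies in `(-1,1)`, minimizes the
worst-case ratio `sup_{g ∈ [-1,1]} F(x+g)/(1+βg)` over `β ∈ (-1,1)`, and
equalizes the two endpoint ratios. -/
theorem stmt_1 (x : ℝ) (F : ℝ → ℝ)
    (hpos : ∀ y ∈ Set.Icc (x - 1) (x + 1), 0 < F y)
    (hconv : ConvexOn ℝ (Set.Icc (x - 1) (x + 1)) (fun y => Real.log (F y))) :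
    (F (x + 1) - F (x - 1)) / (F (x + 1) + F (x - 1)) ∈ Set.Ioo (-1 : ℝ) 1 ∧
    (∀ β ∈ Set.Ioo (-1 : ℝ) 1,
      (⨆ g : Set.Icc (-1 : ℝ) 1,
        F (x + g) / (1 + ((F (x + 1) - F (x - 1)) / (F (x + 1) + F (x - 1))) * g)) ≤
      (⨆ g : Set.Icc (-1 : ℝ) 1, F (x + g) / (1 + β * g))) ∧
    F (x + 1) / (1 + (F (x + 1) - F (x - 1)) / (F (x + 1) + F (x - 1))) =
      F (x - 1) / (1 - (F (x + 1) - F (x - 1)) / (F (x + 1) + F (x - 1))) := by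
  have hm1 : x - 1 ∈ Set.Icc (x - 1) (x + 1) := by constructor <;> linarith
  have hp1 : x + 1 ∈ Set.Icc (x - 1) (x + 1) := by constructor <;> linarith
  have ha : 0 < F (x - 1) := hpos _ hm1
  have hb : 0 < F (x + 1) := hpos _ hp1
  set a := F (x - 1) with ha_def
  set b := F (x + 1) with hb_def
  have hab : 0 < b + a := by linarith
  haveI : Nonempty (Set.Icc (-1 : ℝ) 1) := ⟨⟨0, by norm_num⟩⟩
  -- key convexity bound
  have key : ∀ g ∈ Set.Icc (-1 : ℝ) 1,
      F (x + g) ≤ ((1 - g) * a + (1 + g) * b) / 2 := by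
    intro g hg
    obtain ⟨hg1, hg2⟩ := hg
    set w1 : ℝ := (1 - g) / 2 with hw1
    set w2 : ℝ := (1 + g) / 2 with hw2
    have hw1n : 0 ≤ w1 := by rw [hw1]; linarith
    have hw2n : 0 ≤ w2 := by rw [hw2]; linarith
    have hws : w1 + w2 = 1 := by rw [hw1, hw2]; ring
    have hc := hconv.2 hm1 hp1 hw1n hw2n hws
    simp only [smul_eq_mul] at hc
    have hpt : w1 * (x - 1) + w2 * (x + 1) = x + g := by rw [hw1, hw2]; ring
    rw [hpt] at hc
    have hgx : 0 < F (x + g) := hpos _ (by constructor <;> linarith)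
    have h1 : F (x + g) ≤ a ^ w1 * b ^ w2 := by
      have := Real.exp_le_exp.mpr hc
      rw [Real.exp_log hgx, Real.exp_add] at this
      rw [Real.rpow_def_of_pos ha, Real.rpow_def_of_pos hb, mul_comm (Real.log a),
        mul_comm (Real.log b)]
      exact this
    have h2 : a ^ w1 * b ^ w2 ≤ w1 * a + w2 * b :=
      Real.geom_mean_le_arith_mean2_weighted hw1n hw2n ha.le hb.le hws
    calc F (x + g) ≤ w1 * a + w2 * b := h1.trans h2
      _ = ((1 - g) * a + (1 + g) * b) / 2 := by rw [hw1, hw2]; ring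
  refine ⟨⟨?_, ?_⟩, ?_, ?_⟩
  · rw [lt_div_iff₀ hab]; linarith
  · rw [div_lt_one hab]; linarith
  · intro β hβ
    obtain ⟨hβ1, hβ2⟩ := hβ
    -- LHS ≤ (b+a)/2
    have hL : (⨆ g : Set.Icc (-1 : ℝ) 1,
        F (x + g) / (1 + ((b - a) / (b + a)) * g)) ≤ (b + a) / 2 := by
      apply ciSup_le
      intro ⟨g, hg1, hg2⟩
      simp only
      have hD : (0:ℝ) < (1 - g) * a + (1 + g) * b := by
        rcases le_total a b with h | h <;> nlinarith
      have hden : 1 + (b - a) / (b + a) * g = ((1 - g) * a + (1 + g) * b) / (b + a) := by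
        field_simp; ring
      rw [hden, div_div_eq_mul_div, div_le_div_iff₀ hD (by norm_num : (0:ℝ) < 2)]
      nlinarith [mul_le_mul_of_nonneg_right (key g ⟨hg1, hg2⟩) hab.le]
    -- RHS ≥ (b+a)/2
    have hbdd : BddAbove (Set.range fun g : Set.Icc (-1 : ℝ) 1 => F (x + g) / (1 + β * g)) := by
      refine ⟨max a b / (1 - |β|), ?_⟩
      rintro y ⟨⟨g, hg1, hg2⟩, rfl⟩
      simp only
      have hβabs : |β| < 1 := abs_lt.mpr ⟨hβ1, hβ2⟩
      have h1 : (0:ℝ) < 1 - |β| := by linarith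
      have h2 : 1 - |β| ≤ 1 + β * g := by
        have : |β * g| ≤ |β| := by
          rw [abs_mul]
          calc |β| * |g| ≤ |β| * 1 := by
                apply mul_le_mul_of_nonneg_left _ (abs_nonneg β)
                rw [abs_le]; exact ⟨hg1, hg2⟩
            _ = |β| := mul_one _
        have := neg_abs_le (β * g)
        have := abs_le.mp ‹|β * g| ≤ |β|›
        linarith [this.1]
      have hF : F (x + g) ≤ max a b := by
        have := key g ⟨hg1, hg2⟩
        have : ((1 - g) * a + (1 + g) * b) / 2 ≤ max a b := by
          have h3 : a ≤ max a b := le_max_left _ _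
          have h4 : b ≤ max a b := le_max_right _ _
          nlinarith
        linarith [key g ⟨hg1, hg2⟩]
      exact div_le_div₀ (ha.le.trans (le_max_left a b)) hF h1 h2
    have e1 : b / (1 + β) ≤ ⨆ g : Set.Icc (-1 : ℝ) 1, F (x + g) / (1 + β * g) := by
      have := le_ciSup hbdd ⟨1, by norm_num⟩
      simpa using this
    have e2 : a / (1 - β) ≤ ⨆ g : Set.Icc (-1 : ℝ) 1, F (x + g) / (1 + β * g) := by
      have := le_ciSup hbdd ⟨-1, by norm_num⟩
      simpa [show x + (-1 : ℝ) = x - 1 from by ring,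
        show (1 : ℝ) + β * (-1) = 1 - β from by ring,
        show (1 : ℝ) + -β = 1 - β from by ring] using this
    have hmax : (b + a) / 2 ≤ max (b / (1 + β)) (a / (1 - β)) := by
      by_contra hcon
      push_neg at hcon
      obtain ⟨l1, l2⟩ := max_lt_iff.mp hcon
      have hb1 : (0:ℝ) < 1 + β := by linarith
      have hb2 : (0:ℝ) < 1 - β := by linarith
      rw [div_lt_iff₀ hb1] at l1
      rw [div_lt_iff₀ hb2] at l2
      nlinarith
    exact hL.trans (hmax.trans (max_le e1 e2))
  · have h1 : 1 + (b - a) / (b + a) = 2 * b / (b + a) := by field_simp; ring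
    have h2 : 1 - (b - a) / (b + a) = 2 * a / (b + a) := by field_simp; ring
    have h3 := ha.ne'
    have h4 := hb.ne'
    have h5 := hab.ne'
    rw [h1, h2]
    field_simp
end

section
/- Let ε > 0. For integers t ≥ 1 define H_t(x) = ε · exp(x²/(2t) − (1/2) Σ_{i=1}^t 1/i) for x ∈ ℝ, and set H_0(x) = ε. Then for every integer t ≥ 1, every x ∈ [−(t−1), t−1], and every g ∈ [−1, 1], it holds that (1 + g β_t) · H_{t−1}(x) ≥ H_t(x + g), where β_t = (H_t(x+1) − H_t(x−1)) / (H_t(x+1) + H_t(x−1)). -/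
lemma exp_le_cosh_add_sinh (g z : ℝ) (h1 : -1 ≤ g) (h2 : g ≤ 1) :
    Real.exp (g * z) ≤ Real.cosh z + g * Real.sinh z := by
  have key := convexOn_exp.2 (Set.mem_univ (-z)) (Set.mem_univ z)
    (by linarith : (0:ℝ) ≤ (1 - g)/2) (by linarith : (0:ℝ) ≤ (1 + g)/2) (by ring)
  simp only [smul_eq_mul] at key
  rw [Real.cosh_eq, Real.sinh_eq]
  calc Real.exp (g * z) = Real.exp ((1-g)/2 * (-z) + (1+g)/2 * z) := by ring_nf
    _ ≤ (1-g)/2 * Real.exp (-z) + (1+g)/2 * Real.exp z := key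
    _ = (Real.exp z + Real.exp (-z))/2 + g * ((Real.exp z - Real.exp (-z))/2) := by ring

set_option maxHeartbeats 1000000 in
/-- Theorem 5: the exponential potentials
`H_t(x) = ε exp(x²/(2t) - (1/2)∑_{i=1}^t 1/i)` (with `H_0 ≡ ε`) satisfy the key
coin-betting inequality `(1 + g β_t) H_{t-1}(x) ≥ H_t(x+g)` for all `t ≥ 1`,
`x ∈ [-(t-1), t-1]` and `g ∈ [-1,1]`, where
`β_t = (H_t(x+1) - H_t(x-1))/(H_t(x+1) + H_t(x-1))`. -/
theorem stmt_2 (ε : ℝ) (hε : 0 < ε) (H : ℕ → ℝ → ℝ)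
    (hH0 : ∀ x : ℝ, H 0 x = ε)
    (hHt : ∀ t : ℕ, 1 ≤ t → ∀ x : ℝ,
      H t x = ε * Real.exp (x ^ 2 / (2 * t) - (1 / 2) * ∑ i ∈ Finset.Icc 1 t, (1 : ℝ) / i))
    (t : ℕ) (ht : 1 ≤ t)
    (x : ℝ) (hx : x ∈ Set.Icc (-((t : ℝ) - 1)) ((t : ℝ) - 1))
    (g : ℝ) (hg : g ∈ Set.Icc (-1 : ℝ) 1) :
    (1 + g * ((H t (x + 1) - H t (x - 1)) / (H t (x + 1) + H t (x - 1)))) * H (t - 1) x ≥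
      H t (x + g) := by
  obtain ⟨hg1, hg2⟩ := hg
  obtain ⟨hx1, hx2⟩ := hx
  set S : ℝ := (1 / 2) * ∑ i ∈ Finset.Icc 1 t, (1 : ℝ) / i with hS
  set T : ℝ := (t : ℝ) with hT
  have hT1 : (1:ℝ) ≤ T := by rw [hT]; exact_mod_cast ht
  have hT0 : (0:ℝ) < T := by linarith
  -- β = tanh(x/T)
  have hβ : (H t (x + 1) - H t (x - 1)) / (H t (x + 1) + H t (x - 1))
      = Real.tanh (x / T) := by
    rw [hHt t ht (x + 1), hHt t ht (x - 1)]
    have e1 : (x + 1) ^ 2 / (2 * T) - S = ((x^2 + 1)/(2*T) - S) + x / T := by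
      field_simp; ring
    have e2 : (x - 1) ^ 2 / (2 * T) - S = ((x^2 + 1)/(2*T) - S) + (-(x / T)) := by
      field_simp; ring
    rw [e1, e2, Real.exp_add, Real.exp_add, Real.tanh_eq_sinh_div_cosh,
      Real.sinh_eq, Real.cosh_eq]
    have hu : (0:ℝ) < ε * Real.exp ((x^2 + 1)/(2*T) - S) := by positivity
    have hc : (0:ℝ) < Real.exp (x/T) + Real.exp (-(x/T)) := by positivity
    field_simp
  rw [hβ]
  -- key pointwise bound: 1 + g tanh z ≥ exp (g z - z²/2)
  have hkey : Real.exp (g * (x/T) - (x/T)^2/2) ≤ 1 + g * Real.tanh (x / T) := by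
    have hcosh : (0:ℝ) < Real.cosh (x/T) := Real.cosh_pos _
    have h1 : Real.exp (g * (x/T)) ≤ Real.cosh (x/T) * (1 + g * Real.tanh (x/T)) := by
      rw [Real.tanh_eq_sinh_div_cosh]
      calc Real.exp (g * (x/T)) ≤ Real.cosh (x/T) + g * Real.sinh (x/T) :=
            exp_le_cosh_add_sinh g (x/T) hg1 hg2
        _ = Real.cosh (x/T) * (1 + g * (Real.sinh (x/T) / Real.cosh (x/T))) := by
            field_simp
    have h2 : Real.exp (g * (x/T) - (x/T)^2/2) * Real.cosh (x/T) ≤ Real.exp (g * (x/T)) := by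
      calc Real.exp (g * (x/T) - (x/T)^2/2) * Real.cosh (x/T)
          ≤ Real.exp (g * (x/T) - (x/T)^2/2) * Real.exp ((x/T)^2/2) :=
            mul_le_mul_of_nonneg_left (Real.cosh_le_exp_half_sq (x/T)) (Real.exp_nonneg _)
        _ = Real.exp (g * (x/T)) := by rw [← Real.exp_add]; ring_nf
    nlinarith [Real.exp_pos (g * (x/T) - (x/T)^2/2)]
  rcases eq_or_lt_of_le ht with h1 | h2
  · -- t = 1 : x = 0
    have ht1 : t = 1 := h1.symm
    subst ht1
    have hTe : T = 1 := by rw [hT]; norm_num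
    have hx0 : x = 0 := le_antisymm (by rw [hTe] at hx2; linarith)
      (by rw [hTe] at hx1; linarith)
    subst hx0
    rw [hHt 1 le_rfl, hH0]
    have hsum1 : ∑ i ∈ Finset.Icc (1:ℕ) 1, (1:ℝ)/(i:ℝ) = 1 := by simp
    rw [hsum1]
    have h3 : Real.exp ((0 + g)^2 / (2*((1:ℕ):ℝ)) - 1/2 * 1) ≤ 1 := by
      apply Real.exp_le_one_iff.mpr
      push_cast
      nlinarith
    have h4 : Real.tanh (0 / T) = 0 := by norm_num
    rw [h4]
    nlinarith
  · -- t ≥ 2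
    have ht2 : 2 ≤ t := h2
    have hT2 : (2:ℝ) ≤ T := by rw [hT]; exact_mod_cast ht2
    have ht1' : 1 ≤ t - 1 := by omega
    have hcast : ((t - 1 : ℕ) : ℝ) = T - 1 := by
      rw [hT]; push_cast [Nat.cast_sub ht]; ring
    have htne : (t:ℝ) ≠ 0 := by positivity
    -- sum splitting
    have hsum : S = (1 / 2) * ∑ i ∈ Finset.Icc 1 (t-1), (1 : ℝ) / i + 1/(2*T) := by
      rw [hS]
      have he : t = (t - 1) + 1 := by omega
      rw [he, Finset.sum_Icc_succ_top (by omega : 1 ≤ t - 1 + 1), ← he, hT]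
      field_simp
    rw [hHt t ht (x + g), hHt (t-1) ht1' x, hcast]
    set S' : ℝ := (1 / 2) * ∑ i ∈ Finset.Icc 1 (t-1), (1 : ℝ) / i with hS'
    have hTm1 : (0:ℝ) < T - 1 := by linarith
    have hexp : Real.exp ((x+g)^2/(2*T) - S)
        ≤ Real.exp (g * (x/T) - (x/T)^2/2) * Real.exp (x^2/(2*(T-1)) - S') := by
      rw [← Real.exp_add]
      apply Real.exp_le_exp.mpr
      rw [hsum]
      have e : g * (x/T) - (x/T)^2/2 + (x^2/(2*(T-1)) - S')
          - ((x+g)^2/(2*T) - (S' + 1/(2*T)))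
          = (1 - g^2)/(2*T) + x^2 / (2*(T-1)*T^2) := by
        field_simp
        ring
      have h5 : (0:ℝ) ≤ (1 - g^2)/(2*T) := by
        apply div_nonneg; nlinarith; linarith
      have h6 : (0:ℝ) ≤ x^2 / (2*(T-1)*T^2) := by positivity
      linarith [e.ge, e.le]
    calc ε * Real.exp ((x+g)^2/(2*T) - S)
        ≤ ε * (Real.exp (g * (x/T) - (x/T)^2/2) * Real.exp (x^2/(2*(T-1)) - S')) :=
          mul_le_mul_of_nonneg_left hexp hε.le
      _ ≤ (1 + g * Real.tanh (x/T)) * (ε * Real.exp (x^2/(2*(T-1)) - S')) := by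
          have hp : (0:ℝ) < ε * Real.exp (x^2/(2*(T-1)) - S') := by positivity
          nlinarith [hkey]
end

section
/- Let H be a real Hilbert space and a > 0. Let h : (−a, a) → ℝ be an even, twice-differentiable function satisfying x · h''(x) ≥ h'(x) for all x ∈ [0, a). Let c : [0,∞) × [0,∞) → ℝ be an arbitrary function. Then for all u, v ∈ H with ‖u‖ + ‖v‖ < a, one has c(‖u‖, ‖v‖) · ⟨u, v⟩ − h(‖u + v‖) ≥ min{ c(‖u‖, ‖v‖) · ‖u‖ · ‖v‖ − h(‖u‖ + ‖v‖), −c(‖u‖, ‖v‖) · ‖u‖ · ‖v‖ − h(‖u‖ − ‖v‖) }. -/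
open scoped RealInnerProductSpace

set_option maxHeartbeats 1000000 in
/-- Lemma 3 (Extremes): for an even twice-differentiable `h : (-a,a) → ℝ`
with `x·h''(x) ≥ h'(x)` on `[0,a)`, an arbitrary function `c`, and vectors
`u, v` in a real Hilbert space with `‖u‖ + ‖v‖ < a`, the quantity
`c(‖u‖,‖v‖)⟨u,v⟩ - h(‖u+v‖)` is lower bounded by the minimum over the two
extreme alignments of `u` and `v`. -/
theorem stmt_3 {H : Type*} [NormedAddCommGroup H] [InnerProductSpace ℝ H]
    (a : ℝ) (ha : 0 < a) (h : ℝ → ℝ)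
    (heven : ∀ x ∈ Set.Ioo (-a) a, h (-x) = h x)
    (hdiff : ∀ x ∈ Set.Ioo (-a) a, DifferentiableAt ℝ h x)
    (hdiff2 : ∀ x ∈ Set.Ioo (-a) a, DifferentiableAt ℝ (deriv h) x)
    (hineq : ∀ x ∈ Set.Ico (0 : ℝ) a, x * deriv (deriv h) x ≥ deriv h x)
    (c : ℝ → ℝ → ℝ) (u v : H) (huv : ‖u‖ + ‖v‖ < a) :
    c ‖u‖ ‖v‖ * ⟪u, v⟫ - h ‖u + v‖ ≥
      min (c ‖u‖ ‖v‖ * ‖u‖ * ‖v‖ - h (‖u‖ + ‖v‖))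
        (-(c ‖u‖ ‖v‖ * ‖u‖ * ‖v‖) - h (‖u‖ - ‖v‖)) := by
  set r : ℝ := ‖u‖ with hrdef
  set s : ℝ := ‖v‖ with hsdef
  have hr0 : (0:ℝ) ≤ r := norm_nonneg u
  have hs0 : (0:ℝ) ≤ s := norm_nonneg v
  set t : ℝ := ⟪u, v⟫ with htdef
  have habs : |t| ≤ r * s := abs_real_inner_le_norm u v
  set C : ℝ := c r s with hCdef
  set P : ℝ := r * s with hPdef
  have hP0 : 0 ≤ P := mul_nonneg hr0 hs0
  set q : ℝ := r ^ 2 + s ^ 2 with hqdef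
  have hnormuv : ‖u + v‖ = Real.sqrt (q + 2 * t) := by
    have h1 : ‖u + v‖ ^ 2 = q + 2 * t := by
      rw [hqdef, htdef, hrdef, hsdef, norm_add_sq_real]; ring
    rw [← h1, Real.sqrt_sq (norm_nonneg _)]
  rw [hnormuv]
  rcases eq_or_lt_of_le hP0 with hP | hP
  · -- degenerate case r*s = 0
    have ht0 : t = 0 := by
      have h2 : |t| = 0 := le_antisymm (by rw [← hP] at habs; exact habs) (abs_nonneg t)
      exact abs_eq_zero.mp h2
    have hq' : q + 2 * t = (r + s) ^ 2 := by
      have hrs : r = 0 ∨ s = 0 := mul_eq_zero.mp hP.symm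
      rw [ht0, hqdef]
      rcases hrs with h' | h' <;> rw [h'] <;> ring
    rw [hq', Real.sqrt_sq (by positivity), ht0]
    have hCP : C * r * s = C * P := by rw [hPdef]; ring
    have h3 : C * 0 - h (r + s) = C * r * s - h (r + s) := by
      rw [hCP, ← hP]
    rw [h3]
    exact min_le_left _ _
  · -- main case : r*s > 0
    have hr : 0 < r := by nlinarith [hP, hs0, hr0]
    have hs : 0 < s := by nlinarith [hP, hs0, hr0]
    have hqP : (r - s) ^ 2 = q - 2 * P := by rw [hqdef, hPdef]; ring
    have hqP' : (r + s) ^ 2 = q + 2 * P := by rw [hqdef, hPdef]; ring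
    -- φ = h'/x is monotone on (0, a)
    have hsub : Set.Ioo (0:ℝ) a ⊆ Set.Ioo (-a) a := fun x hx =>
      ⟨lt_trans (neg_neg_iff_pos.mpr ha) hx.1, hx.2⟩
    have hphi : MonotoneOn (fun x => deriv h x / x) (Set.Ioo 0 a) := by
      have hint : interior (Set.Ioo (0:ℝ) a) = Set.Ioo 0 a := isOpen_Ioo.interior_eq
      have hder : ∀ x ∈ Set.Ioo (0:ℝ) a, HasDerivAt (fun x => deriv h x / x)
          ((deriv (deriv h) x * x - deriv h x * 1) / x ^ 2) x := by
        intro x hx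
        exact ((hdiff2 x (hsub hx)).hasDerivAt).div (hasDerivAt_id x) (ne_of_gt hx.1)
      apply monotoneOn_of_deriv_nonneg (convex_Ioo _ _)
      · exact fun x hx => ((hder x hx).continuousAt).continuousWithinAt
      · rw [hint]; exact fun x hx => ((hder x hx).differentiableAt).differentiableWithinAt
      · rw [hint]
        intro x hx
        rw [(hder x hx).deriv]
        have := hineq x ⟨le_of_lt hx.1, hx.2⟩
        apply div_nonneg
        · nlinarith
        · positivity
    -- g(t) = h(√(q+2t)) is convex on Icc (-P) P
    set g : ℝ → ℝ := fun t => h (Real.sqrt (q + 2 * t)) with hgdef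
    have hxpos : ∀ t ∈ Set.Ioo (-P) P, 0 < q + 2 * t := by
      intro t ht
      nlinarith [sq_nonneg (r - s), ht.1]
    have hxmemIcc : ∀ t ∈ Set.Icc (-P) P, Real.sqrt (q + 2 * t) ∈ Set.Icc 0 (r + s) := by
      intro t ht
      constructor
      · exact Real.sqrt_nonneg _
      · rw [← Real.sqrt_sq (by positivity : (0:ℝ) ≤ r + s)]
        apply Real.sqrt_le_sqrt
        rw [hqP']; linarith [ht.2]
    have hxmem : ∀ t ∈ Set.Ioo (-P) P, Real.sqrt (q + 2 * t) ∈ Set.Ioo 0 a := by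
      intro t ht
      refine ⟨Real.sqrt_pos.mpr (hxpos t ht), ?_⟩
      have := (hxmemIcc t (Set.mem_Icc_of_Ioo ht)).2
      linarith
    have hgder : ∀ t ∈ Set.Ioo (-P) P,
        HasDerivAt g (deriv h (Real.sqrt (q + 2 * t)) * (1 / (2 * Real.sqrt (q + 2 * t)) * 2)) t := by
      intro t ht
      have h1 : HasDerivAt (fun t : ℝ => q + 2 * t) 2 t := by
        simpa using ((hasDerivAt_id t).const_mul 2).const_add q
      have h2 : HasDerivAt (fun t : ℝ => Real.sqrt (q + 2 * t))
          (1 / (2 * Real.sqrt (q + 2 * t)) * 2) t :=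
        (Real.hasDerivAt_sqrt (ne_of_gt (hxpos t ht))).comp t h1
      exact ((hdiff _ (hsub (hxmem t ht))).hasDerivAt).comp t h2
    have hgderiv : ∀ t ∈ Set.Ioo (-P) P,
        deriv g t = deriv h (Real.sqrt (q + 2 * t)) / Real.sqrt (q + 2 * t) := by
      intro t ht
      rw [(hgder t ht).deriv]
      have hx0 : Real.sqrt (q + 2 * t) ≠ 0 := ne_of_gt (Real.sqrt_pos.mpr (hxpos t ht))
      field_simp
    have hgconv : ConvexOn ℝ (Set.Icc (-P) P) g := by
      have hint : interior (Set.Icc (-P) P) = Set.Ioo (-P) P := interior_Icc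
      apply MonotoneOn.convexOn_of_deriv (convex_Icc _ _)
      · -- continuity on Icc
        apply ContinuousOn.comp (t := Set.Ioo (-a) a)
        · exact fun x hx => ((hdiff x hx).continuousAt).continuousWithinAt
        · exact (Real.continuous_sqrt.comp (by continuity)).continuousOn
        · intro t ht
          have := hxmemIcc t ht
          exact ⟨lt_of_lt_of_le (neg_neg_iff_pos.mpr ha) this.1, lt_of_le_of_lt this.2 huv⟩
      · rw [hint]
        exact fun t ht => ((hgder t ht).differentiableAt).differentiableWithinAt
      · rw [hint]
        intro t1 ht1 t2 ht2 hle
        rw [hgderiv t1 ht1, hgderiv t2 ht2]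
        apply hphi (hxmem t1 ht1) (hxmem t2 ht2)
        apply Real.sqrt_le_sqrt; linarith
    -- endpoint values
    have hgP : g P = h (r + s) := by
      rw [hgdef]; simp only
      rw [← hqP', Real.sqrt_sq (by positivity)]
    have hgnegP : g (-P) = h (r - s) := by
      rw [hgdef]; simp only
      have : q + 2 * (-P) = (r - s) ^ 2 := by rw [hqP]; ring
      rw [this, Real.sqrt_sq_eq_abs]
      rcases abs_cases (r - s) with ⟨h1, _⟩ | ⟨h1, _⟩
      · rw [h1]
      · rw [h1, heven (r - s) ⟨by linarith, by linarith⟩]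
    -- convex combination
    set lam : ℝ := (P - t) / (2 * P) with hlam
    set mu : ℝ := (P + t) / (2 * P) with hmu
    have habs1 : -P ≤ t := neg_le_of_abs_le habs
    have habs2 : t ≤ P := le_of_abs_le habs
    have hlam0 : 0 ≤ lam := by apply div_nonneg <;> linarith
    have hmu0 : 0 ≤ mu := by apply div_nonneg <;> linarith
    have hsum1 : lam + mu = 1 := by
      rw [hlam, hmu, ← add_div]
      rw [div_eq_one_iff_eq (by positivity)]; ring
    have hcomb : lam • (-P) + mu • P = t := by
      simp only [smul_eq_mul, hlam, hmu]; field_simp; ring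
    have hkey : g t ≤ lam * g (-P) + mu * g P := by
      have hk := hgconv.2 (Set.mem_Icc.mpr ⟨le_refl _, by linarith⟩)
        (Set.mem_Icc.mpr ⟨by linarith, le_refl _⟩) hlam0 hmu0 hsum1
      rw [hcomb] at hk
      simpa [smul_eq_mul] using hk
    rw [hgP, hgnegP] at hkey
    have hmin1 : min (C * r * s - h (r + s)) (-(C * r * s) - h (r - s)) ≤ C * r * s - h (r + s) :=
      min_le_left _ _
    have hmin2 : min (C * r * s - h (r + s)) (-(C * r * s) - h (r - s)) ≤ -(C * r * s) - h (r - s) :=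
      min_le_right _ _
    have hgt : g t = h (Real.sqrt (r ^ 2 + s ^ 2 + 2 * t)) := rfl
    rw [← hgt]
    have hcomb' : lam * (-P) + mu * P = t := by simpa [smul_eq_mul] using hcomb
    have hCt : C * t = lam * (C * (-P)) + mu * (C * P) := by rw [← hcomb']; ring
    set M : ℝ := min (C * r * s - h (r + s)) (-(C * r * s) - h (r - s)) with hMdef
    have e1 : lam * (-(C * r * s) - h (r - s)) = lam * (C * (-P)) - lam * h (r - s) := by
      rw [hPdef]; ring
    have e2 : mu * (C * r * s - h (r + s)) = mu * (C * P) - mu * h (r + s) := by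
      rw [hPdef]; ring
    have e3 : lam * M + mu * M = M := by rw [← add_mul, hsum1, one_mul]
    have f1 := mul_le_mul_of_nonneg_left hmin2 hlam0
    have f2 := mul_le_mul_of_nonneg_left hmin1 hmu0
    linarith
end

section
/- Let H be a real Hilbert space and t ≥ 1 an integer. Let a > t and b > t−1, and let G : (−b, b) → (0, ∞) and F : (−a, a) → (0, ∞) be even functions such that F is twice differentiable with y · F''(y) ≥ F'(y) for all y ∈ [0, a), and such that for every y ∈ [−(t−1), t−1] and every g ∈ [−1, 1], (1 + g β(y)) · G(y) ≥ F(y + g), where β(y) = (F(y+1) − F(y−1)) / (F(y+1) + F(y−1)). Let g_1, …, g_t ∈ H with ‖g_i‖ ≤ 1 for all i, and set x = Σ_{i=1}^{t−1} g_i. Then (1 + β(‖x‖) · ⟨g_t, x⟩/‖x‖) · G(‖x‖) ≥ F(‖x + g_t‖), where the term ⟨g_t, x⟩/‖x‖ is interpreted as 0 when x = 0. -/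
open scoped RealInnerProductSpace


lemma aux_sqrt_convex (F : ℝ → ℝ) (a A : ℝ) (haA : Real.sqrt A < a)
    (hFdiff : ∀ y ∈ Set.Ioo (-a) a, DifferentiableAt ℝ F y)
    (hψ : MonotoneOn (fun y => deriv F y / y) (Set.Ioo 0 a)) :
    ConvexOn ℝ (Set.Icc 0 A) (fun z => F (Real.sqrt z)) := by
  have ha : 0 < a := lt_of_le_of_lt (Real.sqrt_nonneg A) haA
  have hsqrtmem : ∀ z : ℝ, 0 ≤ z → z ≤ A → Real.sqrt z ∈ Set.Ioo (-a) a := by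
    intro z hz1 hz2
    refine ⟨by linarith [Real.sqrt_nonneg z], ?_⟩
    calc Real.sqrt z ≤ Real.sqrt A := Real.sqrt_le_sqrt hz2
      _ < a := haA
  have hφderiv : ∀ z ∈ Set.Ioo (0:ℝ) A,
      HasDerivAt (fun z => F (Real.sqrt z)) ((deriv F (Real.sqrt z) / Real.sqrt z) / 2) z := by
    intro z hz
    have hs : HasDerivAt (fun z => F (Real.sqrt z))
        (deriv F (Real.sqrt z) * (1 / (2 * Real.sqrt z))) z :=
      ((hFdiff _ (hsqrtmem z (le_of_lt hz.1) (le_of_lt hz.2))).hasDerivAt).comp z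
        (Real.hasDerivAt_sqrt (ne_of_gt hz.1))
    have heq : (deriv F (Real.sqrt z) / Real.sqrt z) / 2
        = deriv F (Real.sqrt z) * (1 / (2 * Real.sqrt z)) := by
      rw [mul_one_div, div_div, mul_comm]
    rw [heq]
    exact hs
  apply MonotoneOn.convexOn_of_deriv (convex_Icc _ _)
  · intro z hz
    exact ((hFdiff _ (hsqrtmem z hz.1 hz.2)).continuousAt.comp
      Real.continuous_sqrt.continuousAt).continuousWithinAt
  · rw [interior_Icc]
    intro z hz
    exact (hφderiv z hz).differentiableAt.differentiableWithinAt
  · rw [interior_Icc]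
    intro z1 hz1 z2 hz2 h12
    rw [(hφderiv z1 hz1).deriv, (hφderiv z2 hz2).deriv]
    have m1 : Real.sqrt z1 ∈ Set.Ioo (0:ℝ) a :=
      ⟨Real.sqrt_pos.mpr hz1.1, (hsqrtmem z1 (le_of_lt hz1.1) (le_of_lt hz1.2)).2⟩
    have m2 : Real.sqrt z2 ∈ Set.Ioo (0:ℝ) a :=
      ⟨Real.sqrt_pos.mpr hz2.1, (hsqrtmem z2 (le_of_lt hz2.1) (le_of_lt hz2.2)).2⟩
    have := hψ m1 m2 (Real.sqrt_le_sqrt h12)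
    linarith

lemma aux_psi_mono (F : ℝ → ℝ) (a : ℝ) (ha : 0 < a)
    (hFdiff2 : ∀ y ∈ Set.Ioo (-a) a, DifferentiableAt ℝ (deriv F) y)
    (hFineq : ∀ y ∈ Set.Ico (0 : ℝ) a, y * deriv (deriv F) y ≥ deriv F y) :
    MonotoneOn (fun y => deriv F y / y) (Set.Ioo 0 a) := by
  have hmemIoo : ∀ y : ℝ, y ∈ Set.Ioo (0:ℝ) a → y ∈ Set.Ioo (-a) a := by
    intro y hy; exact ⟨by linarith [hy.1], hy.2⟩
  have hψdiff : ∀ y ∈ Set.Ioo (0:ℝ) a,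
      HasDerivAt (fun y => deriv F y / y) ((deriv (deriv F) y * y - deriv F y * 1) / y^2) y := by
    intro y hy
    exact (hFdiff2 y (hmemIoo y hy)).hasDerivAt.div (hasDerivAt_id y) (ne_of_gt hy.1)
  apply monotoneOn_of_deriv_nonneg (convex_Ioo 0 a)
  · intro y hy
    exact ((hψdiff y hy).differentiableAt.continuousAt).continuousWithinAt
  · rw [interior_Ioo]
    intro y hy
    exact (hψdiff y hy).differentiableAt.differentiableWithinAt
  · rw [interior_Ioo]
    intro y hy
    rw [(hψdiff y hy).deriv]
    have h1 := hFineq y ⟨le_of_lt hy.1, hy.2⟩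
    apply div_nonneg _ (sq_nonneg y)
    nlinarith [h1]

set_option maxHeartbeats 1000000 in
/-- Lemma 4: let `G` (playing the role of `F_{t-1}`) and `F` (playing the role
of `F_t`) be even positive potentials, `F` twice differentiable with
`y·F''(y) ≥ F'(y)` on `[0,a)`, satisfying the one-dimensional coin-betting
inequality with betting fraction `β(y) = (F(y+1)-F(y-1))/(F(y+1)+F(y-1))`.
Then for reward vectors `g_1, …, g_t` of norm at most `1` and
`x = ∑_{i=1}^{t-1} g_i`, one has
`(1 + β(‖x‖)·⟨g_t, x⟩/‖x‖)·G(‖x‖) ≥ F(‖x + g_t‖)` (with `⟨g_t,x⟩/‖x‖ = 0`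
when `x = 0`). -/
theorem stmt_4 {H : Type*} [NormedAddCommGroup H] [InnerProductSpace ℝ H]
    (t : ℕ) (ht : 1 ≤ t) (a b : ℝ) (hat : (t : ℝ) < a) (hbt : (t : ℝ) - 1 < b)
    (G F : ℝ → ℝ)
    (hGpos : ∀ y ∈ Set.Ioo (-b) b, 0 < G y)
    (hFpos : ∀ y ∈ Set.Ioo (-a) a, 0 < F y)
    (hGeven : ∀ y ∈ Set.Ioo (-b) b, G (-y) = G y)
    (hFeven : ∀ y ∈ Set.Ioo (-a) a, F (-y) = F y)
    (hFdiff : ∀ y ∈ Set.Ioo (-a) a, DifferentiableAt ℝ F y)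
    (hFdiff2 : ∀ y ∈ Set.Ioo (-a) a, DifferentiableAt ℝ (deriv F) y)
    (hFineq : ∀ y ∈ Set.Ico (0 : ℝ) a, y * deriv (deriv F) y ≥ deriv F y)
    (hkey : ∀ y ∈ Set.Icc (-((t : ℝ) - 1)) ((t : ℝ) - 1), ∀ g ∈ Set.Icc (-1 : ℝ) 1,
      (1 + g * ((F (y + 1) - F (y - 1)) / (F (y + 1) + F (y - 1)))) * G y ≥ F (y + g))
    (g : ℕ → H) (hg : ∀ i ∈ Finset.Icc 1 t, ‖g i‖ ≤ 1)
    (x : H) (hx : x = ∑ i ∈ Finset.Icc 1 (t - 1), g i) :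
    (1 + ((F (‖x‖ + 1) - F (‖x‖ - 1)) / (F (‖x‖ + 1) + F (‖x‖ - 1))) *
        (⟪g t, x⟫ / ‖x‖)) * G ‖x‖ ≥ F ‖x + g t‖ := by
  have ht1 : (1:ℝ) ≤ (t:ℝ) := by exact_mod_cast ht
  have ha1 : (1:ℝ) < a := lt_of_le_of_lt ht1 hat
  set r : ℝ := ‖x‖ with hrdef
  set c : ℝ := ⟪g t, x⟫ / r with hcdef
  set β : ℝ := (F (r + 1) - F (r - 1)) / (F (r + 1) + F (r - 1)) with hβdef
  have hr0 : 0 ≤ r := norm_nonneg x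
  -- r ≤ t - 1
  have hrt : r ≤ (t:ℝ) - 1 := by
    have h1 : r ≤ ∑ i ∈ Finset.Icc 1 (t-1), ‖g i‖ := by
      rw [hrdef, hx]; exact norm_sum_le _ _
    have h2 : ∑ i ∈ Finset.Icc 1 (t-1), ‖g i‖ ≤ ∑ _i ∈ Finset.Icc 1 (t-1), (1:ℝ) := by
      refine Finset.sum_le_sum fun i hi => ?_
      rw [Finset.mem_Icc] at hi
      exact hg i (Finset.mem_Icc.mpr ⟨hi.1, le_trans hi.2 (Nat.sub_le t 1)⟩)
    have h3 : ∑ _i ∈ Finset.Icc 1 (t-1), (1:ℝ) = ((t:ℝ) - 1) := by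
      rw [Finset.sum_const, Nat.card_Icc]
      have h4 : t - 1 + 1 - 1 = t - 1 := by omega
      rw [h4, nsmul_eq_mul, mul_one, Nat.cast_sub ht, Nat.cast_one]
    linarith
  have hgt : ‖g t‖ ≤ 1 := hg t (Finset.mem_Icc.mpr ⟨ht, le_refl t⟩)
  have hra : r + 1 < a := by linarith
  -- inner product facts
  have hrc : ⟪g t, x⟫ = r * c := by
    rcases eq_or_lt_of_le hr0 with h0 | h0
    · have hx0 : x = 0 := norm_eq_zero.mp h0.symm
      simp [hcdef, hx0]
    · rw [hcdef]; field_simp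
  have hcg : |c| ≤ ‖g t‖ := by
    rcases eq_or_lt_of_le hr0 with h0 | h0
    · have hx0 : x = 0 := norm_eq_zero.mp h0.symm
      simp [hcdef, hx0]
    · rw [hcdef, abs_div, abs_of_pos h0, div_le_iff₀ h0]
      exact abs_real_inner_le_norm _ _
  have hc1 : |c| ≤ 1 := hcg.trans hgt
  have hcl : -1 ≤ c := (abs_le.mp hc1).1
  have hcu : c ≤ 1 := (abs_le.mp hc1).2
  -- the squared norm of x + g t
  set u : ℝ := ‖x + g t‖ with hudef
  have hu0 : 0 ≤ u := norm_nonneg _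
  have huexp : u^2 = r^2 + 2*(r*c) + ‖g t‖^2 := by
    rw [hudef, norm_add_sq_real, ← hrc, real_inner_comm]
  have hu2 : u^2 ≤ r^2 + 2*r*c + 1 := by
    have : ‖g t‖^2 ≤ 1 := by nlinarith [norm_nonneg (g t)]
    nlinarith
  have hu2' : (r+c)^2 ≤ u^2 := by
    have h1 : c^2 ≤ ‖g t‖^2 := by
      have := sq_abs c
      nlinarith [abs_nonneg c, norm_nonneg (g t)]
    nlinarith
  -- convexity of φ = F ∘ sqrt on [0, (r+1)^2]
  have hψ : MonotoneOn (fun y => deriv F y / y) (Set.Ioo 0 a) :=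
    aux_psi_mono F a (by linarith) hFdiff2 hFineq
  have hφconv : ConvexOn ℝ (Set.Icc 0 ((r+1)^2)) (fun z => F (Real.sqrt z)) := by
    apply aux_sqrt_convex F a ((r+1)^2) _ hFdiff hψ
    rw [Real.sqrt_sq (by linarith : (0:ℝ) ≤ r+1)]
    exact hra
  -- evenness helper
  have heven' : ∀ s : ℝ, -a < s → s < a → F |s| = F s := by
    intro s h1 h2
    rcases abs_cases s with ⟨h, _⟩ | ⟨h, _⟩
    · rw [h]
    · rw [h]; exact hFeven s ⟨h1, h2⟩
  -- key inequality applications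
  have hrmem : r ∈ Set.Icc (-((t:ℝ)-1)) ((t:ℝ)-1) := ⟨by linarith, hrt⟩
  have h1 := hkey r hrmem 1 ⟨by norm_num, le_refl 1⟩
  have h2 := hkey r hrmem (-1) ⟨le_refl _, by norm_num⟩
  have h3 := hkey r hrmem c ⟨hcl, hcu⟩
  rw [show r + -1 = r - 1 by ring] at h2
  -- values of F ∘ sqrt at special points
  have hφrc : F (Real.sqrt ((r+c)^2)) = F (r+c) := by
    rw [Real.sqrt_sq_eq_abs]
    exact heven' (r+c) (by linarith) (by linarith)
  have hφr1 : F (Real.sqrt ((r+1)^2)) = F (r+1) := by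
    rw [Real.sqrt_sq (by linarith : (0:ℝ) ≤ r+1)]
  have hφrm1 : F (Real.sqrt ((r-1)^2)) = F (r-1) := by
    rw [Real.sqrt_sq_eq_abs]
    exact heven' (r-1) (by linarith) (by linarith)
  have hφu : F (Real.sqrt (u^2)) = F u := by rw [Real.sqrt_sq hu0]
  -- memberships in Icc 0 (r+1)^2
  have mem_rc : (r+c)^2 ∈ Set.Icc (0:ℝ) ((r+1)^2) := ⟨sq_nonneg _, by nlinarith⟩
  have mem_r1 : (r+1)^2 ∈ Set.Icc (0:ℝ) ((r+1)^2) := ⟨sq_nonneg _, le_refl _⟩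
  have mem_rm1 : (r-1)^2 ∈ Set.Icc (0:ℝ) ((r+1)^2) := ⟨sq_nonneg _, by nlinarith⟩
  have hz1le : r^2 + 2*r*c + 1 ≤ (r+1)^2 := by nlinarith
  have hz1ge : (r+c)^2 ≤ r^2 + 2*r*c + 1 := by nlinarith
  have mem_z1 : r^2 + 2*r*c + 1 ∈ Set.Icc (0:ℝ) ((r+1)^2) :=
    ⟨le_trans (sq_nonneg (r+c)) hz1ge, hz1le⟩
  -- chord bound at z1
  have hchord : F (Real.sqrt (r^2 + 2*r*c + 1))
      ≤ ((1+c)/2) * F (r+1) + ((1-c)/2) * F (r-1) := by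
    have hcomb := hφconv.2 mem_r1 mem_rm1
      (show (0:ℝ) ≤ (1+c)/2 by linarith) (show (0:ℝ) ≤ (1-c)/2 by linarith)
      (by ring)
    simp only [smul_eq_mul] at hcomb
    have heq : ((1+c)/2) * ((r+1)^2) + ((1-c)/2) * ((r-1)^2) = r^2 + 2*r*c + 1 := by ring
    rw [heq] at hcomb
    calc F (Real.sqrt (r^2 + 2*r*c + 1))
        ≤ (1+c)/2 * F (Real.sqrt ((r+1)^2)) + (1-c)/2 * F (Real.sqrt ((r-1)^2)) := hcomb
      _ = ((1+c)/2) * F (r+1) + ((1-c)/2) * F (r-1) := by rw [hφr1, hφrm1]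
  -- max bound for φ(u^2)
  have hmax : F (Real.sqrt (u^2))
      ≤ max (F (Real.sqrt ((r+c)^2))) (F (Real.sqrt (r^2 + 2*r*c + 1))) := by
    apply hφconv.le_on_segment mem_rc mem_z1
    rw [segment_eq_Icc hz1ge]
    exact ⟨hu2', hu2⟩
  -- combine
  have hB : ((1+c)/2) * F (r+1) + ((1-c)/2) * F (r-1) ≤ (1 + c * β) * G r := by
    have e1 : ((1+c)/2) * F (r+1) ≤ ((1+c)/2) * ((1 + 1 * β) * G r) :=
      mul_le_mul_of_nonneg_left h1 (by linarith)
    have e2 : ((1-c)/2) * F (r-1) ≤ ((1-c)/2) * ((1 + (-1) * β) * G r) :=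
      mul_le_mul_of_nonneg_left h2 (by linarith)
    have e3 : ((1+c)/2) * ((1 + 1 * β) * G r) + ((1-c)/2) * ((1 + (-1) * β) * G r)
        = (1 + c * β) * G r := by ring
    linarith
  have hfinal : F u ≤ (1 + c * β) * G r := by
    rw [← hφu]
    rcases le_max_iff.mp hmax with h | h
    · rw [hφrc] at h; linarith [h3]
    · linarith [hchord, hB]
  rw [ge_iff_le, show (1:ℝ) + β * c = 1 + c * β from by ring]
  exact hfinal
end

section
/- Let ε > 0 and let H be a real Hilbert space. For each integer t ≥ 0 let a_t > t and F_t : (−a_t, a_t) → (0, ∞) satisfy: (a) F_0(0) = ε; (b) F_t is even, logarithmically convex, strictly increasing on [0, a_t), and F_t(x) → +∞ as x → a_t; (c) for every t ≥ 1, x ∈ [−(t−1), t−1], and g ∈ [−1, 1], (1 + g β_t(x)) F_{t−1}(x) ≥ F_t(x + g), where β_t(x) = (F_t(x+1) − F_t(x−1))/(F_t(x+1) + F_t(x−1)); (d) F_t is twice differentiable with x F_t''(x) ≥ F_t'(x) for x ∈ [0, a_t). Let g_1, g_2, … ∈ H with ‖g_t‖ ≤ 1 for all t, and define predictions recursively by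 w_t = β_t(‖x_{t−1}‖) · (ε + Σ_{i=1}^{t−1} ⟨g_i, w_i⟩) · x_{t−1}/‖x_{t−1}‖, where x_{t−1} = Σ_{i=1}^{t−1} g_i, and w_t = 0 if x_{t−1} = 0. Then for every T ≥ 0 and every u ∈ H, Σ_{t=1}^T ⟨g_t, u − w_t⟩ ≤ ε + sup_{y ∈ (−a_T, a_T)} (y ‖u‖ − F_T(y)). -/
open scoped RealInnerProductSpace

lemma convG_aux (a : ℝ) (ha : 0 < a) (F : ℝ → ℝ)
    (hdiff : ∀ x ∈ Set.Ioo (-a) a, DifferentiableAt ℝ F x)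
    (hdiff2 : ∀ x ∈ Set.Ioo (-a) a, DifferentiableAt ℝ (deriv F) x)
    (hdd : ∀ x ∈ Set.Ico (0:ℝ) a, x * deriv (deriv F) x ≥ deriv F x)
    (hmono : StrictMonoOn F (Set.Ico 0 a))
    {q A B l : ℝ} (hl0 : 0 ≤ l) (hl1 : l ≤ 1)
    (hq : 0 ≤ q) (hA : A ∈ Set.Ico (0:ℝ) a) (hB : B ∈ Set.Ico (0:ℝ) a)
    (hq2 : q^2 ≤ l * A^2 + (1-l) * B^2) :
    F q ≤ l * F A + (1-l) * F B := by
  set G : ℝ → ℝ := fun x => F (Real.sqrt x) with hG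
  have hsub : Set.Ico (0:ℝ) a ⊆ Set.Ioo (-a) a := fun y hy =>
    ⟨lt_of_lt_of_le (neg_lt_zero.2 ha) hy.1, hy.2⟩
  have hmaps : ∀ x ∈ Set.Ico (0:ℝ) (a^2), Real.sqrt x ∈ Set.Ico (0:ℝ) a := by
    intro x hx
    refine ⟨Real.sqrt_nonneg x, ?_⟩
    have := Real.sqrt_lt_sqrt hx.1 hx.2
    rwa [Real.sqrt_sq ha.le] at this
  -- derivative of G on the interior
  have hGderiv : ∀ x ∈ Set.Ioo (0:ℝ) (a^2),
      HasDerivAt G (deriv F (Real.sqrt x) * (1 / (2 * Real.sqrt x))) x := by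
    intro x hx
    have hxs : Real.sqrt x ∈ Set.Ico (0:ℝ) a := hmaps x ⟨hx.1.le, hx.2⟩
    have h1 : HasDerivAt Real.sqrt (1 / (2 * Real.sqrt x)) x :=
      Real.hasDerivAt_sqrt (ne_of_gt hx.1)
    have h2 : HasDerivAt F (deriv F (Real.sqrt x)) (Real.sqrt x) :=
      (hdiff _ (hsub hxs)).hasDerivAt
    exact h2.comp x h1
  -- monotonicity of y ↦ deriv F y / (2 y) on (0, a)
  have hHmono : MonotoneOn (fun y => deriv F y / (2 * y)) (Set.Ioo (0:ℝ) a) := by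
    apply monotoneOn_of_deriv_nonneg (convex_Ioo _ _)
    · intro y hy
      have hy0 : (0:ℝ) < 2 * y := by linarith [hy.1]
      exact ((hdiff2 _ (hsub ⟨hy.1.le, hy.2⟩)).div
        ((differentiableAt_id.const_mul (2:ℝ))) hy0.ne').continuousAt.continuousWithinAt
    · rw [interior_Ioo]
      intro y hy
      have hy0 : (0:ℝ) < 2 * y := by linarith [hy.1]
      exact ((hdiff2 _ (hsub ⟨hy.1.le, hy.2⟩)).div
        ((differentiableAt_id.const_mul (2:ℝ))) hy0.ne').differentiableWithinAt
    · rw [interior_Ioo]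
      intro y hy
      have hy0 : (0:ℝ) < y := hy.1
      have hd2 : HasDerivAt (deriv F) (deriv (deriv F) y) y :=
        (hdiff2 _ (hsub ⟨hy0.le, hy.2⟩)).hasDerivAt
      have hdg : HasDerivAt (fun y : ℝ => 2 * y) 2 y := by
        simpa using (hasDerivAt_id y).const_mul (2:ℝ)
      have h2y0 : (2 * y) ≠ 0 := by positivity
      rw [show deriv (fun y => deriv F y / (2 * y)) y = _ from (hd2.div hdg h2y0).deriv]
      have hkey := hdd y ⟨hy0.le, hy.2⟩
      apply div_nonneg
      · nlinarith
      · positivity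
  -- G is convex on [0, a^2)
  have hGconv : ConvexOn ℝ (Set.Ico (0:ℝ) (a^2)) G := by
    apply MonotoneOn.convexOn_of_deriv (convex_Ico _ _)
    · intro x hx
      have hxs := hmaps x hx
      exact ((hdiff _ (hsub hxs)).continuousAt.comp
        Real.continuous_sqrt.continuousAt).continuousWithinAt
    · rw [interior_Ico]
      intro x hx
      exact (hGderiv x hx).differentiableAt.differentiableWithinAt
    · rw [interior_Ico]
      intro x hx y hy hxy
      rw [(hGderiv x hx).deriv, (hGderiv y hy).deriv]
      have hx' : Real.sqrt x ∈ Set.Ioo (0:ℝ) a :=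
        ⟨Real.sqrt_pos.2 hx.1, (hmaps x ⟨hx.1.le, hx.2⟩).2⟩
      have hy' : Real.sqrt y ∈ Set.Ioo (0:ℝ) a :=
        ⟨Real.sqrt_pos.2 hy.1, (hmaps y ⟨hy.1.le, hy.2⟩).2⟩
      have hsle : Real.sqrt x ≤ Real.sqrt y := Real.sqrt_le_sqrt hxy
      have := hHmono hx' hy' hsle
      simpa [div_eq_mul_inv, mul_comm, mul_one] using this
  -- monotonicity of G
  have hGmono : MonotoneOn G (Set.Ico (0:ℝ) (a^2)) := by
    intro x hx y hy hxy
    rcases eq_or_lt_of_le hxy with rfl | h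
    · exact le_rfl
    · exact le_of_lt (hmono (hmaps x hx) (hmaps y hy)
        (Real.sqrt_lt_sqrt hx.1 h))
  have hA2 : A^2 ∈ Set.Ico (0:ℝ) (a^2) := ⟨by positivity, by nlinarith [hA.1, hA.2]⟩
  have hB2 : B^2 ∈ Set.Ico (0:ℝ) (a^2) := ⟨by positivity, by nlinarith [hB.1, hB.2]⟩
  have hcm : l * A^2 + (1-l) * B^2 ∈ Set.Ico (0:ℝ) (a^2) := by
    constructor
    · nlinarith [sq_nonneg A, sq_nonneg B]
    · rcases le_total (A^2) (B^2) with h | h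
      · nlinarith [mul_nonneg hl0 (by linarith : (0:ℝ) ≤ B^2 - A^2), hB2.2]
      · nlinarith [mul_nonneg (by linarith : (0:ℝ) ≤ 1-l) (by linarith : (0:ℝ) ≤ A^2 - B^2), hA2.2]
  have hq2m : q^2 ∈ Set.Ico (0:ℝ) (a^2) := ⟨by positivity, lt_of_le_of_lt hq2 hcm.2⟩
  have h3 := hGconv.2 hA2 hB2 hl0 (by linarith : (0:ℝ) ≤ 1 - l) (by ring)
  simp only [smul_eq_mul] at h3
  calc F q = G (q^2) := by rw [hG]; simp [Real.sqrt_sq hq]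
    _ ≤ G (l*A^2+(1-l)*B^2) := hGmono hq2m hcm hq2
    _ ≤ l * G (A^2) + (1-l) * G (B^2) := h3
    _ = l * F A + (1-l) * F B := by rw [hG]; simp [Real.sqrt_sq hA.1, Real.sqrt_sq hB.1]

lemma step_aux {H : Type*} [NormedAddCommGroup H] [InnerProductSpace ℝ H]
    (a : ℝ) (Fc : ℝ → ℝ)
    (hdiff : ∀ x ∈ Set.Ioo (-a) a, DifferentiableAt ℝ Fc x)
    (hdiff2 : ∀ x ∈ Set.Ioo (-a) a, DifferentiableAt ℝ (deriv Fc) x)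
    (hdd : ∀ x ∈ Set.Ico (0:ℝ) a, x * deriv (deriv Fc) x ≥ deriv Fc x)
    (hmono : StrictMonoOn Fc (Set.Ico 0 a))
    (heven : ∀ x ∈ Set.Ioo (-a) a, Fc (-x) = Fc x)
    (p v : H) (hv : ‖v‖ ≤ 1) (hsa : ‖p‖ + 1 < a)
    (β Fps : ℝ)
    (hk1 : Fc (‖p‖ + 1) ≤ (1 + β) * Fps)
    (hk2 : Fc (‖p‖ - 1) ≤ (1 - β) * Fps) :
    Fc ‖p + v‖ ≤ (1 + (⟪v, p⟫ / ‖p‖) * β) * Fps := by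
  set s : ℝ := ‖p‖ with hsdef
  have hs : 0 ≤ s := norm_nonneg p
  have ha : 0 < a := by linarith
  set c : ℝ := ⟪v, p⟫ / s with hcdef
  have hc : |c| ≤ 1 := by
    rcases eq_or_lt_of_le hs with h0 | h0
    · simp [hcdef, ← h0]
    · have h1 : |⟪v, p⟫| ≤ ‖v‖ * ‖p‖ := abs_real_inner_le_norm v p
      have h2 : ‖v‖ * ‖p‖ ≤ s := by
        rw [← hsdef]
        nlinarith
      rw [hcdef, abs_div, abs_of_pos h0]
      rw [div_le_one h0]
      linarith
  have hc1 : -1 ≤ c := (abs_le.1 hc).1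
  have hc2 : c ≤ 1 := (abs_le.1 hc).2
  have hcs : ⟪v, p⟫ = c * s := by
    rcases eq_or_lt_of_le hs with h0 | h0
    · have hp0 : p = 0 := by rw [← norm_eq_zero, ← hsdef]; exact h0.symm
      have h1 : ⟪v, p⟫ = (0:ℝ) := by rw [hp0]; exact inner_zero_right v
      rw [hcdef, h1]; simp
    · rw [hcdef]; field_simp
  set l : ℝ := (1 + c) / 2 with hldef
  have hl0 : 0 ≤ l := by rw [hldef]; linarith
  have hl1 : l ≤ 1 := by rw [hldef]; linarith
  have habs : |s - 1| ≤ s + 1 := abs_le.mpr ⟨by linarith, by linarith⟩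
  have hA : s + 1 ∈ Set.Ico (0:ℝ) a := ⟨by linarith, hsa⟩
  have hB : |s - 1| ∈ Set.Ico (0:ℝ) a := ⟨abs_nonneg _, by linarith⟩
  have hq2 : ‖p + v‖^2 ≤ l * (s+1)^2 + (1-l) * (|s - 1|)^2 := by
    have hv2 : ‖v‖^2 ≤ 1 := by nlinarith [norm_nonneg v]
    rw [sq_abs, hldef]
    nlinarith [norm_add_sq_real p v, real_inner_comm p v, hcs, hv2, hsdef]
  have hmain := convG_aux a ha Fc hdiff hdiff2 hdd hmono hl0 hl1
    (norm_nonneg (p + v)) hA hB hq2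
  have hBeq : Fc (|s - 1|) = Fc (s - 1) := by
    rcases le_or_gt 1 s with h | h
    · rw [abs_of_nonneg (by linarith)]
    · rw [abs_of_neg (by linarith), heven (s - 1) ⟨by linarith, by linarith⟩]
  rw [hBeq] at hmain
  have hstep1 : l * Fc (s + 1) ≤ l * ((1 + β) * Fps) :=
    mul_le_mul_of_nonneg_left hk1 hl0
  have hstep2 : (1 - l) * Fc (s - 1) ≤ (1 - l) * ((1 - β) * Fps) :=
    mul_le_mul_of_nonneg_left hk2 (by linarith)
  have : Fc ‖p + v‖ ≤ l * ((1 + β) * Fps) + (1 - l) * ((1 - β) * Fps) := by linarith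
  calc Fc ‖p + v‖ ≤ l * ((1 + β) * Fps) + (1 - l) * ((1 - β) * Fps) := this
    _ = (1 + c * β) * Fps := by rw [hldef]; ring



/-- Theorem 2 (Regret bound for OLO in Hilbert spaces): given a sequence of
excellent coin betting potentials `F_t : (-a_t, a_t) → (0,∞)` with initial
endowment `ε` (conditions (a)–(d)), the algorithm that predicts
`w_t = β_t(‖x_{t-1}‖)·(ε + ∑_{i<t} ⟨g_i, w_i⟩)·x_{t-1}/‖x_{t-1}‖`
(with `w_t = 0` when `x_{t-1} = ∑_{i<t} g_i = 0`) on any sequence of rewards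
with `‖g_t‖ ≤ 1` has regret against any `u` bounded by
`ε + F_T*(‖u‖)`, where `F_T*(‖u‖) = sup_y (y‖u‖ - F_T(y))`. -/
theorem stmt_5 {H : Type*} [NormedAddCommGroup H] [InnerProductSpace ℝ H]
    (ε : ℝ) (hε : 0 < ε) (a : ℕ → ℝ) (F : ℕ → ℝ → ℝ)
    (ha : ∀ t : ℕ, (t : ℝ) < a t)
    (hF0 : F 0 0 = ε)
    (hpos : ∀ t : ℕ, ∀ x ∈ Set.Ioo (-(a t)) (a t), 0 < F t x)
    (heven : ∀ t : ℕ, ∀ x ∈ Set.Ioo (-(a t)) (a t), F t (-x) = F t x)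
    (hlogconv : ∀ t : ℕ,
      ConvexOn ℝ (Set.Ioo (-(a t)) (a t)) (fun x => Real.log (F t x)))
    (hmono : ∀ t : ℕ, StrictMonoOn (F t) (Set.Ico 0 (a t)))
    (hlim : ∀ t : ℕ,
      Filter.Tendsto (F t) (nhdsWithin (a t) (Set.Ioo (-(a t)) (a t))) Filter.atTop)
    (hkey : ∀ t : ℕ, 1 ≤ t → ∀ x ∈ Set.Icc (-((t : ℝ) - 1)) ((t : ℝ) - 1),
      ∀ g ∈ Set.Icc (-1 : ℝ) 1,
        (1 + g * ((F t (x + 1) - F t (x - 1)) / (F t (x + 1) + F t (x - 1)))) *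
          F (t - 1) x ≥ F t (x + g))
    (hdiff : ∀ t : ℕ, ∀ x ∈ Set.Ioo (-(a t)) (a t), DifferentiableAt ℝ (F t) x)
    (hdiff2 : ∀ t : ℕ, ∀ x ∈ Set.Ioo (-(a t)) (a t), DifferentiableAt ℝ (deriv (F t)) x)
    (hdd : ∀ t : ℕ, ∀ x ∈ Set.Ico (0 : ℝ) (a t),
      x * deriv (deriv (F t)) x ≥ deriv (F t) x)
    (g : ℕ → H) (hg : ∀ t : ℕ, ‖g t‖ ≤ 1)
    (w : ℕ → H)
    (hw : ∀ t : ℕ, 1 ≤ t → w t =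
      (((F t (‖∑ i ∈ Finset.Icc 1 (t - 1), g i‖ + 1) -
          F t (‖∑ i ∈ Finset.Icc 1 (t - 1), g i‖ - 1)) /
         (F t (‖∑ i ∈ Finset.Icc 1 (t - 1), g i‖ + 1) +
          F t (‖∑ i ∈ Finset.Icc 1 (t - 1), g i‖ - 1))) *
        (ε + ∑ i ∈ Finset.Icc 1 (t - 1), ⟪g i, w i⟫) /
        ‖∑ i ∈ Finset.Icc 1 (t - 1), g i‖) • (∑ i ∈ Finset.Icc 1 (t - 1), g i))
    (T : ℕ) (u : H) :
    ∑ t ∈ Finset.Icc 1 T, ⟪g t, u - w t⟫ ≤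
      ε + ⨆ y : Set.Ioo (-(a T)) (a T), ((y : ℝ) * ‖u‖ - F T y) := by
  -- norm bound on partial sums
  have hnorm : ∀ t : ℕ, ‖∑ i ∈ Finset.Icc 1 t, g i‖ ≤ (t : ℝ) := by
    intro t
    calc ‖∑ i ∈ Finset.Icc 1 t, g i‖ ≤ ∑ i ∈ Finset.Icc 1 t, ‖g i‖ :=
          norm_sum_le _ _
      _ ≤ ∑ _i ∈ Finset.Icc 1 t, (1:ℝ) := Finset.sum_le_sum fun i _ => hg i
      _ = (t : ℝ) := by
          rw [Finset.sum_const, Nat.card_Icc]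
          simp
  -- the main wealth lower bound
  have claim : ∀ t : ℕ, F t ‖∑ i ∈ Finset.Icc 1 t, g i‖ ≤
      ε + ∑ i ∈ Finset.Icc 1 t, ⟪g i, w i⟫ := by
    intro t
    induction t with
    | zero =>
      rw [show Finset.Icc 1 0 = (∅ : Finset ℕ) from Finset.Icc_eq_empty (by omega)]
      simp [hF0]
    | succ t ih =>
      have h1t : (1:ℕ) ≤ t + 1 := by omega
      have hw' := hw (t+1) h1t
      have hkey' := hkey (t+1) (by exact_mod_cast h1t)
      simp only [Nat.add_sub_cancel, Nat.cast_add, Nat.cast_one, add_sub_cancel_right]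
        at hw' hkey'
      set p := ∑ i ∈ Finset.Icc 1 t, g i with hpdef
      have hst : ‖p‖ ≤ (t : ℝ) := hnorm t
      have hp0 : (0:ℝ) ≤ ‖p‖ := norm_nonneg p
      have hat : ((t:ℝ) + 1) < a (t+1) := by
        have := ha (t+1); push_cast at this; linarith
      have hat0 : (0:ℝ) < a (t+1) := by linarith [(show (0:ℝ) ≤ (t:ℝ) from Nat.cast_nonneg t)]
      have hdom1 : ‖p‖ + 1 ∈ Set.Ioo (-(a (t+1))) (a (t+1)) :=
        ⟨by linarith, by linarith⟩
      have hdom2 : ‖p‖ - 1 ∈ Set.Ioo (-(a (t+1))) (a (t+1)) :=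
        ⟨by linarith, by linarith⟩
      have hX := hpos (t+1) _ hdom1
      have hY := hpos (t+1) _ hdom2
      -- monotonicity comparison: F (t+1) (‖p‖-1) ≤ F (t+1) (‖p‖+1)
      have hYX : F (t+1) (‖p‖ - 1) ≤ F (t+1) (‖p‖ + 1) := by
        have habs : |‖p‖ - 1| ≤ ‖p‖ + 1 := abs_le.mpr ⟨by linarith, by linarith⟩
        have he : F (t+1) (|‖p‖ - 1|) = F (t+1) (‖p‖ - 1) := by
          rcases le_or_gt 1 ‖p‖ with h | h
          · rw [abs_of_nonneg (by linarith)]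
          · rw [abs_of_neg (by linarith), heven (t+1) (‖p‖ - 1) hdom2]
        rw [← he]
        exact ((hmono (t+1)).monotoneOn) ⟨abs_nonneg _, by linarith⟩
          ⟨by linarith, by linarith⟩ habs
      set β := (F (t+1) (‖p‖ + 1) - F (t+1) (‖p‖ - 1)) /
        (F (t+1) (‖p‖ + 1) + F (t+1) (‖p‖ - 1)) with hβdef
      have hβ0 : 0 ≤ β := div_nonneg (by linarith) (by linarith)
      have hβ1 : β < 1 := by
        rw [hβdef, div_lt_one (by linarith)]; linarith
      have hmemx : ‖p‖ ∈ Set.Icc (-((t:ℝ))) ((t:ℝ)) := ⟨by linarith, hst⟩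
      have hk1 : F (t+1) (‖p‖ + 1) ≤ (1 + β) * F t ‖p‖ := by
        have h := hkey' ‖p‖ hmemx 1 ⟨by norm_num, le_refl 1⟩
        rw [← hβdef] at h
        have e : (1 + 1 * β) * F t ‖p‖ = (1 + β) * F t ‖p‖ := by ring
        linarith [e ▸ h]
      have hk2 : F (t+1) (‖p‖ - 1) ≤ (1 - β) * F t ‖p‖ := by
        have h := hkey' ‖p‖ hmemx (-1) ⟨le_refl _, by norm_num⟩
        rw [← hβdef] at h
        have e1 : ‖p‖ + (-1:ℝ) = ‖p‖ - 1 := by ring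
        rw [e1] at h
        have e : (1 + (-1) * β) * F t ‖p‖ = (1 - β) * F t ‖p‖ := by ring
        linarith [e ▸ h]
      have hstep := step_aux (a (t+1)) (F (t+1)) (hdiff (t+1)) (hdiff2 (t+1))
        (hdd (t+1)) (hmono (t+1)) (heven (t+1)) p (g (t+1)) (hg (t+1))
        (by linarith) β (F t ‖p‖) hk1 hk2
      set c := (⟪g (t+1), p⟫ : ℝ) / ‖p‖ with hcdef
      have hcabs : |c| ≤ 1 := by
        rcases eq_or_lt_of_le hp0 with h0 | h0
        · simp [hcdef, ← h0]
        · have h1 : |(⟪g (t+1), p⟫ : ℝ)| ≤ ‖g (t+1)‖ * ‖p‖ :=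
            abs_real_inner_le_norm _ _
          have h2 : ‖g (t+1)‖ * ‖p‖ ≤ ‖p‖ := by nlinarith [hg (t+1), norm_nonneg (g (t+1))]
          rw [hcdef, abs_div, abs_of_pos h0, div_le_one h0]
          linarith
      have hFt : 0 < F t ‖p‖ := by
        apply hpos t ‖p‖
        constructor
        · have := ha t; linarith
        · exact lt_of_le_of_lt hst (ha t)
      have h1cβ : (0:ℝ) < 1 + c * β := by
        nlinarith [(abs_le.1 hcabs).1, (abs_le.1 hcabs).2]
      have hiw : (⟪g (t+1), w (t+1)⟫ : ℝ) =
          c * β * (ε + ∑ i ∈ Finset.Icc 1 t, ⟪g i, w i⟫) := by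
        rw [hw', real_inner_smul_right]
        rcases eq_or_ne ‖p‖ 0 with h0 | h0
        · have hpz : p = 0 := norm_eq_zero.1 h0
          simp [hcdef, hpz]
        · have hip : (⟪g (t+1), p⟫ : ℝ) = c * ‖p‖ := by
            rw [hcdef]; field_simp
          rw [hip]
          field_simp
      have hsum : ∑ i ∈ Finset.Icc 1 (t+1), g i = p + g (t+1) := by
        rw [hpdef]; exact Finset.sum_Icc_succ_top h1t g
      have hsumw : ∑ i ∈ Finset.Icc 1 (t+1), (⟪g i, w i⟫ : ℝ) =
          (∑ i ∈ Finset.Icc 1 t, ⟪g i, w i⟫) + ⟪g (t+1), w (t+1)⟫ :=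
        Finset.sum_Icc_succ_top h1t _
      rw [hsum, hsumw, hiw]
      have hWle : (1 + c * β) * F t ‖p‖ ≤
          (1 + c * β) * (ε + ∑ i ∈ Finset.Icc 1 t, ⟪g i, w i⟫) :=
        mul_le_mul_of_nonneg_left ih h1cβ.le
      calc F (t+1) ‖p + g (t+1)‖ ≤ (1 + c * β) * F t ‖p‖ := hstep
        _ ≤ (1 + c * β) * (ε + ∑ i ∈ Finset.Icc 1 t, ⟪g i, w i⟫) := hWle
        _ = ε + ((∑ i ∈ Finset.Icc 1 t, ⟪g i, w i⟫) +
            c * β * (ε + ∑ i ∈ Finset.Icc 1 t, ⟪g i, w i⟫)) := by ring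
  -- conclusion
  have hxT := hnorm T
  have haT := ha T
  have hT0 : (0:ℝ) ≤ (T:ℝ) := Nat.cast_nonneg T
  have hmem : ‖∑ i ∈ Finset.Icc 1 T, g i‖ ∈ Set.Ioo (-(a T)) (a T) :=
    ⟨by linarith [norm_nonneg (∑ i ∈ Finset.Icc 1 T, g i)],
     lt_of_le_of_lt hxT haT⟩
  have hbdd : BddAbove (Set.range fun y : Set.Ioo (-(a T)) (a T) =>
      (y : ℝ) * ‖u‖ - F T y) := by
    refine ⟨a T * ‖u‖, ?_⟩
    rintro z ⟨⟨y, hy⟩, rfl⟩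
    have h1 := hpos T y hy
    have h2 : y * ‖u‖ ≤ a T * ‖u‖ :=
      mul_le_mul_of_nonneg_right hy.2.le (norm_nonneg u)
    simp only
    linarith
  have hsup := le_ciSup hbdd
    (⟨‖∑ i ∈ Finset.Icc 1 T, g i‖, hmem⟩ : Set.Ioo (-(a T)) (a T))
  have hinner : ∑ t ∈ Finset.Icc 1 T, (⟪g t, u - w t⟫ : ℝ) =
      (⟪∑ i ∈ Finset.Icc 1 T, g i, u⟫ : ℝ) -
        ∑ t ∈ Finset.Icc 1 T, (⟪g t, w t⟫ : ℝ) := by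
    rw [sum_inner, ← Finset.sum_sub_distrib]
    exact Finset.sum_congr rfl fun i _ => inner_sub_right _ _ _
  have h2 := real_inner_le_norm (∑ i ∈ Finset.Icc 1 T, g i) u
  have hcl := claim T
  rw [hinner]
  simp only at hsup
  linarith
end

section
/- Let N ≥ 2 and T ≥ 0 be integers and π ∈ Δ_N a prior with π_i > 0 for all i. For each integer t ≥ 0 let a_t > t and F_t : (−a_t, a_t) → (0, ∞) satisfy: (a) F_0(0) = 1; (b) F_t is even, logarithmically convex, strictly increasing on [0, a_t), and F_t(x) → +∞ as x → a_t; (c) for every t ≥ 1, x ∈ [−(t−1), t−1], and g ∈ [−1, 1], (1 + g β_t(x)) F_{t−1}(x) ≥ F_t(x + g), where β_t(x) = (F_t(x+1) − F_t(x−1))/(F_t(x+1) + F_t(x−1)). Define, for each expert i and each round t: S_{t−1,i} = Σ_{j=1}^{t−1} g̃_{j,i}, w_{t,i} = β_t(S_{t−1,i}) · (1 + Σ_{j=1}^{t−1} g̃_{j,i} w_{j,i}), p̂_{t,i} = π_i · max(w_{t,i}, 0), p_t = p̂_t / ‖p̂_t‖₁ if ‖p̂_t‖₁ > 0 and p_t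 = π otherwise; upon receiving g_t ∈ [0,1]^N set g̃_{t,i} = g_{t,i} − ⟨g_t, p_t⟩ if w_{t,i} > 0 and g̃_{t,i} = max(g_{t,i} − ⟨g_t, p_t⟩, 0) if w_{t,i} ≤ 0. Let f_T(x) = ln F_T(x) restricted to [0, a_T), which is strictly increasing with inverse f_T^{−1} defined on [ln F_T(0), ∞) ⊇ [0, ∞). Then for every u ∈ Δ_N, Σ_{t=1}^T ⟨g_t, u − p_t⟩ ≤ f_T^{−1}(KL(u‖π)). -/
/-- Theorem 3 (Regret bound for learning with expert advice): given a sequence of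
coin betting potentials `F_t : (-a_t, a_t) → (0,∞)` with initial endowment `1`
(conditions (a)–(c)), the expert-advice algorithm built from `N` copies of the
corresponding one-dimensional coin-betting algorithm with prior `π` guarantees,
for every competitor `u` in the simplex, regret at most `f_T⁻¹(KL(u‖π))`,
where `f_T = ln F_T` restricted to `[0, a_T)`. -/
theorem stmt_6 (N T : ℕ) (hN : 2 ≤ N)
    (π : Fin N → ℝ) (hπpos : ∀ i, 0 < π i) (hπsum : ∑ i, π i = 1)
    (a : ℕ → ℝ) (F : ℕ → ℝ → ℝ)
    (ha : ∀ t : ℕ, (t : ℝ) < a t)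
    (hF0 : F 0 0 = 1)
    (hpos : ∀ t : ℕ, ∀ x ∈ Set.Ioo (-(a t)) (a t), 0 < F t x)
    (heven : ∀ t : ℕ, ∀ x ∈ Set.Ioo (-(a t)) (a t), F t (-x) = F t x)
    (hlogconv : ∀ t : ℕ,
      ConvexOn ℝ (Set.Ioo (-(a t)) (a t)) (fun x => Real.log (F t x)))
    (hmono : ∀ t : ℕ, StrictMonoOn (F t) (Set.Ico 0 (a t)))
    (hlim : ∀ t : ℕ,
      Filter.Tendsto (F t) (nhdsWithin (a t) (Set.Ioo (-(a t)) (a t))) Filter.atTop)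
    (hkey : ∀ t : ℕ, 1 ≤ t → ∀ x ∈ Set.Icc (-((t : ℝ) - 1)) ((t : ℝ) - 1),
      ∀ g ∈ Set.Icc (-1 : ℝ) 1,
        (1 + g * ((F t (x + 1) - F t (x - 1)) / (F t (x + 1) + F t (x - 1)))) *
          F (t - 1) x ≥ F t (x + g))
    (g : ℕ → Fin N → ℝ) (hg : ∀ t i, g t i ∈ Set.Icc (0 : ℝ) 1)
    (gt w p : ℕ → Fin N → ℝ)
    (hw : ∀ t : ℕ, 1 ≤ t → ∀ i, w t i =
      ((F t ((∑ j ∈ Finset.Icc 1 (t - 1), gt j i) + 1) -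
        F t ((∑ j ∈ Finset.Icc 1 (t - 1), gt j i) - 1)) /
       (F t ((∑ j ∈ Finset.Icc 1 (t - 1), gt j i) + 1) +
        F t ((∑ j ∈ Finset.Icc 1 (t - 1), gt j i) - 1))) *
      (1 + ∑ j ∈ Finset.Icc 1 (t - 1), gt j i * w j i))
    (hp : ∀ t : ℕ, 1 ≤ t → p t =
      if 0 < ∑ i, π i * max (w t i) 0 then
        (fun i => π i * max (w t i) 0 / ∑ j, π j * max (w t j) 0)
      else π)
    (hgt : ∀ t : ℕ, 1 ≤ t → ∀ i, gt t i =
      if 0 < w t i then g t i - ∑ j, g t j * p t j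
      else max (g t i - ∑ j, g t j * p t j) 0)
    (finv : ℝ → ℝ)
    (hfinv_left : ∀ y ∈ Set.Ico (0 : ℝ) (a T), finv (Real.log (F T y)) = y)
    (hfinv_right : ∀ z : ℝ, Real.log (F T 0) ≤ z →
      finv z ∈ Set.Ico (0 : ℝ) (a T) ∧ Real.log (F T (finv z)) = z)
    (u : Fin N → ℝ) (hu_nonneg : ∀ i, 0 ≤ u i) (hu_sum : ∑ i, u i = 1) :
    ∑ t ∈ Finset.Icc 1 T, ∑ i, g t i * (u i - p t i) ≤
      finv (∑ i, u i * Real.log (u i / π i)) := by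
  -- p t is a probability vector
  have hp_nonneg : ∀ t : ℕ, 1 ≤ t → ∀ i, 0 ≤ p t i := by
    intro t ht i
    rw [hp t ht]
    split_ifs with h
    · exact div_nonneg (mul_nonneg (hπpos i).le (le_max_right _ _)) h.le
    · exact (hπpos i).le
  have hp_sum : ∀ t : ℕ, 1 ≤ t → ∑ i, p t i = 1 := by
    intro t ht
    rw [hp t ht]
    split_ifs with h
    · rw [← Finset.sum_div, div_self (ne_of_gt h)]
    · exact hπsum
  -- the mixture reward is in [0,1]
  have hc : ∀ t : ℕ, 1 ≤ t → (∑ j, g t j * p t j) ∈ Set.Icc (0 : ℝ) 1 := by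
    intro t ht
    constructor
    · exact Finset.sum_nonneg fun j _ => mul_nonneg (hg t j).1 (hp_nonneg t ht j)
    · calc ∑ j, g t j * p t j ≤ ∑ j, p t j := by
            refine Finset.sum_le_sum fun j _ => ?_
            nlinarith [(hg t j).2, hp_nonneg t ht j, (hg t j).1]
        _ = 1 := hp_sum t ht
  -- the shifted rewards lie in [-1,1]
  have hgtb : ∀ t : ℕ, 1 ≤ t → ∀ i, gt t i ∈ Set.Icc (-1 : ℝ) 1 := by
    intro t ht i
    rw [hgt t ht i]
    obtain ⟨hc0, hc1⟩ := hc t ht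
    obtain ⟨hg0, hg1⟩ := hg t i
    split_ifs with hwi
    · constructor <;> linarith
    · constructor
      · have : (0 : ℝ) ≤ max (g t i - ∑ j, g t j * p t j) 0 := le_max_right _ _
        linarith
      · exact max_le (by linarith) (by linarith)
  -- main wealth induction
  have main : ∀ t : ℕ, ∀ i,
      |∑ j ∈ Finset.Icc 1 t, gt j i| ≤ (t : ℝ) ∧
      F t (∑ j ∈ Finset.Icc 1 t, gt j i) ≤ 1 + ∑ j ∈ Finset.Icc 1 t, gt j i * w j i := by
    intro t
    induction t with
    | zero => intro i; simp [hF0]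
    | succ n ih =>
      intro i
      have ht1 : 1 ≤ n + 1 := Nat.le_add_left 1 n
      set x := ∑ j ∈ Finset.Icc 1 n, gt j i with hx
      have hsplit : ∑ j ∈ Finset.Icc 1 (n + 1), gt j i = x + gt (n + 1) i :=
        Finset.sum_Icc_succ_top (Nat.le_add_left 1 n) _
      have hsplitw : ∑ j ∈ Finset.Icc 1 (n + 1), gt j i * w j i
          = (∑ j ∈ Finset.Icc 1 n, gt j i * w j i) + gt (n + 1) i * w (n + 1) i :=
        Finset.sum_Icc_succ_top (Nat.le_add_left 1 n) _
      obtain ⟨ihx, ihW⟩ := ih i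
      obtain ⟨hgl, hgu⟩ := hgtb (n + 1) ht1 i
      obtain ⟨hxl, hxu⟩ := abs_le.mp ihx
      have han : ((n : ℝ) + 1) < a (n + 1) := by exact_mod_cast ha (n + 1)
      have hmem1 : x + 1 ∈ Set.Ioo (-(a (n + 1))) (a (n + 1)) :=
        ⟨by linarith, by linarith⟩
      have hmem2 : x - 1 ∈ Set.Ioo (-(a (n + 1))) (a (n + 1)) :=
        ⟨by linarith, by linarith⟩
      have hA := hpos (n + 1) (x + 1) hmem1
      have hB := hpos (n + 1) (x - 1) hmem2
      set β := (F (n + 1) (x + 1) - F (n + 1) (x - 1)) /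
          (F (n + 1) (x + 1) + F (n + 1) (x - 1)) with hβ
      have hβlt : |β| < 1 := by
        rw [hβ, abs_div, abs_of_pos (by linarith : (0:ℝ) < F (n + 1) (x + 1) + F (n + 1) (x - 1)),
          div_lt_one (by linarith)]
        exact abs_lt.mpr ⟨by linarith, by linarith⟩
      have hposβ : 0 < 1 + gt (n + 1) i * β := by
        have h1 : |gt (n + 1) i * β| < 1 := by
          rw [abs_mul]
          calc |gt (n + 1) i| * |β| ≤ 1 * |β| :=
                mul_le_mul_of_nonneg_right (abs_le.mpr ⟨hgl, hgu⟩) (abs_nonneg _)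
            _ < 1 := by rw [one_mul]; exact hβlt
        have := (abs_lt.mp h1).1
        linarith
      have hxIcc : x ∈ Set.Icc (-(((n + 1 : ℕ) : ℝ) - 1)) (((n + 1 : ℕ) : ℝ) - 1) := by
        push_cast
        constructor <;> simp only [add_sub_cancel_right] <;> linarith
      have hkey' := hkey (n + 1) ht1 x hxIcc (gt (n + 1) i) ⟨hgl, hgu⟩
      rw [← hβ] at hkey'
      simp only [Nat.add_sub_cancel] at hkey'
      have hw' : w (n + 1) i = β * (1 + ∑ j ∈ Finset.Icc 1 n, gt j i * w j i) := by
        have h := hw (n + 1) ht1 i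
        simp only [Nat.add_sub_cancel] at h
        rw [h, ← hx, ← hβ]
      constructor
      · rw [hsplit]
        have habs := abs_add_le x (gt (n + 1) i)
        have hb := abs_le.mpr ⟨hgl, hgu⟩
        push_cast
        linarith
      · rw [hsplit, hsplitw, hw']
        have hFnx : 0 < F n x := by
          refine hpos n x ⟨?_, ?_⟩ <;> have := ha n
          · linarith
          · linarith
        calc F (n + 1) (x + gt (n + 1) i)
            ≤ (1 + gt (n + 1) i * β) * F n x := hkey'
          _ ≤ (1 + gt (n + 1) i * β) * (1 + ∑ j ∈ Finset.Icc 1 n, gt j i * w j i) :=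
              mul_le_mul_of_nonneg_left ihW hposβ.le
          _ = 1 + ((∑ j ∈ Finset.Icc 1 n, gt j i * w j i) +
              gt (n + 1) i * (β * (1 + ∑ j ∈ Finset.Icc 1 n, gt j i * w j i))) := by ring
  -- each round, the π-weighted bet change is nonpositive
  have hL2 : ∀ t : ℕ, 1 ≤ t → ∑ i, π i * (gt t i * w t i) ≤ 0 := by
    intro t ht
    by_cases hZ : 0 < ∑ i, π i * max (w t i) 0
    · have hpeq : ∀ i, p t i = π i * max (w t i) 0 / ∑ j, π j * max (w t j) 0 := by
        intro i; rw [hp t ht]; rw [if_pos hZ]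
      have step : ∀ i ∈ Finset.univ, π i * (gt t i * w t i) ≤
          (∑ j, π j * max (w t j) 0) * (p t i * (g t i - ∑ j, g t j * p t j)) := by
        intro i _
        rw [hpeq i, hgt t ht i]
        by_cases hwi : 0 < w t i
        · rw [if_pos hwi, max_eq_left hwi.le]
          have h : (∑ j, π j * max (w t j) 0) *
              (π i * w t i / (∑ j, π j * max (w t j) 0) * (g t i - ∑ j, g t j * p t j))
              = π i * ((g t i - ∑ j, g t j * p t j) * w t i) := by
            field_simp
          rw [h]
        · rw [if_neg hwi, max_eq_right (not_lt.mp hwi)]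
          simp only [mul_zero, zero_div, zero_mul]
          have h1 : (0 : ℝ) ≤ max (g t i - ∑ j, g t j * p t j) 0 := le_max_right _ _
          exact mul_nonpos_of_nonneg_of_nonpos (hπpos i).le
            (mul_nonpos_of_nonneg_of_nonpos h1 (not_lt.mp hwi))
      calc ∑ i, π i * (gt t i * w t i)
          ≤ ∑ i, (∑ j, π j * max (w t j) 0) * (p t i * (g t i - ∑ j, g t j * p t j)) :=
            Finset.sum_le_sum step
        _ = 0 := by
            rw [← Finset.mul_sum]
            have h1 : ∑ i, p t i * (g t i - ∑ j, g t j * p t j)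
                = (∑ i, p t i * g t i) - (∑ i, p t i) * (∑ j, g t j * p t j) := by
              simp only [mul_sub]
              rw [Finset.sum_sub_distrib, ← Finset.sum_mul]
            have h2 : ∑ i, p t i * g t i = ∑ j, g t j * p t j :=
              Finset.sum_congr rfl fun i _ => mul_comm _ _
            rw [h1, hp_sum t ht, one_mul, h2, sub_self, mul_zero]
    · push_neg at hZ
      have hall : ∀ i, w t i ≤ 0 := by
        intro i
        by_contra hwi
        push_neg at hwi
        have : 0 < ∑ i, π i * max (w t i) 0 := by
          refine Finset.sum_pos' (fun j _ => mul_nonneg (hπpos j).le (le_max_right _ _))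
            ⟨i, Finset.mem_univ i, mul_pos (hπpos i) ?_⟩
          rw [max_eq_left hwi.le]
          exact hwi
        linarith
      refine Finset.sum_nonpos fun i _ => ?_
      have hgti : 0 ≤ gt t i := by
        rw [hgt t ht i, if_neg (not_lt.mpr (hall i))]
        exact le_max_right _ _
      exact mul_nonpos_of_nonneg_of_nonpos (hπpos i).le
        (mul_nonpos_of_nonneg_of_nonpos hgti (hall i))
  -- total π-weighted wealth stays at most 1
  have hL4 : ∑ i, π i * (1 + ∑ j ∈ Finset.Icc 1 T, gt j i * w j i) ≤ 1 := by
    have heq : ∑ i, π i * (1 + ∑ j ∈ Finset.Icc 1 T, gt j i * w j i)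
        = 1 + ∑ j ∈ Finset.Icc 1 T, ∑ i, π i * (gt j i * w j i) := by
      simp only [mul_add, mul_one, Finset.sum_add_distrib, hπsum, Finset.mul_sum]
      rw [Finset.sum_comm]
    rw [heq]
    have hle : ∑ j ∈ Finset.Icc 1 T, ∑ i, π i * (gt j i * w j i) ≤ 0 :=
      Finset.sum_nonpos fun j hj => hL2 j (Finset.mem_Icc.mp hj).1
    linarith
  -- regret bounded by weighted sum of cumulated shifted rewards
  have hL5 : ∑ t ∈ Finset.Icc 1 T, ∑ i, g t i * (u i - p t i)
      ≤ ∑ i, u i * ∑ j ∈ Finset.Icc 1 T, gt j i := by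
    have hstep : ∀ t ∈ Finset.Icc 1 T,
        ∑ i, g t i * (u i - p t i) ≤ ∑ i, u i * gt t i := by
      intro t htmem
      have ht := (Finset.mem_Icc.mp htmem).1
      have hle : ∀ i, g t i - (∑ j, g t j * p t j) ≤ gt t i := by
        intro i
        rw [hgt t ht i]
        split_ifs
        · exact le_rfl
        · exact le_max_left _ _
      have heq : ∑ i, g t i * (u i - p t i)
          = ∑ i, u i * (g t i - ∑ j, g t j * p t j) := by
        simp only [mul_sub]
        rw [Finset.sum_sub_distrib, Finset.sum_sub_distrib]
        congr 1
        · exact Finset.sum_congr rfl fun i _ => mul_comm _ _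
        · rw [← Finset.sum_mul, hu_sum, one_mul]
      rw [heq]
      exact Finset.sum_le_sum fun i _ =>
        mul_le_mul_of_nonneg_left (hle i) (hu_nonneg i)
    calc ∑ t ∈ Finset.Icc 1 T, ∑ i, g t i * (u i - p t i)
        ≤ ∑ t ∈ Finset.Icc 1 T, ∑ i, u i * gt t i := Finset.sum_le_sum hstep
      _ = ∑ i, u i * ∑ j ∈ Finset.Icc 1 T, gt j i := by
          rw [Finset.sum_comm]
          exact Finset.sum_congr rfl fun i _ => (Finset.mul_sum _ _ _).symm
  -- key quantities at time T
  have hSmem : ∀ i, (∑ j ∈ Finset.Icc 1 T, gt j i) ∈ Set.Ioo (-(a T)) (a T) := by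
    intro i
    obtain ⟨h1, h2⟩ := abs_le.mp (main T i).1
    have := ha T
    exact ⟨by linarith, by linarith⟩
  have hFTpos : ∀ i, 0 < F T (∑ j ∈ Finset.Icc 1 T, gt j i) :=
    fun i => hpos T _ (hSmem i)
  have hWpos : ∀ i, 0 < 1 + ∑ j ∈ Finset.Icc 1 T, gt j i * w j i :=
    fun i => lt_of_lt_of_le (hFTpos i) (main T i).2
  have hlogW : ∀ i, Real.log (F T (∑ j ∈ Finset.Icc 1 T, gt j i))
      ≤ Real.log (1 + ∑ j ∈ Finset.Icc 1 T, gt j i * w j i) :=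
    fun i => Real.log_le_log (hFTpos i) (main T i).2
  -- comparator-weighted log-wealth is at most the KL divergence (concave Jensen)
  set KL := ∑ i, u i * Real.log (u i / π i) with hKL
  have hKLstep : ∑ i, u i * Real.log (1 + ∑ j ∈ Finset.Icc 1 T, gt j i * w j i) ≤ KL := by
    set x' : Fin N → ℝ := fun i =>
      if u i = 0 then 1
      else π i * (1 + ∑ j ∈ Finset.Icc 1 T, gt j i * w j i) / u i with hx'
    have hx'mem : ∀ i ∈ Finset.univ, x' i ∈ Set.Ioi (0 : ℝ) := by
      intro i _
      simp only [hx']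
      split_ifs with h
      · exact Set.mem_Ioi.mpr one_pos
      · have hui : 0 < u i := (hu_nonneg i).lt_of_ne (Ne.symm h)
        exact Set.mem_Ioi.mpr (div_pos (mul_pos (hπpos i) (hWpos i)) hui)
    have hJ2 := (strictConcaveOn_log_Ioi.concaveOn).le_map_sum
      (fun i _ => hu_nonneg i) hu_sum hx'mem
    simp only [smul_eq_mul] at hJ2
    have hsum_ux : ∑ i, u i * x' i ≤ 1 := by
      calc ∑ i, u i * x' i
          ≤ ∑ i, π i * (1 + ∑ j ∈ Finset.Icc 1 T, gt j i * w j i) := by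
            refine Finset.sum_le_sum fun i _ => ?_
            simp only [hx']
            split_ifs with h
            · rw [h, zero_mul]
              exact (mul_pos (hπpos i) (hWpos i)).le
            · rw [mul_div_cancel₀ _ h]
        _ ≤ 1 := hL4
    have hsum_ux0 : 0 ≤ ∑ i, u i * x' i :=
      Finset.sum_nonneg fun i _ => mul_nonneg (hu_nonneg i) (le_of_lt (hx'mem i (Finset.mem_univ i)))
    have hlog1 : Real.log (∑ i, u i * x' i) ≤ 0 := Real.log_nonpos hsum_ux0 hsum_ux
    have hterm : ∀ i, u i * Real.log (x' i)
        = u i * Real.log (1 + ∑ j ∈ Finset.Icc 1 T, gt j i * w j i)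
          - u i * Real.log (u i / π i) := by
      intro i
      simp only [hx']
      split_ifs with h
      · simp [h]
      · have hui : 0 < u i := (hu_nonneg i).lt_of_ne (Ne.symm h)
        rw [Real.log_div (ne_of_gt (mul_pos (hπpos i) (hWpos i))) (ne_of_gt hui),
          Real.log_mul (ne_of_gt (hπpos i)) (ne_of_gt (hWpos i)),
          Real.log_div (ne_of_gt hui) (ne_of_gt (hπpos i))]
        ring
    have hsum_eq : ∑ i, u i * Real.log (x' i)
        = (∑ i, u i * Real.log (1 + ∑ j ∈ Finset.Icc 1 T, gt j i * w j i)) - KL := by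
      rw [hKL, ← Finset.sum_sub_distrib]
      exact Finset.sum_congr rfl fun i _ => hterm i
    have := hJ2.trans hlog1
    rw [hsum_eq] at this
    linarith
  -- convex Jensen for log F_T
  set R := ∑ i, u i * ∑ j ∈ Finset.Icc 1 T, gt j i with hR
  have hJensen : Real.log (F T R) ≤ KL := by
    have h1 := (hlogconv T).map_sum_le (fun i _ => hu_nonneg i) hu_sum
      (fun i _ => hSmem i)
    simp only [smul_eq_mul] at h1
    have h2 : ∑ i, u i * Real.log (F T (∑ j ∈ Finset.Icc 1 T, gt j i))
        ≤ ∑ i, u i * Real.log (1 + ∑ j ∈ Finset.Icc 1 T, gt j i * w j i) :=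
      Finset.sum_le_sum fun i _ => mul_le_mul_of_nonneg_left (hlogW i) (hu_nonneg i)
    exact le_trans h1 (le_trans h2 hKLstep)
  -- bounds on R
  have hRub : R ≤ (T : ℝ) := by
    calc R ≤ ∑ i, u i * (T : ℝ) := Finset.sum_le_sum fun i _ =>
          mul_le_mul_of_nonneg_left (abs_le.mp (main T i).1).2 (hu_nonneg i)
      _ = (T : ℝ) := by rw [← Finset.sum_mul, hu_sum, one_mul]
  have hRlb : -(T : ℝ) ≤ R := by
    calc -(T : ℝ) = ∑ i, u i * (-(T : ℝ)) := by rw [← Finset.sum_mul, hu_sum, one_mul]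
      _ ≤ R := Finset.sum_le_sum fun i _ =>
          mul_le_mul_of_nonneg_left (abs_le.mp (main T i).1).1 (hu_nonneg i)
  have haT := ha T
  have hRIoo : R ∈ Set.Ioo (-(a T)) (a T) := ⟨by linarith, by linarith⟩
  -- log F_T 0 ≤ KL
  have hT0 : (0 : ℝ) ∈ Set.Ico (0 : ℝ) (a T) := ⟨le_refl _, lt_of_le_of_lt (Nat.cast_nonneg T) (ha T)⟩
  have hlogF0 : Real.log (F T 0) ≤ KL := by
    have haT0 : (0 : ℝ) < a T := lt_of_le_of_lt (Nat.cast_nonneg T) (ha T)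
    rcases le_or_gt 0 R with hR0 | hR0
    · have hmem : R ∈ Set.Ico (0 : ℝ) (a T) := ⟨hR0, hRIoo.2⟩
      have hle : F T 0 ≤ F T R := ((hmono T).monotoneOn) hT0 hmem hR0
      have := Real.log_le_log (hpos T 0 ⟨by linarith, haT0⟩) hle
      linarith
    · have hevenR : F T (-R) = F T R := heven T R hRIoo
      have hmem : -R ∈ Set.Ico (0 : ℝ) (a T) := ⟨by linarith, by linarith [hRIoo.1]⟩
      have hle : F T 0 ≤ F T (-R) := ((hmono T).monotoneOn) hT0 hmem (by linarith)
      rw [hevenR] at hle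
      have := Real.log_le_log (hpos T 0 ⟨by linarith, haT0⟩) hle
      linarith
  obtain ⟨⟨hy0, hyA⟩, hyeq⟩ := hfinv_right KL hlogF0
  -- conclude
  have hfinal : R ≤ finv KL := by
    rcases le_or_gt R 0 with h | h
    · linarith
    · by_contra hcon
      push_neg at hcon
      have hFlt : F T (finv KL) < F T R :=
        hmono T ⟨hy0, hyA⟩ ⟨h.le, hRIoo.2⟩ hcon
      have hfpos : 0 < F T (finv KL) := hpos T _ ⟨by linarith, hyA⟩
      have := Real.log_lt_log hfpos hFlt
      rw [hyeq] at this
      linarith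
  exact le_trans hL5 hfinal
end

section
/- Let δ ≥ 0 be real and t ≥ 1 an integer, and let F_t be the δ-shifted Krichevsky-Trofimov potential. Then for every x ∈ (−t−δ, t+δ), (F_t(x+1) − F_t(x−1)) / (F_t(x+1) + F_t(x−1)) = x / (t + δ). -/
/-- The `δ`-shifted Krichevsky-Trofimov potential
`F_t(x) = 2^t · Γ(δ+1) · Γ((t+δ+1)/2 + x/2) · Γ((t+δ+1)/2 - x/2) /
(Γ((δ+1)/2)² · Γ(t+δ+1))`. -/
noncomputable def ktPotential (δ : ℝ) (t : ℕ) (x : ℝ) : ℝ :=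
  2 ^ t * Real.Gamma (δ + 1) *
    Real.Gamma (((t : ℝ) + δ + 1) / 2 + x / 2) *
    Real.Gamma (((t : ℝ) + δ + 1) / 2 - x / 2) /
    (Real.Gamma ((δ + 1) / 2) ^ 2 * Real.Gamma ((t : ℝ) + δ + 1))

/-- Equation (12): the betting fraction associated to the `δ`-shifted
Krichevsky-Trofimov potential satisfies
`(F_t(x+1) - F_t(x-1))/(F_t(x+1) + F_t(x-1)) = x/(t+δ)` for every
`x ∈ (-t-δ, t+δ)`. -/
theorem stmt_7 (δ : ℝ) (hδ : 0 ≤ δ) (t : ℕ) (ht : 1 ≤ t)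
    (x : ℝ) (hx : x ∈ Set.Ioo (-((t : ℝ) + δ)) ((t : ℝ) + δ)) :
    (ktPotential δ t (x + 1) - ktPotential δ t (x - 1)) /
      (ktPotential δ t (x + 1) + ktPotential δ t (x - 1)) = x / ((t : ℝ) + δ) := by
  obtain ⟨hx1, hx2⟩ := hx
  have htpos : (1:ℝ) ≤ (t:ℝ) := by exact_mod_cast ht
  set u : ℝ := ((t:ℝ) + δ + x) / 2 with hu_def
  set v : ℝ := ((t:ℝ) + δ - x) / 2 with hv_def
  have hu : 0 < u := by rw [hu_def]; linarith
  have hv : 0 < v := by rw [hv_def]; linarith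
  have hΓu : 0 < Real.Gamma u := Real.Gamma_pos_of_pos hu
  have hΓv : 0 < Real.Gamma v := Real.Gamma_pos_of_pos hv
  set C : ℝ := 2 ^ t * Real.Gamma (δ + 1) /
      (Real.Gamma ((δ + 1) / 2) ^ 2 * Real.Gamma ((t : ℝ) + δ + 1)) with hC_def
  have hC : 0 < C := by
    have h1 : 0 < Real.Gamma (δ + 1) := Real.Gamma_pos_of_pos (by linarith)
    have h2 : 0 < Real.Gamma ((δ + 1) / 2) := Real.Gamma_pos_of_pos (by linarith)
    have h3 : 0 < Real.Gamma ((t : ℝ) + δ + 1) := Real.Gamma_pos_of_pos (by linarith)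
    rw [hC_def]; positivity
  have e1 : ((t:ℝ) + δ + 1) / 2 + (x + 1) / 2 = u + 1 := by rw [hu_def]; ring
  have e2 : ((t:ℝ) + δ + 1) / 2 - (x + 1) / 2 = v := by rw [hv_def]; ring
  have e3 : ((t:ℝ) + δ + 1) / 2 + (x - 1) / 2 = u := by rw [hu_def]; ring
  have e4 : ((t:ℝ) + δ + 1) / 2 - (x - 1) / 2 = v + 1 := by rw [hv_def]; ring
  have K1 : ktPotential δ t (x + 1) = C * (u * (Real.Gamma u * Real.Gamma v)) := by
    rw [ktPotential, e1, e2, Real.Gamma_add_one hu.ne', hC_def]; ring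
  have K2 : ktPotential δ t (x - 1) = C * (v * (Real.Gamma u * Real.Gamma v)) := by
    rw [ktPotential, e3, e4, Real.Gamma_add_one hv.ne', hC_def]; ring
  have hnum : ktPotential δ t (x + 1) - ktPotential δ t (x - 1) =
      (C * (Real.Gamma u * Real.Gamma v)) * x := by
    rw [K1, K2, hu_def, hv_def]; ring
  have hden : ktPotential δ t (x + 1) + ktPotential δ t (x - 1) =
      (C * (Real.Gamma u * Real.Gamma v)) * ((t:ℝ) + δ) := by
    rw [K1, K2, hu_def, hv_def]; ring
  rw [hnum, hden, mul_div_mul_left _ _ (by positivity : C * (Real.Gamma u * Real.Gamma v) ≠ 0)]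
end

section
/- Let δ ≥ 0 be real and t ≥ 1 an integer, and let F_t and F_{t−1} be the δ-shifted Krichevsky-Trofimov potentials for times t and t−1. Then for every x ∈ [−(t−1), t−1] and every g ∈ [−1, 1], (1 + g · x/(t+δ)) · F_{t−1}(x) ≥ F_t(x + g); moreover, for g = +1 and g = −1 this inequality holds with equality. -/
-- equality lemma for g = 1, t = s+1
lemma kt_eq_plus (δ : ℝ) (hδ : 0 ≤ δ) (s : ℕ) (x : ℝ) (hx1 : -(s:ℝ) ≤ x) (hx2 : x ≤ s) :
    (1 + x / (((s:ℝ)+1) + δ)) * ktPotential δ s x = ktPotential δ (s+1) (x+1) := by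
  have hc : (0:ℝ) < (s:ℝ) + 1 + δ := by positivity
  have hu : ((s:ℝ) + 1 + δ + x) / 2 ≠ 0 := by
    have : (0:ℝ) < (s:ℝ) + 1 + δ + x := by nlinarith
    positivity
  have h1 : (((s:ℝ)+1) + δ + 1) / 2 + (x+1)/2 = ((s:ℝ) + 1 + δ + x)/2 + 1 := by ring
  have h2 : Real.Gamma ((s:ℝ) + 1 + δ + 1) = ((s:ℝ)+1+δ) * Real.Gamma ((s:ℝ)+1+δ) := by
    rw [Real.Gamma_add_one hc.ne']
  have h3 : ((s:ℝ)+1+δ+x)/2 = ((s:ℝ) + δ + 1)/2 + x/2 := by ring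
  have h4 : (((s:ℝ)+1) + δ + 1)/2 - (x+1)/2 = ((s:ℝ)+δ+1)/2 - x/2 := by ring
  have hΓ1 : (0:ℝ) < Real.Gamma ((δ+1)/2) := Real.Gamma_pos_of_pos (by positivity)
  have hΓ2 : (0:ℝ) < Real.Gamma ((s:ℝ)+1+δ) := Real.Gamma_pos_of_pos (by positivity)
  unfold ktPotential
  push_cast
  rw [h1, Real.Gamma_add_one hu, h2, h3, h4]
  field_simp
  ring

lemma kt_neg (δ : ℝ) (t : ℕ) (x : ℝ) : ktPotential δ t (-x) = ktPotential δ t x := by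
  unfold ktPotential
  rw [show ((t:ℝ) + δ + 1)/2 + -x/2 = (t + δ + 1)/2 - x/2 by ring,
      show ((t:ℝ) + δ + 1)/2 - -x/2 = (t + δ + 1)/2 + x/2 by ring]
  ring

/-- Condition (c) for the `δ`-shifted Krichevsky-Trofimov potentials:
for `t ≥ 1`, `x ∈ [-(t-1), t-1]` and `g ∈ [-1,1]`,
`(1 + g·x/(t+δ))·F_{t-1}(x) ≥ F_t(x+g)`, with equality for `g = +1` and
`g = -1`. -/
theorem stmt_8 (δ : ℝ) (hδ : 0 ≤ δ) (t : ℕ) (ht : 1 ≤ t)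
    (x : ℝ) (hx : x ∈ Set.Icc (-((t : ℝ) - 1)) ((t : ℝ) - 1))
    (g : ℝ) (hg : g ∈ Set.Icc (-1 : ℝ) 1) :
    (1 + g * (x / ((t : ℝ) + δ))) * ktPotential δ (t - 1) x ≥ ktPotential δ t (x + g) ∧
    (1 + 1 * (x / ((t : ℝ) + δ))) * ktPotential δ (t - 1) x = ktPotential δ t (x + 1) ∧
    (1 + (-1) * (x / ((t : ℝ) + δ))) * ktPotential δ (t - 1) x = ktPotential δ t (x - 1) := by
  obtain ⟨s, rfl⟩ : ∃ s, t = s + 1 := ⟨t - 1, (Nat.succ_pred_eq_of_pos ht).symm⟩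
  simp only [Nat.add_sub_cancel] at *
  obtain ⟨hx1, hx2⟩ := hx
  obtain ⟨hg1, hg2⟩ := hg
  push_cast at hx1 hx2 ⊢
  have hx1' : -(s:ℝ) ≤ x := by linarith
  have hx2' : x ≤ (s:ℝ) := by linarith
  have heqp : (1 + 1 * (x / ((s:ℝ) + 1 + δ))) * ktPotential δ s x = ktPotential δ (s+1) (x+1) := by
    rw [one_mul]; exact kt_eq_plus δ hδ s x hx1' hx2'
  have heqm : (1 + (-1) * (x / ((s:ℝ) + 1 + δ))) * ktPotential δ s x = ktPotential δ (s+1) (x-1) := by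
    have := kt_eq_plus δ hδ s (-x) (by linarith) (by linarith)
    rw [kt_neg] at this
    rw [show -x + 1 = -(x-1) by ring, kt_neg] at this
    rw [← this]; ring
  refine ⟨?_, heqp, heqm⟩
  -- inequality
  set p : ℝ := (1 - g)/2 with hp
  set q : ℝ := (1 + g)/2 with hq
  have hp0 : 0 ≤ p := by simp [hp]; linarith
  have hq0 : 0 ≤ q := by simp [hq]; linarith
  have hpq : p + q = 1 := by simp [hp, hq]; ring
  set a : ℝ := ((s:ℝ) + 1 + δ + 1)/2 with ha
  -- positivity of Gamma arguments
  have harg : ∀ y : ℝ, -((s:ℝ)+1) ≤ y → y ≤ (s:ℝ)+1 → 0 < a + y/2 ∧ 0 < a - y/2 := by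
    intro y h1 h2
    constructor <;> [nlinarith; nlinarith]
  set G : ℝ → ℝ := fun y => Real.Gamma (a + y/2) * Real.Gamma (a - y/2) with hG
  have key : G (x + g) ≤ p * G (x-1) + q * G (x+1) := by
    have hm := harg (x-1) (by linarith) (by linarith)
    have hpl := harg (x+1) (by linarith) (by linarith)
    have hmid := harg (x+g) (by linarith) (by linarith)
    have hcvx := Real.convexOn_log_Gamma.2
    have c1 : a + (x+g)/2 = p • (a + (x-1)/2) + q • (a + (x+1)/2) := by
      simp only [smul_eq_mul, hp, hq]; ring
    have c2 : a - (x+g)/2 = p • (a - (x-1)/2) + q • (a - (x+1)/2) := by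
      simp only [smul_eq_mul, hp, hq]; ring
    have l1 : Real.log (Real.Gamma (a + (x+g)/2)) ≤
        p * Real.log (Real.Gamma (a + (x-1)/2)) + q * Real.log (Real.Gamma (a + (x+1)/2)) := by
      have := hcvx hm.1 hpl.1 hp0 hq0 hpq
      rw [← c1] at this
      simpa using this
    have l2 : Real.log (Real.Gamma (a - (x+g)/2)) ≤
        p * Real.log (Real.Gamma (a - (x-1)/2)) + q * Real.log (Real.Gamma (a - (x+1)/2)) := by
      have := hcvx hm.2 hpl.2 hp0 hq0 hpq
      rw [← c2] at this
      simpa using this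
    have hGm : 0 < G (x-1) := mul_pos (Real.Gamma_pos_of_pos hm.1) (Real.Gamma_pos_of_pos hm.2)
    have hGp : 0 < G (x+1) := mul_pos (Real.Gamma_pos_of_pos hpl.1) (Real.Gamma_pos_of_pos hpl.2)
    have hGmid : 0 < G (x+g) := mul_pos (Real.Gamma_pos_of_pos hmid.1) (Real.Gamma_pos_of_pos hmid.2)
    have lsum : Real.log (G (x+g)) ≤ p * Real.log (G (x-1)) + q * Real.log (G (x+1)) := by
      rw [hG]
      simp only
      rw [Real.log_mul (Real.Gamma_pos_of_pos hmid.1).ne' (Real.Gamma_pos_of_pos hmid.2).ne',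
          Real.log_mul (Real.Gamma_pos_of_pos hm.1).ne' (Real.Gamma_pos_of_pos hm.2).ne',
          Real.log_mul (Real.Gamma_pos_of_pos hpl.1).ne' (Real.Gamma_pos_of_pos hpl.2).ne']
      linarith
    have hgeom : G (x+g) ≤ G (x-1) ^ p * G (x+1) ^ q := by
      rw [← Real.exp_log hGmid, ← Real.exp_log hGm, ← Real.exp_log hGp,
          ← Real.exp_mul, ← Real.exp_mul, ← Real.exp_add]
      exact Real.exp_le_exp.mpr (by nlinarith [lsum])
    calc G (x+g) ≤ G (x-1) ^ p * G (x+1) ^ q := hgeom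
      _ ≤ p * G (x-1) + q * G (x+1) :=
        Real.geom_mean_le_arith_mean2_weighted hp0 hq0 hGm.le hGp.le hpq
  -- combine
  set C : ℝ := 2 ^ (s+1) * Real.Gamma (δ + 1) /
      (Real.Gamma ((δ + 1) / 2) ^ 2 * Real.Gamma (((s:ℕ):ℝ) + 1 + δ + 1)) with hCdef
  have hC : 0 ≤ C := by
    rw [hCdef]
    have h1 := Real.Gamma_pos_of_pos (show (0:ℝ) < δ + 1 by linarith)
    have h2 := Real.Gamma_pos_of_pos (show (0:ℝ) < (δ+1)/2 by linarith)
    have h3 := Real.Gamma_pos_of_pos (show (0:ℝ) < ((s:ℕ):ℝ) + 1 + δ + 1 by positivity)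
    positivity
  have hktG : ∀ y : ℝ, ktPotential δ (s+1) y = C * G y := by
    intro y
    unfold ktPotential
    push_cast
    rw [hG, ha, hCdef]
    push_cast
    ring
  have hineq : ktPotential δ (s+1) (x+g) ≤
      p * ktPotential δ (s+1) (x-1) + q * ktPotential δ (s+1) (x+1) := by
    rw [hktG, hktG, hktG]
    have h := mul_le_mul_of_nonneg_left key hC
    have he : C * (p * G (x-1) + q * G (x+1)) = p * (C * G (x-1)) + q * (C * G (x+1)) := by ring
    linarith
  rw [ge_iff_le]
  calc ktPotential δ (s+1) (x+g) ≤ p * ktPotential δ (s+1) (x-1) + q * ktPotential δ (s+1) (x+1) := hineq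
    _ = p * ((1 + (-1) * (x / ((s:ℝ) + 1 + δ))) * ktPotential δ s x)
        + q * ((1 + 1 * (x / ((s:ℝ) + 1 + δ))) * ktPotential δ s x) := by rw [heqp, heqm]
    _ = (1 + g * (x / ((s:ℝ) + 1 + δ))) * ktPotential δ s x := by
        simp only [hp, hq]; ring
end

section
/- Let a > 0 and define F : (−a, a) → ℝ by F(x) = Γ(a + x) · Γ(a − x), where Γ is Euler's gamma function. Then F is even, F is logarithmically convex on (−a, a), F is strictly increasing on [0, a), and F(x) → +∞ as x → a from below. -/
open Real Filter Set Finset Topology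

lemma gseq_prod_eq (a x : ℝ) (n : ℕ) (hn : 1 ≤ n) :
    Real.GammaSeq (a + x) n * Real.GammaSeq (a - x) n =
      (n : ℝ) ^ (2 * a) * (n.factorial : ℝ) ^ 2 /
        ∏ j ∈ Finset.range (n + 1), ((a + j) ^ 2 - x ^ 2) := by
  have hn0 : (0 : ℝ) < n := by exact_mod_cast hn
  rw [Real.GammaSeq, Real.GammaSeq, div_mul_div_comm]
  congr 1
  · rw [mul_mul_mul_comm, ← Real.rpow_add hn0, show a + x + (a - x) = 2 * a by ring, sq]
  · rw [← Finset.prod_mul_distrib]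
    exact Finset.prod_congr rfl fun j _ => by push_cast; ring

lemma prod_pos_aux (a : ℝ) {x : ℝ} (hx : 0 ≤ x) (hxa : x < a) (n : ℕ) :
    ∀ j ∈ Finset.range (n + 1), (0 : ℝ) < (a + j) ^ 2 - x ^ 2 := by
  intro j _
  have h1 : x ^ 2 < a ^ 2 := by nlinarith
  have h2 : a ^ 2 ≤ (a + j) ^ 2 := by nlinarith [Nat.cast_nonneg (α := ℝ) j]
  linarith

lemma aux_strict (a : ℝ) (ha : 0 < a) {x y : ℝ} (hx : 0 ≤ x) (hxy : x < y) (hy : y < a) :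
    Real.Gamma (a + x) * Real.Gamma (a - x) < Real.Gamma (a + y) * Real.Gamma (a - y) := by
  have hy0 : 0 ≤ y := hx.trans hxy.le
  set c : ℝ := (a ^ 2 - x ^ 2) / (a ^ 2 - y ^ 2) with hc
  have hay : (0 : ℝ) < a ^ 2 - y ^ 2 := by nlinarith
  have hcgt : 1 < c := by
    rw [hc, lt_div_iff₀ hay]
    nlinarith
  have key : ∀ n : ℕ, 1 ≤ n →
      c * (Real.GammaSeq (a + x) n * Real.GammaSeq (a - x) n) ≤
        Real.GammaSeq (a + y) n * Real.GammaSeq (a - y) n := by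
    intro n hn
    rw [gseq_prod_eq a x n hn, gseq_prod_eq a y n hn]
    set D : ℝ := (n : ℝ) ^ (2 * a) * (n.factorial : ℝ) ^ 2 with hD
    have hD0 : 0 ≤ D := by positivity
    have hPx0 : (0:ℝ) < ∏ j ∈ Finset.range (n + 1), ((a + j) ^ 2 - x ^ 2) :=
      Finset.prod_pos (prod_pos_aux a hx (hxy.trans hy) n)
    have hPy0 : (0:ℝ) < ∏ j ∈ Finset.range (n + 1), ((a + j) ^ 2 - y ^ 2) :=
      Finset.prod_pos (prod_pos_aux a hy0 hy n)
    have hcy : (a ^ 2 - y ^ 2) * c = a ^ 2 - x ^ 2 := by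
      rw [hc]; field_simp
    have hkey : c * ∏ j ∈ Finset.range (n + 1), ((a + j) ^ 2 - y ^ 2) ≤
        ∏ j ∈ Finset.range (n + 1), ((a + j) ^ 2 - x ^ 2) := by
      rw [Finset.prod_range_succ', Finset.prod_range_succ']
      push_cast
      simp only [add_zero]
      calc c * ((∏ k ∈ Finset.range n, ((a + ((k : ℝ) + 1)) ^ 2 - y ^ 2)) * (a ^ 2 - y ^ 2))
          = (∏ k ∈ Finset.range n, ((a + ((k : ℝ) + 1)) ^ 2 - y ^ 2)) * (a ^ 2 - x ^ 2) := by
            rw [mul_comm c, mul_assoc, hcy]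
        _ ≤ (∏ k ∈ Finset.range n, ((a + ((k : ℝ) + 1)) ^ 2 - x ^ 2)) * (a ^ 2 - x ^ 2) := by
            refine mul_le_mul_of_nonneg_right ?_ (by nlinarith)
            refine Finset.prod_le_prod (fun k _ => ?_) (fun k _ => ?_)
            · nlinarith [Nat.cast_nonneg (α := ℝ) k]
            · nlinarith
    rw [← mul_div_assoc, div_le_div_iff₀ hPx0 hPy0]
    nlinarith [mul_le_mul_of_nonneg_left hkey hD0, hPy0.le, hPx0.le]
  have tx : Tendsto (fun n => c * (Real.GammaSeq (a + x) n * Real.GammaSeq (a - x) n))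
      atTop (𝓝 (c * (Real.Gamma (a + x) * Real.Gamma (a - x)))) :=
    tendsto_const_nhds.mul ((Real.GammaSeq_tendsto_Gamma _).mul (Real.GammaSeq_tendsto_Gamma _))
  have ty : Tendsto (fun n => Real.GammaSeq (a + y) n * Real.GammaSeq (a - y) n)
      atTop (𝓝 (Real.Gamma (a + y) * Real.Gamma (a - y))) :=
    (Real.GammaSeq_tendsto_Gamma _).mul (Real.GammaSeq_tendsto_Gamma _)
  have hle : c * (Real.Gamma (a + x) * Real.Gamma (a - x)) ≤
      Real.Gamma (a + y) * Real.Gamma (a - y) :=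
    le_of_tendsto_of_tendsto tx ty (eventually_atTop.2 ⟨1, key⟩)
  have hFx : 0 < Real.Gamma (a + x) * Real.Gamma (a - x) :=
    mul_pos (Real.Gamma_pos_of_pos (by linarith)) (Real.Gamma_pos_of_pos (by linarith))
  nlinarith

/-- Lemma 5 (Analytic properties of the KT potential, part 1): for `a > 0`,
the function `F(x) = Γ(a+x)·Γ(a-x)` on `(-a, a)` is even, logarithmically
convex, strictly increasing on `[0, a)`, and tends to `+∞` as `x → a` from
within the interval. -/
theorem stmt_9 (a : ℝ) (ha : 0 < a) (F : ℝ → ℝ)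
    (hF : ∀ x : ℝ, F x = Real.Gamma (a + x) * Real.Gamma (a - x)) :
    (∀ x ∈ Set.Ioo (-a) a, F (-x) = F x) ∧
    ConvexOn ℝ (Set.Ioo (-a) a) (fun x => Real.log (F x)) ∧
    StrictMonoOn F (Set.Ico 0 a) ∧
    Filter.Tendsto F (nhdsWithin a (Set.Ioo (-a) a)) Filter.atTop := by
  refine ⟨?_, ?_, ?_, ?_⟩
  · intro x _
    rw [hF, hF, show a + -x = a - x by ring, show a - -x = a + x by ring, mul_comm]
  · have key : ∀ z ∈ Set.Ioo (-a) a, Real.log (F z) =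
        Real.log (Real.Gamma (a + z)) + Real.log (Real.Gamma (a - z)) := by
      intro z hz
      rw [hF, Real.log_mul (Real.Gamma_pos_of_pos (by linarith [hz.1])).ne'
        (Real.Gamma_pos_of_pos (by linarith [hz.2])).ne']
    refine ⟨convex_Ioo _ _, fun x hx y hy p q hp hq hpq => ?_⟩
    have hmem : p • x + q • y ∈ Set.Ioo (-a) a := (convex_Ioo (-a) a) hx hy hp hq hpq
    show Real.log (F (p • x + q • y)) ≤ p • Real.log (F x) + q • Real.log (F y)
    rw [key _ hmem, key _ hx, key _ hy]
    have hax : a + x ∈ Set.Ioi (0:ℝ) := by simp only [Set.mem_Ioi]; linarith [hx.1]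
    have hay : a + y ∈ Set.Ioi (0:ℝ) := by simp only [Set.mem_Ioi]; linarith [hy.1]
    have hax' : a - x ∈ Set.Ioi (0:ℝ) := by simp only [Set.mem_Ioi]; linarith [hx.2]
    have hay' : a - y ∈ Set.Ioi (0:ℝ) := by simp only [Set.mem_Ioi]; linarith [hy.2]
    have h1 := Real.convexOn_log_Gamma.2 hax hay hp hq hpq
    have h2 := Real.convexOn_log_Gamma.2 hax' hay' hp hq hpq
    simp only [Function.comp_apply, smul_eq_mul] at h1 h2 ⊢
    have e1 : p * (a + x) + q * (a + y) = a + (p * x + q * y) := by nlinarith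
    have e2 : p * (a - x) + q * (a - y) = a - (p * x + q * y) := by nlinarith
    rw [e1] at h1; rw [e2] at h2
    linarith
  · intro x hx y hy hxy
    rw [hF, hF]
    exact aux_strict a ha hx.1 hxy hy.2
  · have h1 : Tendsto (fun x => a - x) (nhdsWithin a (Set.Ioo (-a) a)) (𝓝[>] (0:ℝ)) := by
      apply tendsto_nhdsWithin_of_tendsto_nhds_of_eventually_within
      · exact ((continuous_const.sub continuous_id).tendsto' a 0 (by simp)).mono_left
          nhdsWithin_le_nhds
      · filter_upwards [self_mem_nhdsWithin] with x hx
        exact sub_pos.2 hx.2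
    have hinv : Tendsto (fun x => (a - x)⁻¹) (nhdsWithin a (Set.Ioo (-a) a)) atTop :=
      tendsto_inv_nhdsGT_zero.comp h1
    have hG1 : Tendsto (fun x => Real.Gamma (a + x)) (nhdsWithin a (Set.Ioo (-a) a))
        (𝓝 (Real.Gamma (2 * a))) := by
      have hc : ContinuousAt Real.Gamma (2 * a) :=
        (Real.differentiableAt_Gamma (fun m => by
          have : (0:ℝ) ≤ m := Nat.cast_nonneg m
          intro h; nlinarith)).continuousAt
      have ht : Tendsto (fun x : ℝ => a + x) (𝓝 a) (𝓝 (2 * a)) :=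
        (continuous_const.add continuous_id).tendsto' a (2 * a) (by simp; ring)
      exact (hc.tendsto.comp ht).mono_left nhdsWithin_le_nhds
    have hG2 : Tendsto (fun x => Real.Gamma (a - x + 1)) (nhdsWithin a (Set.Ioo (-a) a))
        (𝓝 1) := by
      have hc : ContinuousAt Real.Gamma 1 :=
        (Real.differentiableAt_Gamma (fun m => by
          have : (0:ℝ) ≤ m := Nat.cast_nonneg m
          intro h; nlinarith)).continuousAt
      have ht : Tendsto (fun x => a - x + 1) (nhdsWithin a (Set.Ioo (-a) a)) (𝓝 (0 + 1)) :=
        (h1.mono_right nhdsWithin_le_nhds).add tendsto_const_nhds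
      rw [zero_add] at ht
      have := hc.tendsto.comp ht
      rwa [Real.Gamma_one] at this
    have hmain : Tendsto (fun x => Real.Gamma (a + x) * Real.Gamma (a - x + 1) * (a - x)⁻¹)
        (nhdsWithin a (Set.Ioo (-a) a)) atTop := by
      refine Filter.Tendsto.pos_mul_atTop ?_ (hG1.mul hG2) hinv
      have : 0 < Real.Gamma (2 * a) := Real.Gamma_pos_of_pos (by linarith)
      nlinarith
    refine hmain.congr' ?_
    filter_upwards [self_mem_nhdsWithin] with x hx
    have hax : a - x ≠ 0 := (sub_pos.2 hx.2).ne'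
    rw [hF, Real.Gamma_add_one hax]
    field_simp
end

section
/- Let a > 0 and define F : (−a, a) → ℝ by F(x) = Γ(a + x) · Γ(a − x), where Γ is Euler's gamma function. Then F is twice differentiable on (−a, a) and satisfies x · F''(x) ≥ F'(x) for every x ∈ [0, a). -/
open Real

/-- `φ(u) = (u-1)e^u + (u+1)e^{-u}` satisfies `u·φ(u) ≥ 0`. -/
lemma KT_aux_phi (u : ℝ) : 0 ≤ u * ((u - 1) * exp u + (u + 1) * exp (-u)) := by
  set φ : ℝ → ℝ := fun u => (u - 1) * exp u + (u + 1) * exp (-u) with hφ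
  have hder : ∀ v : ℝ, HasDerivAt φ (v * (exp v - exp (-v))) v := by
    intro v
    have h1 : HasDerivAt (fun u : ℝ => (u - 1) * exp u) (1 * exp v + (v - 1) * exp v) v :=
      ((hasDerivAt_id v).sub_const 1).mul (Real.hasDerivAt_exp v)
    have h2 : HasDerivAt (fun u : ℝ => exp (-u)) (exp (-v) * (-1)) v :=
      ((hasDerivAt_id v).neg).exp
    have h3 : HasDerivAt (fun u : ℝ => (u + 1) * exp (-u))
        (1 * exp (-v) + (v + 1) * (exp (-v) * (-1))) v :=
      ((hasDerivAt_id v).add_const 1).mul h2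
    refine (h1.add h3).congr_deriv ?_
    ring
  have hmono : Monotone φ := by
    have hdiff : Differentiable ℝ φ := fun v => (hder v).differentiableAt
    refine monotone_of_deriv_nonneg hdiff ?_
    intro v
    rw [(hder v).deriv]
    rcases le_total 0 v with hv | hv
    · exact mul_nonneg hv (sub_nonneg.2 (exp_le_exp.2 (by linarith)))
    · have h1 : exp v - exp (-v) ≤ 0 := sub_nonpos.2 (exp_le_exp.2 (by linarith))
      nlinarith
  have h0 : φ 0 = 0 := by simp [hφ]
  rcases le_total 0 u with hu | hu
  · have := hmono hu; rw [h0] at this; exact mul_nonneg hu this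
  · have := hmono hu; rw [h0] at this
    have hx : (u - 1) * exp u + (u + 1) * exp (-u) ≤ 0 := this
    nlinarith

open Real MeasureTheory intervalIntegral Set Interval

lemma KT_aemeas (g : ℝ → ℝ) (hg : ContinuousOn g (Ioo 0 1)) :
    AEStronglyMeasurable g (volume.restrict (Ι (0:ℝ) 1)) := by
  rw [uIoc_of_le (by norm_num : (0:ℝ) ≤ 1),
    Measure.restrict_congr_set (Ioo_ae_eq_Ioc (a := (0:ℝ)) (b := 1)).symm]
  exact hg.aestronglyMeasurable measurableSet_Ioo

lemma KT_cont_rpow (p q : ℝ) :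
    ContinuousOn (fun t : ℝ => t ^ (p-1) * (1-t) ^ (q-1)) (Ioo 0 1) := by
  have c1 : ContinuousOn (fun t : ℝ => t ^ (p-1)) (Ioo 0 1) := fun t ht =>
    (Real.continuousAt_rpow_const t (p-1) (Or.inl ht.1.ne')).continuousWithinAt
  have c2 : ContinuousOn (fun t : ℝ => (1-t) ^ (q-1)) (Ioo 0 1) := by
    intro t ht
    have : (1:ℝ) - t ≠ 0 := by have := ht.2; intro h; linarith [sub_eq_zero.mp h]
    exact (ContinuousAt.comp (Real.continuousAt_rpow_const (1-t) (q-1) (Or.inl this))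
      (continuousAt_const.sub continuousAt_id)).continuousWithinAt
  exact c1.mul c2

lemma KT_beta_eq (p q : ℝ) :
    ∀ t ∈ uIcc (0:ℝ) 1,
      ((t:ℂ) ^ ((p:ℂ) - 1) * (1 - (t:ℂ)) ^ ((q:ℂ) - 1)) =
        (((t ^ (p-1) * (1-t) ^ (q-1) : ℝ)) : ℂ) := by
  intro t ht
  rw [uIcc_of_le (by norm_num : (0:ℝ) ≤ 1)] at ht
  have h1 : ((t ^ (p-1) : ℝ) : ℂ) = (t:ℂ) ^ ((p:ℂ) - 1) := by
    rw [Complex.ofReal_cpow ht.1]; push_cast; ring_nf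
  have h2 : (((1-t) ^ (q-1) : ℝ) : ℂ) = (1 - (t:ℂ)) ^ ((q:ℂ) - 1) := by
    rw [Complex.ofReal_cpow (by linarith [ht.2])]; push_cast; ring_nf
  push_cast
  rw [h1, h2]

lemma KT_beta_integrable (p q : ℝ) (hp : 0 < p) (hq : 0 < q) :
    IntervalIntegrable (fun t : ℝ => t ^ (p-1) * (1-t) ^ (q-1)) volume 0 1 := by
  have hc := Complex.betaIntegral_convergent (u := (p:ℂ)) (v := (q:ℂ))
    (by simpa using hp) (by simpa using hq)
  refine hc.mono_fun (KT_aemeas _ (KT_cont_rpow p q)) ?_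
  refine Filter.eventually_of_mem (self_mem_ae_restrict measurableSet_uIoc) fun t ht => ?_
  have := KT_beta_eq p q t (uIoc_subset_uIcc ht)
  dsimp only
  rw [this, Complex.norm_real]

lemma KT_gamma_beta (p q : ℝ) (hp : 0 < p) (hq : 0 < q) :
    Real.Gamma p * Real.Gamma q =
      Real.Gamma (p+q) * ∫ t in (0:ℝ)..1, t ^ (p-1) * (1-t) ^ (q-1) := by
  have hc := Complex.Gamma_mul_Gamma_eq_betaIntegral (s := (p:ℂ)) (t := (q:ℂ))
    (by simpa using hp) (by simpa using hq)
  have hbeta : Complex.betaIntegral (p:ℂ) (q:ℂ) =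
      ((∫ t in (0:ℝ)..1, t ^ (p-1) * (1-t) ^ (q-1) : ℝ) : ℂ) := by
    rw [Complex.betaIntegral, ← intervalIntegral.integral_ofReal]
    exact intervalIntegral.integral_congr (KT_beta_eq p q)
  rw [hbeta, ← Complex.ofReal_add, Complex.Gamma_ofReal, Complex.Gamma_ofReal,
    Complex.Gamma_ofReal] at hc
  exact_mod_cast hc

open Real MeasureTheory intervalIntegral Set

lemma KT_log_bound {c t : ℝ} (hc : 0 < c) (ht : 0 < t) (ht1 : t ≤ 1) :
    |log t| ≤ c⁻¹ * t ^ (-c) := by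
  have hlt : log t ≤ 0 := log_nonpos ht.le ht1
  rw [abs_of_nonpos hlt]
  have h1 : log (t ^ (-c)) = -c * log t := Real.log_rpow ht (-c)
  have hpos : 0 < t ^ (-c) := rpow_pos_of_pos ht _
  have h2 : log (t ^ (-c)) ≤ t ^ (-c) := (Real.log_le_sub_one_of_pos hpos).trans (by linarith)
  rw [h1] at h2
  rw [← mul_le_mul_iff_right₀ hc, ← mul_assoc, mul_inv_cancel₀ hc.ne', one_mul]
  linarith

lemma KT_one_le_rpow {c t : ℝ} (hc : 0 < c) (ht : 0 < t) (ht1 : t ≤ 1) :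
    1 ≤ t ^ (-c) := by
  rw [Real.rpow_neg ht.le, one_le_inv_iff₀]
  exact ⟨rpow_pos_of_pos ht _, Real.rpow_le_one ht.le ht1 hc.le⟩

lemma KT_s_bound {c t : ℝ} (hc : 0 < c) (ht : 0 < t) (ht1 : t < 1) :
    |log t - log (1-t)| ≤ 2 * c⁻¹ * (t ^ (-c) * (1-t) ^ (-c)) := by
  have h1t : (0:ℝ) < 1 - t := by linarith
  have b1 := KT_log_bound hc ht ht1.le
  have b2 := KT_log_bound hc h1t (by linarith)
  have g1 := KT_one_le_rpow hc ht ht1.le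
  have g2 := KT_one_le_rpow hc h1t (by linarith)
  have habs : |log t - log (1-t)| ≤ |log t| + |log (1-t)| := abs_sub _ _
  have hc' : (0:ℝ) ≤ c⁻¹ := by positivity
  nlinarith [abs_nonneg (log t), abs_nonneg (log (1-t))]

lemma KT_master (m : ℕ) (p q : ℝ) (hp : 0 < p) (hq : 0 < q) :
    IntervalIntegrable
      (fun t : ℝ => |log t - log (1-t)| ^ m * (t ^ (p-1) * (1-t) ^ (q-1))) volume 0 1 := by
  set c : ℝ := min p q / (2 * (m+1)) with hcdef
  have hc : 0 < c := by positivity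
  have hcm : c * m ≤ min p q / 2 := by
    rw [hcdef, div_mul_eq_mul_div, div_le_div_iff₀ (by positivity) (by norm_num)]
    have : (m : ℝ) ≤ m + 1 := by linarith
    nlinarith [lt_min hp hq]
  have hp' : 0 < p - c * m := by have := min_le_left p q; nlinarith
  have hq' : 0 < q - c * m := by have := min_le_right p q; nlinarith
  have hbeta := (KT_beta_integrable (p - c*m) (q - c*m) hp' hq').const_mul ((2 * c⁻¹) ^ m)
  refine hbeta.mono_fun (KT_aemeas _ ?_) ?_
  · have hlog : ContinuousOn (fun t : ℝ => log t - log (1-t)) (Ioo 0 1) := by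
      intro t ht
      have h1t : (1:ℝ) - t ≠ 0 := by have := ht.2; intro h; linarith [sub_eq_zero.mp h]
      exact ((Real.continuousAt_log ht.1.ne').sub
        ((Real.continuousAt_log h1t).comp (continuousAt_const.sub continuousAt_id))).continuousWithinAt
    exact ((hlog.abs).pow m).mul (KT_cont_rpow p q)
  · have hne : ∀ᵐ t : ℝ ∂(volume.restrict (Ι (0:ℝ) 1)), t ≠ 1 :=
      ae_restrict_of_ae (by
        refine ae_iff.mpr ?_
        simp only [ne_eq, not_not, setOf_eq_eq_singleton]
        exact Real.volume_singleton)
    filter_upwards [self_mem_ae_restrict measurableSet_uIoc, hne] with t htI htne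
    rw [uIoc_of_le (by norm_num : (0:ℝ) ≤ 1)] at htI
    have ht : 0 < t := htI.1
    have ht1 : t < 1 := lt_of_le_of_ne htI.2 htne
    have h1t : (0:ℝ) < 1 - t := by linarith
    have hb := KT_s_bound hc ht ht1
    have hpow : |log t - log (1-t)| ^ m ≤ (2 * c⁻¹ * (t ^ (-c) * (1-t) ^ (-c))) ^ m :=
      pow_le_pow_left₀ (abs_nonneg _) hb m
    have hrw : (2 * c⁻¹ * (t ^ (-c) * (1-t) ^ (-c))) ^ m
        = (2 * c⁻¹) ^ m * (t ^ (-(c*m)) * (1-t) ^ (-(c*m))) := by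
      rw [mul_pow (2 * c⁻¹) _ m, mul_pow (t ^ (-c)) _ m, ← Real.rpow_natCast (t ^ (-c)) m, ← Real.rpow_natCast ((1-t) ^ (-c)) m,
        ← Real.rpow_mul ht.le, ← Real.rpow_mul h1t.le]
      ring_nf
    have hcomb : t ^ (-(c*m)) * t ^ (p-1) = t ^ (p - c*m - 1) := by
      rw [← Real.rpow_add ht]; ring_nf
    have hcomb2 : (1-t) ^ (-(c*m)) * (1-t) ^ (q-1) = (1-t) ^ (q - c*m - 1) := by
      rw [← Real.rpow_add h1t]; ring_nf
    rw [Real.norm_eq_abs, abs_of_nonneg (by positivity)]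
    calc |log t - log (1-t)| ^ m * (t ^ (p-1) * (1-t) ^ (q-1))
        ≤ (2 * c⁻¹) ^ m * (t ^ (-(c*m)) * (1-t) ^ (-(c*m))) * (t ^ (p-1) * (1-t) ^ (q-1)) := by
          rw [← hrw]; exact mul_le_mul_of_nonneg_right hpow (by positivity)
      _ = (2 * c⁻¹) ^ m * (t ^ (p - c*m - 1) * (1-t) ^ (q - c*m - 1)) := by
          rw [← hcomb, ← hcomb2]; ring
      _ ≤ ‖(2 * c⁻¹) ^ m * (t ^ (p - c*(m:ℝ) - 1) * (1-t) ^ (q - c*(m:ℝ) - 1))‖ := by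
          rw [Real.norm_eq_abs]; exact le_abs_self _

open Real MeasureTheory intervalIntegral Set

noncomputable def sKT (t : ℝ) : ℝ := Real.log t - Real.log (1-t)
noncomputable def fKT (a x t : ℝ) : ℝ := t ^ (a + x - 1) * (1-t) ^ (a - x - 1)
noncomputable def BK (a : ℝ) (k : ℕ) (x : ℝ) : ℝ := ∫ t in (0:ℝ)..1, (sKT t)^k * fKT a x t

lemma KT_f_exp {a t : ℝ} (ht : 0 < t) (ht1 : t < 1) (x : ℝ) :
    fKT a x t = exp (x * sKT t + (a-1) * (log t + log (1-t))) := by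
  have h1t : (0:ℝ) < 1 - t := by linarith
  rw [fKT, rpow_def_of_pos ht, rpow_def_of_pos h1t, ← exp_add, sKT]
  ring_nf

lemma KT_ne_one_vol : ∀ᵐ t : ℝ ∂(volume : MeasureTheory.Measure ℝ), t ≠ 1 := by
  refine ae_iff.mpr ?_
  simp only [ne_eq, not_not, setOf_eq_eq_singleton]
  exact Real.volume_singleton

lemma KT_ne_one : ∀ᵐ t : ℝ ∂(volume.restrict (Ι (0:ℝ) 1)), t ≠ 1 :=
  ae_restrict_of_ae KT_ne_one_vol

lemma KT_hasDeriv_pointwise {t : ℝ} (ht : 0 < t) (ht1 : t < 1) (a : ℝ) (k : ℕ) (x : ℝ) :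
    HasDerivAt (fun y => sKT t ^ k * fKT a y t) (sKT t ^ (k+1) * fKT a x t) x := by
  have hbase : HasDerivAt (fun y : ℝ => y * sKT t + (a-1) * (log t + log (1-t))) (sKT t) x := by
    simpa using ((hasDerivAt_id x).mul_const (sKT t)).add_const ((a-1) * (log t + log (1-t)))
  have hexp := hbase.exp
  have hfun : (fun y => sKT t ^ k * fKT a y t)
      = fun y => sKT t ^ k * exp (y * sKT t + (a-1) * (log t + log (1-t))) := by
    funext y; rw [KT_f_exp ht ht1]
  rw [hfun]
  have := hexp.const_mul (sKT t ^ k)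
  refine this.congr_deriv ?_
  rw [← KT_f_exp ht ht1]
  ring

lemma KT_contOn (a x : ℝ) (k : ℕ) :
    ContinuousOn (fun t : ℝ => sKT t ^ k * fKT a x t) (Ioo 0 1) := by
  have hlog : ContinuousOn sKT (Ioo 0 1) := by
    intro t ht
    have h1t : (1:ℝ) - t ≠ 0 := by have := ht.2; intro h; linarith [sub_eq_zero.mp h]
    exact ((Real.continuousAt_log ht.1.ne').sub
      ((Real.continuousAt_log h1t).comp (continuousAt_const.sub continuousAt_id))).continuousWithinAt
  exact (hlog.pow k).mul (KT_cont_rpow (a+x) (a-x))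

lemma KT_integrable (a : ℝ) (k : ℕ) {x : ℝ} (hx : x ∈ Ioo (-a) a) :
    IntervalIntegrable (fun t : ℝ => sKT t ^ k * fKT a x t) volume 0 1 := by
  have hp : 0 < a + x := by have := hx.1; linarith
  have hq : 0 < a - x := by have := hx.2; linarith
  refine (KT_master k (a+x) (a-x) hp hq).mono_fun (KT_aemeas _ (KT_contOn a x k)) ?_
  refine Filter.Eventually.of_forall fun t => ?_
  simp only [Real.norm_eq_abs, sKT, fKT, abs_mul, abs_pow, abs_abs]
  exact le_refl _

lemma KT_hasDerivAt_BK (a : ℝ) (k : ℕ) {x : ℝ} (hx : x ∈ Ioo (-a) a) :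
    HasDerivAt (BK a k) (BK a (k+1) x) x := by
  obtain ⟨hx1, hx2⟩ := hx
  set ε : ℝ := min (a+x) (a-x) / 2 with hεdef
  have hε : 0 < ε := by
    have : 0 < min (a+x) (a-x) := lt_min (by linarith) (by linarith)
    positivity
  set p : ℝ := a + x - ε with hpdef
  set q : ℝ := a - x - ε with hqdef
  have hεle1 : ε ≤ (a+x)/2 := by
    rw [hεdef]; have := min_le_left (a+x) (a-x); linarith
  have hεle2 : ε ≤ (a-x)/2 := by
    rw [hεdef]; have := min_le_right (a+x) (a-x); linarith
  have hp : 0 < p := by rw [hpdef]; linarith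
  have hq : 0 < q := by rw [hqdef]; linarith
  have hbound : ∀ᵐ t : ℝ ∂(volume : MeasureTheory.Measure ℝ), t ∈ Ι (0:ℝ) 1 →
      ∀ y ∈ Metric.ball x ε, ‖sKT t ^ (k+1) * fKT a y t‖ ≤
        |sKT t| ^ (k+1) * (t ^ (p-1) * (1-t) ^ (q-1)) := by
    filter_upwards [KT_ne_one_vol] with t htne
    intro htI y hy
    rw [uIoc_of_le (by norm_num : (0:ℝ) ≤ 1)] at htI
    have ht : 0 < t := htI.1
    have ht1 : t < 1 := lt_of_le_of_ne htI.2 htne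
    have h1t : (0:ℝ) < 1 - t := by linarith
    rw [Metric.mem_ball, Real.dist_eq, abs_lt] at hy
    have hf1 : t ^ (a + y - 1) ≤ t ^ (p - 1) :=
      rpow_le_rpow_of_exponent_ge ht ht1.le (by rw [hpdef]; linarith [hy.1])
    have hf2 : (1-t) ^ (a - y - 1) ≤ (1-t) ^ (q - 1) :=
      rpow_le_rpow_of_exponent_ge h1t (by linarith) (by rw [hqdef]; linarith [hy.2])
    have hfle : fKT a y t ≤ t ^ (p-1) * (1-t) ^ (q-1) := by
      rw [fKT]
      exact mul_le_mul hf1 hf2 (rpow_nonneg h1t.le _) (rpow_nonneg ht.le _)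
    rw [Real.norm_eq_abs, abs_mul, abs_pow]
    have hfpos : 0 ≤ fKT a y t := by
      rw [fKT]; exact mul_nonneg (rpow_nonneg ht.le _) (rpow_nonneg h1t.le _)
    rw [abs_of_nonneg hfpos]
    exact mul_le_mul_of_nonneg_left hfle (by positivity)
  have hdiff : ∀ᵐ t : ℝ ∂(volume : MeasureTheory.Measure ℝ), t ∈ Ι (0:ℝ) 1 →
      ∀ y ∈ Metric.ball x ε, HasDerivAt (fun z => sKT t ^ k * fKT a z t)
        (sKT t ^ (k+1) * fKT a y t) y := by
    filter_upwards [KT_ne_one_vol] with t htne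
    intro htI y _
    rw [uIoc_of_le (by norm_num : (0:ℝ) ≤ 1)] at htI
    have ht : 0 < t := htI.1
    have ht1 : t < 1 := lt_of_le_of_ne htI.2 htne
    exact KT_hasDeriv_pointwise ht ht1 a k y
  have main := intervalIntegral.hasDerivAt_integral_of_dominated_loc_of_deriv_le
    (F := fun y t => sKT t ^ k * fKT a y t) (F' := fun y t => sKT t ^ (k+1) * fKT a y t)
    (x₀ := x) (a := 0) (b := 1) (μ := volume)
    (bound := fun t => |sKT t| ^ (k+1) * (t ^ (p-1) * (1-t) ^ (q-1))) (Metric.ball_mem_nhds x hε)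
    (Filter.Eventually.of_forall fun y => KT_aemeas _ (KT_contOn a y k))
    (KT_integrable a k ⟨hx1, hx2⟩)
    (KT_aemeas _ (KT_contOn a x (k+1)))
    hbound (KT_master (k+1) p q hp hq) hdiff
  exact main.2

open Real MeasureTheory intervalIntegral Set

lemma sKT_one_sub (t : ℝ) : sKT (1-t) = - sKT t := by
  rw [sKT, sKT, sub_sub_cancel]; ring

lemma fKT_one_sub (a x t : ℝ) : fKT a (-x) (1-t) = fKT a x t := by
  rw [fKT, fKT, sub_sub_cancel, show a + -x - 1 = a - x - 1 by ring,
    show a - -x - 1 = a + x - 1 by ring]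
  ring

lemma KT_pointwise (a : ℝ) {x : ℝ} (hx : 0 ≤ x) (t : ℝ) (ht : t ∈ Icc (0:ℝ) 1) :
    0 ≤ (x * sKT t^2 - sKT t) * fKT a x t + (x * sKT t^2 + sKT t) * fKT a (-x) t := by
  rcases eq_or_lt_of_le ht.1 with h0 | h0
  · have hs : sKT t = 0 := by rw [← h0, sKT]; simp
    rw [hs]; ring_nf; exact le_refl _
  rcases eq_or_lt_of_le ht.2 with h1 | h1
  · have hs : sKT t = 0 := by rw [h1, sKT]; simp
    rw [hs]; ring_nf; exact le_refl _
  -- now 0 < t < 1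
  have h1t : (0:ℝ) < 1 - t := by linarith
  set s : ℝ := sKT t with hsdef
  set c : ℝ := (a-1) * (log t + log (1-t)) with hcdef
  have hA : fKT a x t = exp c * exp (x * s) := by
    rw [KT_f_exp h0 h1, ← exp_add, hsdef, hcdef]; ring_nf
  have hB : fKT a (-x) t = exp c * exp (-(x * s)) := by
    rw [KT_f_exp h0 h1, ← exp_add, hsdef, hcdef]; ring_nf
  rw [hA, hB]
  rcases eq_or_lt_of_le hx with hx0 | hx0
  · rw [← hx0]; ring_nf; exact le_refl _
  · have hphi := KT_aux_phi (x * s)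
    have hring : (x*s) * (((x*s) - 1) * exp (x*s) + ((x*s) + 1) * exp (-(x*s)))
        = x * ((x * s^2 - s) * exp (x*s) + (x * s^2 + s) * exp (-(x*s))) := by ring
    rw [hring] at hphi
    have hcore : 0 ≤ (x * s^2 - s) * exp (x*s) + (x * s^2 + s) * exp (-(x*s)) :=
      nonneg_of_mul_nonneg_right hphi hx0
    have hec : 0 ≤ exp c := (exp_pos c).le
    nlinarith [hcore, hec]

lemma KT_sub_symm (a x : ℝ) :
    (∫ t in (0:ℝ)..1, (x * sKT t^2 - sKT t) * fKT a x t)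
      = ∫ t in (0:ℝ)..1, (x * sKT t^2 + sKT t) * fKT a (-x) t := by
  have h := intervalIntegral.integral_comp_sub_left (a := 0) (b := 1)
    (fun t => (x * sKT t^2 + sKT t) * fKT a (-x) t) 1
  norm_num at h
  rw [← h]
  refine intervalIntegral.integral_congr fun t _ => ?_
  simp only [sKT_one_sub, fKT_one_sub]
  ring

lemma KT_integrable_comb (a : ℝ) {x : ℝ} (hx : x ∈ Ioo (-a) a) :
    IntervalIntegrable (fun t : ℝ => (x * sKT t^2 - sKT t) * fKT a x t) volume 0 1 := by
  have h2 := (KT_integrable a 2 hx).const_mul x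
  have h1 := KT_integrable a 1 hx
  have heq : (fun t : ℝ => (x * sKT t^2 - sKT t) * fKT a x t)
      = fun t => x * (sKT t^2 * fKT a x t) - sKT t ^ 1 * fKT a x t := by funext t; ring
  rw [heq]
  exact h2.sub h1

lemma KT_integrable_comb' (a : ℝ) {x : ℝ} (hx : x ∈ Ioo (-a) a) :
    IntervalIntegrable (fun t : ℝ => (x * sKT t^2 + sKT t) * fKT a (-x) t) volume 0 1 := by
  have hxneg : -x ∈ Ioo (-a) a := ⟨by have := hx.2; linarith, by have := hx.1; linarith⟩
  have h2 := (KT_integrable a 2 hxneg).const_mul x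
  have h1 := KT_integrable a 1 hxneg
  have heq : (fun t : ℝ => (x * sKT t^2 + sKT t) * fKT a (-x) t)
      = fun t => x * (sKT t^2 * fKT a (-x) t) + sKT t ^ 1 * fKT a (-x) t := by funext t; ring
  rw [heq]
  exact h2.add h1

lemma KT_key (a : ℝ) {x : ℝ} (hx0 : 0 ≤ x) (hxa : x < a) :
    BK a 1 x ≤ x * BK a 2 x := by
  have ha : 0 < a := lt_of_le_of_lt hx0 hxa
  have hx : x ∈ Ioo (-a) a := ⟨by linarith, hxa⟩
  have hI1 := KT_integrable_comb a hx
  have hI2 := KT_integrable_comb' a hx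
  have hsum : 0 ≤ ∫ t in (0:ℝ)..1,
      ((x * sKT t^2 - sKT t) * fKT a x t + (x * sKT t^2 + sKT t) * fKT a (-x) t) :=
    intervalIntegral.integral_nonneg (by norm_num) (fun t ht => KT_pointwise a hx0 t ht)
  rw [intervalIntegral.integral_add hI1 hI2, ← KT_sub_symm a x] at hsum
  have hI1nonneg : 0 ≤ ∫ t in (0:ℝ)..1, (x * sKT t^2 - sKT t) * fKT a x t := by linarith
  -- rewrite x * BK a 2 x - BK a 1 x as this integral
  have h2 := (KT_integrable a 2 hx).const_mul x
  have h1 := KT_integrable a 1 hx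
  have hdiff : x * BK a 2 x - BK a 1 x
      = ∫ t in (0:ℝ)..1, (x * sKT t^2 - sKT t) * fKT a x t := by
    rw [BK, BK, ← intervalIntegral.integral_const_mul, ← intervalIntegral.integral_sub h2 h1]
    refine intervalIntegral.integral_congr fun t _ => ?_
    ring
  linarith

/-- Lemma 5 (Analytic properties of the KT potential, part 2): for `a > 0`,
the function `F(x) = Γ(a+x)·Γ(a-x)` is twice differentiable on `(-a, a)` and
satisfies `x·F''(x) ≥ F'(x)` for every `x ∈ [0, a)`. -/

theorem stmt_10 (a : ℝ) (ha : 0 < a) (F : ℝ → ℝ)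
    (hF : ∀ x : ℝ, F x = Real.Gamma (a + x) * Real.Gamma (a - x)) :
    (∀ x ∈ Set.Ioo (-a) a, DifferentiableAt ℝ F x) ∧
    (∀ x ∈ Set.Ioo (-a) a, DifferentiableAt ℝ (deriv F) x) ∧
    (∀ x ∈ Set.Ico (0 : ℝ) a, x * deriv (deriv F) x ≥ deriv F x) := by
  have hC : 0 < Real.Gamma (2*a) := Real.Gamma_pos_of_pos (by linarith)
  have hFB : ∀ y ∈ Set.Ioo (-a) a, F y = Real.Gamma (2*a) * BK a 0 y := by
    intro y hy
    have hp : 0 < a + y := by have := hy.1; linarith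
    have hq : 0 < a - y := by have := hy.2; linarith
    have hbeta := KT_gamma_beta (a+y) (a-y) hp hq
    rw [hF y, hbeta, show a + y + (a - y) = 2*a by ring]
    congr 1
    simp only [BK]
    refine intervalIntegral.integral_congr fun t _ => ?_
    simp [fKT]
  have hd0 : ∀ y ∈ Set.Ioo (-a) a, HasDerivAt F (Real.Gamma (2*a) * BK a 1 y) y := by
    intro y hy
    have h := (KT_hasDerivAt_BK a 0 hy).const_mul (Real.Gamma (2*a))
    refine h.congr_of_eventuallyEq ?_
    filter_upwards [isOpen_Ioo.mem_nhds hy] with z hz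
    exact hFB z hz
  have hderivF : ∀ y ∈ Set.Ioo (-a) a, deriv F y = Real.Gamma (2*a) * BK a 1 y :=
    fun y hy => (hd0 y hy).deriv
  have hd1 : ∀ y ∈ Set.Ioo (-a) a, HasDerivAt (deriv F) (Real.Gamma (2*a) * BK a 2 y) y := by
    intro y hy
    have h := (KT_hasDerivAt_BK a 1 hy).const_mul (Real.Gamma (2*a))
    refine h.congr_of_eventuallyEq ?_
    filter_upwards [isOpen_Ioo.mem_nhds hy] with z hz
    exact hderivF z hz
  refine ⟨fun x hx => (hd0 x hx).differentiableAt,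
    fun x hx => (hd1 x hx).differentiableAt, ?_⟩
  intro x hx
  have hxI : x ∈ Set.Ioo (-a) a := ⟨by have := hx.1; linarith, hx.2⟩
  rw [ge_iff_le, hderivF x hxI, (hd1 x hxI).deriv]
  have hkey := KT_key a hx.1 hx.2
  nlinarith [mul_le_mul_of_nonneg_left hkey hC.le]
end

section
/- Let T ≥ 1 be an integer, δ ≥ 0 a real number, and x ∈ [−T, T]. Then the δ-shifted Krichevsky-Trofimov potential satisfies F_T(x) = 2^T · Γ(δ+1) · Γ((T+δ+1)/2 + x/2) · Γ((T+δ+1)/2 − x/2) / (Γ((δ+1)/2)² · Γ(T+δ+1)) ≥ exp( x²/(2(T+δ)) + (1/2)·ln((1+δ)/(T+δ)) − ln(e·√π) ). -/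
open Real Filter Finset


lemma logGamma_combo {x y t : ℝ} (hx : 0 < x) (hy : 0 < y) (ht : 0 ≤ t) (ht1 : t ≤ 1) :
    Real.Gamma (t * x + (1 - t) * y) ≤ Real.Gamma x ^ t * Real.Gamma y ^ (1 - t) := by
  have h := Real.convexOn_log_Gamma.2 (Set.mem_Ioi.2 hx) (Set.mem_Ioi.2 hy) ht
    (by linarith : (0:ℝ) ≤ 1 - t) (by ring)
  simp only [smul_eq_mul, Function.comp_apply] at h
  have hc : 0 < t * x + (1 - t) * y := by
    rcases eq_or_lt_of_le ht with h0 | h0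
    · rw [← h0]; simpa using hy
    · have h1 : 0 < t * x := mul_pos h0 hx
      have h2 : 0 ≤ (1 - t) * y := mul_nonneg (by linarith) hy.le
      linarith
  calc Real.Gamma (t * x + (1 - t) * y) = Real.exp (Real.log (Real.Gamma (t * x + (1 - t) * y))) :=
        (Real.exp_log (Real.Gamma_pos_of_pos hc)).symm
    _ ≤ Real.exp (t * Real.log (Real.Gamma x) + (1 - t) * Real.log (Real.Gamma y)) :=
        Real.exp_le_exp.2 h
    _ = Real.Gamma x ^ t * Real.Gamma y ^ (1 - t) := by
        rw [Real.exp_add, ← Real.exp_log (Real.Gamma_pos_of_pos hx), ← Real.exp_log (Real.Gamma_pos_of_pos hy),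
          Real.log_exp, Real.log_exp, ← Real.exp_mul, ← Real.exp_mul]
        rw [mul_comm (Real.log _) t, mul_comm (Real.log _) (1 - t)]

lemma wendel {u : ℝ} (hu : 0 < u) :
    Real.Gamma (u + 1/2) ^ 2 ≤ u * Real.Gamma u ^ 2 := by
  have h := logGamma_combo (x := u) (y := u + 1) hu (by linarith) (t := 1/2) (by norm_num) (by norm_num)
  have e : (1/2 : ℝ) * u + (1 - 1/2) * (u + 1) = u + 1/2 := by ring
  rw [e, Real.Gamma_add_one hu.ne'] at h
  have hg := Real.Gamma_pos_of_pos hu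
  have h2 : Real.Gamma (u + 1/2) ^ 2 ≤ (Real.Gamma u ^ (1/2:ℝ) * (u * Real.Gamma u) ^ (1 - 1/2:ℝ)) ^ 2 := by
    have := Real.Gamma_pos_of_pos (by linarith : (0:ℝ) < u + 1/2)
    exact pow_le_pow_left₀ this.le h 2
  calc Real.Gamma (u + 1/2) ^ 2 ≤ _ := h2
    _ = u * Real.Gamma u ^ 2 := by
        rw [mul_pow, ← Real.rpow_natCast (Real.Gamma u ^ (1/2:ℝ)) 2, ← Real.rpow_natCast ((u * Real.Gamma u) ^ (1-1/2:ℝ)) 2,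
          ← Real.rpow_mul hg.le, ← Real.rpow_mul (by positivity)]
        norm_num
        ring


lemma key_factor (a s : ℝ) (ha : 0 < a) (hs : s^2 < a^2)
    (g : ℕ → ℝ) (hg : g = fun k : ℕ => 1/(a+(k:ℝ)) + 1/(2*(a+(k:ℝ))*(a+(k:ℝ)+1))) (j : ℕ) :
    Real.exp (s^2 * (g j - g (j+1))) ≤ (a+(j:ℝ))^2 / ((a+(j:ℝ))^2 - s^2) := by
  have hj : (0:ℝ) ≤ (j:ℝ) := Nat.cast_nonneg j
  have hb : 0 < a + (j:ℝ) := by positivity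
  have hbs : s^2 < (a+(j:ℝ))^2 := by nlinarith
  -- step 1 : g j - g (j+1) ≤ 1/(a+j)^2
  have hstep1 : g j - g (j+1) ≤ 1/(a+(j:ℝ))^2 := by
    have hdiff : 1/(a+(j:ℝ))^2 - (g j - g (j+1))
        = 2/((a+(j:ℝ))^2*((a+(j:ℝ))+1)*((a+(j:ℝ))+2)) := by
      subst hg
      simp only [Nat.cast_add, Nat.cast_one]
      field_simp
      ring
    nlinarith [div_pos (by norm_num : (0:ℝ) < 2)
      (by positivity : (0:ℝ) < (a+(j:ℝ))^2*((a+(j:ℝ))+1)*((a+(j:ℝ))+2))]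
  -- step 2 : exp (s^2/(a+j)^2) ≤ (a+j)^2/((a+j)^2 - s^2)
  have hmono : s^2 * (g j - g (j+1)) ≤ s^2 / (a+(j:ℝ))^2 := by
    rw [div_eq_mul_one_div]
    exact mul_le_mul_of_nonneg_left hstep1 (sq_nonneg s)
  refine le_trans (Real.exp_le_exp.2 hmono) ?_
  set b := a + (j:ℝ) with hbdef
  have hb2 : (0:ℝ) < b^2 := by positivity
  have hden : (0:ℝ) < b^2 - s^2 := by linarith
  rw [le_div_iff₀ hden]
  set t := s^2 / b^2 with htdef
  have h1t : b^2 - s^2 = b^2 * (1 - t) := by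
    rw [htdef, mul_sub, mul_one, mul_div_cancel₀ _ hb2.ne']
  have he : Real.exp t * (1 - t) ≤ 1 := by
    have e1 : 1 - t ≤ Real.exp (-t) := by linarith [Real.add_one_le_exp (-t)]
    have e2 : Real.exp t * (1 - t) ≤ Real.exp t * Real.exp (-t) :=
      mul_le_mul_of_nonneg_left e1 (Real.exp_pos t).le
    rwa [← Real.exp_add, add_neg_cancel, Real.exp_zero] at e2
  calc Real.exp t * (b^2 - s^2) = b^2 * (Real.exp t * (1 - t)) := by rw [h1t]; ring
    _ ≤ b^2 * 1 := mul_le_mul_of_nonneg_left he hb2.le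
    _ = b^2 := mul_one _

lemma prod_lower (a s : ℝ) (ha : 0 < a) (hs : |s| < a) :
    Real.Gamma a ^ 2 * Real.exp (s^2 * (1/a + 1/(2*a*(a+1)))) ≤
      Real.Gamma (a+s) * Real.Gamma (a-s) := by
  obtain ⟨hs1, hs2⟩ := abs_lt.1 hs
  have has : 0 < a + s := by linarith
  have has' : 0 < a - s := by linarith
  have hsq : s^2 < a^2 := by nlinarith [abs_nonneg s, sq_abs s]
  set g : ℕ → ℝ := fun k : ℕ => 1/(a+(k:ℝ)) + 1/(2*(a+(k:ℝ))*(a+(k:ℝ)+1)) with hg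
  -- partial product bound
  have hprod : ∀ n : ℕ, Real.exp (s^2 * (g 0 - g n)) ≤
      ∏ j ∈ range n, ((a+(j:ℝ))^2 / ((a+(j:ℝ))^2 - s^2)) := by
    intro n
    have htel : ∑ j ∈ range n, (g j - g (j+1)) = g 0 - g n := Finset.sum_range_sub' g n
    calc Real.exp (s^2 * (g 0 - g n)) = Real.exp (∑ j ∈ range n, s^2 * (g j - g (j+1))) := by
          rw [← Finset.mul_sum, htel]
      _ = ∏ j ∈ range n, Real.exp (s^2 * (g j - g (j+1))) := Real.exp_sum _ _
      _ ≤ ∏ j ∈ range n, ((a+(j:ℝ))^2 / ((a+(j:ℝ))^2 - s^2)) := by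
          apply Finset.prod_le_prod
          · intro j _; exact (Real.exp_pos _).le
          · intro j _; exact key_factor a s ha hsq g hg j
  -- GammaSeq ratio identity
  have hratio : ∀ n : ℕ, 1 ≤ n →
      Real.GammaSeq (a+s) n * Real.GammaSeq (a-s) n / Real.GammaSeq a n ^ 2
        = ∏ j ∈ range (n+1), ((a+(j:ℝ))^2 / ((a+(j:ℝ))^2 - s^2)) := by
    intro n hn
    have hn0 : (0:ℝ) < (n:ℝ) := by exact_mod_cast hn
    have hP1 : ∀ j ∈ range (n+1), (0:ℝ) < (a+s) + (j:ℝ) := by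
      intro j _; have : (0:ℝ) ≤ (j:ℝ) := Nat.cast_nonneg j; linarith
    have hP2 : ∀ j ∈ range (n+1), (0:ℝ) < (a-s) + (j:ℝ) := by
      intro j _; have : (0:ℝ) ≤ (j:ℝ) := Nat.cast_nonneg j; linarith
    have hP3 : ∀ j ∈ range (n+1), (0:ℝ) < a + (j:ℝ) := by
      intro j _; have : (0:ℝ) ≤ (j:ℝ) := Nat.cast_nonneg j; linarith
    have hp1 : (0:ℝ) < ∏ j ∈ range (n+1), ((a+s) + (j:ℝ)) := Finset.prod_pos hP1
    have hp2 : (0:ℝ) < ∏ j ∈ range (n+1), ((a-s) + (j:ℝ)) := Finset.prod_pos hP2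
    have hp3 : (0:ℝ) < ∏ j ∈ range (n+1), (a + (j:ℝ)) := Finset.prod_pos hP3
    have hfact : (0:ℝ) < ((n.factorial : ℕ) : ℝ) := by exact_mod_cast n.factorial_pos
    have hpow : ∀ y : ℝ, (0:ℝ) < (n:ℝ) ^ y := fun y => Real.rpow_pos_of_pos hn0 y
    have hrpow : (n:ℝ) ^ (a+s) * (n:ℝ) ^ (a-s) = ((n:ℝ) ^ a) ^ 2 := by
      rw [← Real.rpow_add hn0, sq, ← Real.rpow_add hn0]; ring_nf
    have hRHS : ∏ j ∈ range (n+1), ((a+(j:ℝ))^2 / ((a+(j:ℝ))^2 - s^2))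
        = (∏ j ∈ range (n+1), (a + (j:ℝ)))^2 /
          ((∏ j ∈ range (n+1), ((a+s) + (j:ℝ))) * (∏ j ∈ range (n+1), ((a-s) + (j:ℝ)))) := by
      rw [← Finset.prod_pow, ← Finset.prod_mul_distrib, ← Finset.prod_div_distrib]
      apply Finset.prod_congr rfl
      intro j _
      congr 1
      ring
    rw [hRHS]
    simp only [Real.GammaSeq]
    rw [div_mul_div_comm, div_pow, div_div_div_eq]
    rw [div_eq_div_iff (by positivity) (by positivity)]
    rw [mul_pow, ← hrpow]
    ring
  -- limits
  have hGlim : Filter.Tendsto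
      (fun n => Real.GammaSeq (a+s) n * Real.GammaSeq (a-s) n / Real.GammaSeq a n ^ 2)
      atTop (nhds (Real.Gamma (a+s) * Real.Gamma (a-s) / Real.Gamma a ^ 2)) := by
    exact ((Real.GammaSeq_tendsto_Gamma (a+s)).mul (Real.GammaSeq_tendsto_Gamma (a-s))).div
      ((Real.GammaSeq_tendsto_Gamma a).pow 2)
      (pow_ne_zero 2 (Real.Gamma_pos_of_pos ha).ne')
  have hgz : Filter.Tendsto g atTop (nhds 0) := by
    have t1 : Filter.Tendsto (fun k : ℕ => a + (k:ℝ)) atTop atTop :=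
      tendsto_atTop_add_const_left _ a tendsto_natCast_atTop_atTop
    have t2 : Filter.Tendsto (fun k : ℕ => (a+(k:ℝ))⁻¹) atTop (nhds 0) :=
      t1.inv_tendsto_atTop
    have t4 : Filter.Tendsto (fun k : ℕ => 2*(a+(k:ℝ))*(a+(k:ℝ)+1)) atTop atTop := by
      apply Filter.Tendsto.atTop_mul_atTop₀
      · exact (tendsto_const_mul_atTop_of_pos (by norm_num : (0:ℝ) < 2)).2 t1
      · exact tendsto_atTop_add_const_right _ 1 t1
    have t3 : Filter.Tendsto (fun k : ℕ => (2*(a+(k:ℝ))*(a+(k:ℝ)+1))⁻¹) atTop (nhds 0) :=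
      t4.inv_tendsto_atTop
    have t5 := t2.add t3
    simp only [add_zero] at t5
    simpa [hg, one_div] using t5
  have hexplim : Filter.Tendsto (fun n : ℕ => Real.exp (s^2 * (g 0 - g (n+1)))) atTop
      (nhds (Real.exp (s^2 * (g 0 - 0)))) := by
    apply (Real.continuous_exp.tendsto _).comp
    exact (tendsto_const_nhds.sub (hgz.comp (tendsto_add_atTop_nat 1))).const_mul (s^2)
  have hfin : Real.exp (s^2 * (g 0 - 0)) ≤ Real.Gamma (a+s) * Real.Gamma (a-s) / Real.Gamma a ^ 2 := by
    refine le_of_tendsto_of_tendsto hexplim hGlim ?_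
    filter_upwards [Filter.eventually_ge_atTop 1] with n hn
    rw [hratio n hn]
    exact hprod (n+1)
  have hg00 : g 0 = 1/a + 1/(2*a*(a+1)) := by simp [hg]
  rw [hg00, sub_zero] at hfin
  have hga : (0:ℝ) < Real.Gamma a ^ 2 := pow_pos (Real.Gamma_pos_of_pos ha) 2
  calc Real.Gamma a ^ 2 * Real.exp (s^2 * (1/a + 1/(2*a*(a+1))))
      ≤ Real.Gamma a ^ 2 * (Real.Gamma (a+s) * Real.Gamma (a-s) / Real.Gamma a ^ 2) :=
        mul_le_mul_of_nonneg_left hfin hga.le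
    _ = Real.Gamma (a+s) * Real.Gamma (a-s) := by field_simp

lemma ratio_bound {u : ℝ} (hu : 0 ≤ u) :
    Real.sqrt (2*u+1) * Real.Gamma (u+1/2) ≤ Real.sqrt π * Real.exp (3/4) * Real.Gamma (u+1) := by
  have hpi : (0:ℝ) < π := Real.pi_pos
  have hp : (0:ℝ) < Real.sqrt π := Real.sqrt_pos.2 hpi
  have hg2 : 0 < Real.Gamma (u+1/2) := Real.Gamma_pos_of_pos (by linarith)
  have hg1 : 0 < Real.Gamma (u+1) := Real.Gamma_pos_of_pos (by linarith)
  have hexp32 : (2:ℝ) ≤ Real.exp (3/2) := by linarith [Real.add_one_le_exp (3/2 : ℝ)]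
  have hexpsq : Real.exp (3/4) ^ 2 = Real.exp (3/2) := by
    rw [sq, ← Real.exp_add]; norm_num
  rcases le_or_gt u (1/2) with hc | hc
  · -- small u case
    have h2u : 0 ≤ 2*u := by linarith
    have h2u1 : (0:ℝ) < 2*u+1 := by linarith
    -- small1
    have s1 : Real.Gamma (u+1/2) ≤ Real.sqrt π ^ ((1:ℝ) - 2*u) := by
      have h := logGamma_combo (x := 1) (y := 1/2) one_pos (by norm_num) (t := 2*u) h2u
        (by linarith)
      rw [show (2*u) * 1 + (1 - 2*u) * (1/2) = u + 1/2 by ring, Real.Gamma_one,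
        Real.Gamma_one_half_eq, Real.one_rpow] at h
      simpa using h
    -- small2
    have s2 : (1:ℝ) ≤ Real.sqrt π ^ ((2:ℝ)*u) * Real.Gamma (u+1) := by
      set τ := 2*u/(2*u+1) with hτ
      have hτ0 : 0 ≤ τ := by positivity
      have hτ1 : τ ≤ 1 := by rw [hτ, div_le_one h2u1]; linarith
      have h := logGamma_combo (x := 1/2) (y := u+1) (by norm_num) (by linarith) hτ0 hτ1
      rw [show τ * (1/2) + (1 - τ) * (u+1) = 1 by rw [hτ]; field_simp; ring,
        Real.Gamma_one, Real.Gamma_one_half_eq] at h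
      have h2 := Real.rpow_le_rpow (by norm_num : (0:ℝ) ≤ 1) h (by linarith : (0:ℝ) ≤ 2*u+1)
      rw [Real.one_rpow, Real.mul_rpow (by positivity) (by positivity),
        ← Real.rpow_mul hp.le, ← Real.rpow_mul hg1.le] at h2
      rw [show τ * (2*u+1) = 2*u by rw [hτ]; field_simp,
        show (1 - τ) * (2*u+1) = 1 by rw [hτ]; field_simp; ring, Real.rpow_one] at h2
      exact h2
    have s2' : Real.sqrt π ^ (-(2*u) : ℝ) ≤ Real.Gamma (u+1) := by
      have := mul_le_mul_of_nonneg_left s2 (Real.rpow_pos_of_pos hp (-(2*u))).le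
      rwa [mul_one, ← mul_assoc, ← Real.rpow_add hp, neg_add_cancel, Real.rpow_zero,
        one_mul] at this
    have hsq : Real.sqrt (2*u+1) ≤ Real.exp (3/4) := by
      have h1 : Real.sqrt (2*u+1) ≤ Real.sqrt (Real.exp (3/2)) :=
        Real.sqrt_le_sqrt (by linarith)
      rwa [← hexpsq, Real.sqrt_sq (Real.exp_pos _).le] at h1
    calc Real.sqrt (2*u+1) * Real.Gamma (u+1/2)
        ≤ Real.exp (3/4) * Real.sqrt π ^ ((1:ℝ) - 2*u) :=
          mul_le_mul hsq s1 hg2.le (Real.exp_pos _).le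
      _ = Real.exp (3/4) * (Real.sqrt π * Real.sqrt π ^ (-(2*u):ℝ)) := by
          rw [show ((1:ℝ) - 2*u) = 1 + (-(2*u)) by ring, Real.rpow_add hp, Real.rpow_one]
      _ ≤ Real.exp (3/4) * (Real.sqrt π * Real.Gamma (u+1)) := by
          apply mul_le_mul_of_nonneg_left _ (Real.exp_pos _).le
          exact mul_le_mul_of_nonneg_left s2' hp.le
      _ = Real.sqrt π * Real.exp (3/4) * Real.Gamma (u+1) := by ring
  · -- large u case
    have hu0 : 0 < u := by linarith
    have hgu : 0 < Real.Gamma u := Real.Gamma_pos_of_pos hu0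
    have hw := wendel hu0
    have hadd : Real.Gamma (u+1) = u * Real.Gamma u := Real.Gamma_add_one hu0.ne'
    have hsq : (Real.sqrt (2*u+1) * Real.Gamma (u+1/2))^2
        ≤ (Real.sqrt π * Real.exp (3/4) * Real.Gamma (u+1))^2 := by
      have e1 : (Real.sqrt (2*u+1) * Real.Gamma (u+1/2))^2
          = (2*u+1) * Real.Gamma (u+1/2)^2 := by
        rw [mul_pow, Real.sq_sqrt (by linarith)]
      have e2 : (Real.sqrt π * Real.exp (3/4) * Real.Gamma (u+1))^2
          = π * Real.exp (3/2) * (u^2 * Real.Gamma u ^2) := by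
        rw [mul_pow, mul_pow, Real.sq_sqrt hpi.le, hexpsq, hadd]; ring
      rw [e1, e2]
      have hpi3 : (3:ℝ) ≤ π := by linarith [Real.pi_gt_three]
      have h6 : (6:ℝ) ≤ π * Real.exp (3/2) := by nlinarith
      have hkey : (2*u+1) * u ≤ π * Real.exp (3/2) * u^2 := by
        nlinarith [mul_le_mul_of_nonneg_right h6 (sq_nonneg u)]
      nlinarith [sq_nonneg (Real.Gamma (u+1/2)), mul_pos hu0 (pow_pos hgu 2)]
    have h1 := Real.sqrt_le_sqrt hsq
    rwa [Real.sqrt_sq (by positivity), Real.sqrt_sq (by positivity)] at h1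

set_option maxHeartbeats 1000000 in
/-- Lemma 8 (Lower bound on the shifted KT potential): for an integer `T ≥ 1`,
`δ ≥ 0` and `x ∈ [-T, T]`, the `δ`-shifted Krichevsky-Trofimov potential
satisfies
`F_T(x) = 2^T·Γ(δ+1)·Γ((T+δ+1)/2 + x/2)·Γ((T+δ+1)/2 - x/2)/(Γ((δ+1)/2)²·Γ(T+δ+1))
  ≥ exp(x²/(2(T+δ)) + (1/2)·ln((1+δ)/(T+δ)) - ln(e·√π))`. -/
theorem stmt_13 (T : ℕ) (hT : 1 ≤ T) (δ : ℝ) (hδ : 0 ≤ δ)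
    (x : ℝ) (hx : x ∈ Set.Icc (-(T : ℝ)) (T : ℝ)) :
    2 ^ T * Real.Gamma (δ + 1) *
        Real.Gamma (((T : ℝ) + δ + 1) / 2 + x / 2) *
        Real.Gamma (((T : ℝ) + δ + 1) / 2 - x / 2) /
        (Real.Gamma ((δ + 1) / 2) ^ 2 * Real.Gamma ((T : ℝ) + δ + 1)) ≥
      Real.exp (x ^ 2 / (2 * ((T : ℝ) + δ)) +
        (1 / 2) * Real.log ((1 + δ) / ((T : ℝ) + δ)) -
        Real.log (Real.exp 1 * Real.sqrt Real.pi)) := by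
  obtain ⟨hx1, hx2⟩ := hx
  have ht1 : (1:ℝ) ≤ (T:ℝ) := by exact_mod_cast hT
  obtain ⟨t, ht_def⟩ : ∃ t : ℝ, t = (T:ℝ) := ⟨_, rfl⟩
  rw [← ht_def] at hx1 hx2 ht1 ⊢
  obtain ⟨a, ha_def⟩ : ∃ a : ℝ, a = (t + δ + 1)/2 := ⟨_, rfl⟩
  obtain ⟨s, hs_def⟩ : ∃ s : ℝ, s = x/2 := ⟨_, rfl⟩
  obtain ⟨u, hu_def⟩ : ∃ u : ℝ, u = δ/2 := ⟨_, rfl⟩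
  rw [← ha_def, ← hs_def]
  have htd : (1:ℝ) ≤ t + δ := by linarith
  have hapos : 0 < a := by rw [ha_def]; linarith
  have hsa : |s| < a := by
    rw [abs_lt, hs_def, ha_def]
    constructor <;> [linarith; linarith]
  have hpi : (0:ℝ) < π := Real.pi_pos
  have hp : (0:ℝ) < Real.sqrt π := Real.sqrt_pos.2 hpi
  -- Gammas positive
  have hgA : 0 < Real.Gamma a := Real.Gamma_pos_of_pos hapos
  have hgA2 : 0 < Real.Gamma (a + 1/2) := Real.Gamma_pos_of_pos (by linarith)
  have hgU1 : 0 < Real.Gamma (u + 1) := Real.Gamma_pos_of_pos (by rw [hu_def]; linarith)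
  have hgU2 : 0 < Real.Gamma (u + 1/2) := Real.Gamma_pos_of_pos (by rw [hu_def]; linarith)
  have huu : (δ + 1)/2 = u + 1/2 := by rw [hu_def]; ring
  -- duplication rewrites
  have d1 := Real.Gamma_mul_Gamma_add_half ((δ+1)/2)
  rw [show (1:ℝ) - 2 * ((δ+1)/2) = -δ by ring, show 2 * ((δ+1)/2) = δ + 1 by ring,
    show (δ+1)/2 + 1/2 = u + 1 by rw [hu_def]; ring, huu] at d1
  have d2 := Real.Gamma_mul_Gamma_add_half a
  rw [show (1:ℝ) - 2 * a = -(t+δ) by rw [ha_def]; ring,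
    show 2 * a = t + δ + 1 by rw [ha_def]; ring] at d2
  -- the simplified form of F
  have hF : 2 ^ T * Real.Gamma (δ + 1) * Real.Gamma (a + s) * Real.Gamma (a - s) /
        (Real.Gamma ((δ + 1) / 2) ^ 2 * Real.Gamma (t + δ + 1))
      = Real.Gamma (u+1) * (Real.Gamma (a + s) * Real.Gamma (a - s)) /
        (Real.Gamma (u+1/2) * (Real.Gamma a * Real.Gamma (a + 1/2))) := by
    have hGs1 : 0 < Real.Gamma (a+s) := Real.Gamma_pos_of_pos (by cases abs_lt.1 hsa; linarith)
    have hGs2 : 0 < Real.Gamma (a-s) := Real.Gamma_pos_of_pos (by cases abs_lt.1 hsa; linarith)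
    have h2d : ((2:ℝ) ^ (-δ:ℝ)) ≠ 0 := (Real.rpow_pos_of_pos two_pos _).ne'
    have h2td : ((2:ℝ) ^ (-(t+δ):ℝ)) ≠ 0 := (Real.rpow_pos_of_pos two_pos _).ne'
    have hkey2 : (2:ℝ)^T * (2:ℝ)^(-(t+δ):ℝ) = (2:ℝ)^(-δ:ℝ) := by
      rw [show ((2:ℝ)^T) = (2:ℝ)^((T:ℕ):ℝ) from (Real.rpow_natCast 2 T).symm,
        ← Real.rpow_add two_pos, ← ht_def]
      congr 1
      ring
    rw [div_eq_div_iff (by positivity) (by positivity), huu]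
    linear_combination (2^T * Real.Gamma (δ+1) * (Real.Gamma (a+s) * Real.Gamma (a-s)) *
        Real.Gamma (u+1/2)) * d2 +
      (- (Real.Gamma (a+s) * Real.Gamma (a-s) * Real.Gamma (t+δ+1) * Real.Gamma (u+1/2))) * d1 +
      (Real.Gamma (a+s) * Real.Gamma (a-s) * Real.Gamma (t+δ+1) * Real.sqrt π * Real.Gamma (δ+1) *
        Real.Gamma (u+1/2)) * hkey2
  rw [ge_iff_le, hF]
  set c : ℝ := 1/a + 1/(2*a*(a+1)) with hc_def
  have B1 := prod_lower a s hapos hsa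
  have B2 : Real.Gamma (a + 1/2) ≤ Real.sqrt a * Real.Gamma a := by
    have hw := wendel hapos
    have h1 := Real.sqrt_le_sqrt hw
    rwa [Real.sqrt_sq hgA2.le, Real.sqrt_mul hapos.le, Real.sqrt_sq hgA.le] at h1
  have B3 : Real.sqrt (1+δ) * Real.Gamma (u+1/2) ≤
      Real.sqrt π * Real.exp (3/4) * Real.Gamma (u+1) := by
    have h := ratio_bound (u := u) (by rw [hu_def]; linarith)
    rwa [show 2*u+1 = 1+δ by rw [hu_def]; ring] at h
  -- numeric bound : Q ≤ s^2*c + 1/4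
  have htd0 : (0:ℝ) < t + δ := by linarith
  have hxs : x = 2*s := by rw [hs_def]; ring
  have hs2 : s^2 ≤ t^2/4 := by
    rw [hs_def]
    nlinarith [hx1, hx2]
  have hQ : x^2/(2*(t+δ)) ≤ s^2 * c + 1/4 := by
    have hgap : x^2/(2*(t+δ)) - s^2 * c = s^2 * (3/(2*a*(t+δ)*(a+1))) := by
      rw [hxs, hc_def, ha_def]
      field_simp
      ring
    have hD : (0:ℝ) < 2*a*(t+δ)*(a+1) := by positivity
    have hfrac : s^2 * (3/(2*a*(t+δ)*(a+1))) ≤ 1/4 := by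
      rw [mul_div_assoc', div_le_iff₀ hD]
      have hDbig : 3*t^2 ≤ 2*a*(t+δ)*(a+1) := by
        rw [ha_def]
        have ht0 : (0:ℝ) ≤ t := by linarith
        nlinarith [mul_nonneg ht0 (sq_nonneg (t-1)), mul_nonneg hδ hδ,
          mul_nonneg (mul_nonneg hδ hδ) hδ, mul_nonneg hδ ht0,
          mul_nonneg (mul_nonneg hδ ht0) ht0, mul_nonneg (mul_nonneg hδ hδ) ht0]
      nlinarith [hs2, hDbig]
    linarith [hgap, hfrac]
  have hQ2 : Real.exp (x^2/(2*(t+δ))) ≤ Real.exp (s^2*c) * Real.exp (1/4) := by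
    rw [← Real.exp_add]
    exact Real.exp_le_exp.2 hQ
  have hsqrta : Real.sqrt a ≤ Real.sqrt (t+δ) := by
    apply Real.sqrt_le_sqrt
    rw [ha_def]; linarith
  have hE : Real.exp (x^2/(2*(t+δ))) * Real.exp (3/4) * Real.sqrt a ≤
      Real.exp (s^2*c) * Real.exp 1 * Real.sqrt (t+δ) := by
    have h1 : Real.exp (x^2/(2*(t+δ))) * Real.exp (3/4) * Real.sqrt a ≤
        (Real.exp (s^2*c) * Real.exp (1/4)) * Real.exp (3/4) * Real.sqrt (t+δ) := by
      apply mul_le_mul (mul_le_mul_of_nonneg_right hQ2 (Real.exp_pos _).le) hsqrta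
        (Real.sqrt_nonneg a) (by positivity)
    calc Real.exp (x^2/(2*(t+δ))) * Real.exp (3/4) * Real.sqrt a ≤ _ := h1
      _ = Real.exp (s^2*c) * Real.exp 1 * Real.sqrt (t+δ) := by
          rw [mul_assoc (Real.exp (s^2*c)), ← Real.exp_add]
          norm_num
  -- rewrite the LHS
  have hy : (0:ℝ) < (1+δ)/(t+δ) := by positivity
  have hLHS : Real.exp (x ^ 2 / (2 * (t + δ)) + 1 / 2 * Real.log ((1 + δ) / (t + δ)) -
        Real.log (Real.exp 1 * Real.sqrt π))
      = Real.exp (x^2/(2*(t+δ))) * Real.sqrt (1+δ) / (Real.sqrt (t+δ) * (Real.exp 1 * Real.sqrt π)) := by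
    rw [Real.exp_sub, Real.exp_add, Real.exp_log (by positivity), mul_comm (1/2 : ℝ),
      Real.exp_mul, Real.exp_log hy, ← Real.sqrt_eq_rpow, Real.sqrt_div (by linarith : (0:ℝ) ≤ 1+δ)]
    field_simp
  rw [hLHS]
  have hden1 : (0:ℝ) < Real.sqrt (t+δ) * (Real.exp 1 * Real.sqrt π) := by positivity
  have hden2 : (0:ℝ) < Real.sqrt π * Real.exp (3/4) * Real.sqrt a := by positivity
  have hden3 : (0:ℝ) < Real.Gamma (u+1/2) * (Real.Gamma a * Real.Gamma (a+1/2)) := by positivity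
  have step1 : Real.exp (x^2/(2*(t+δ))) * Real.sqrt (1+δ) / (Real.sqrt (t+δ) * (Real.exp 1 * Real.sqrt π))
      ≤ Real.sqrt (1+δ) * Real.exp (s^2*c) / (Real.sqrt π * Real.exp (3/4) * Real.sqrt a) := by
    rw [div_le_div_iff₀ hden1 hden2]
    have hh := mul_le_mul_of_nonneg_right hE
      (by positivity : (0:ℝ) ≤ Real.sqrt (1+δ) * Real.sqrt π)
    linarith [hh]
  have step2 : Real.sqrt (1+δ) * Real.exp (s^2*c) / (Real.sqrt π * Real.exp (3/4) * Real.sqrt a)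
      ≤ Real.Gamma (u+1) * (Real.Gamma a ^ 2 * Real.exp (s^2*c)) /
        (Real.Gamma (u+1/2) * (Real.Gamma a * (Real.sqrt a * Real.Gamma a))) := by
    rw [div_le_div_iff₀ hden2 (by positivity)]
    have hh := mul_le_mul_of_nonneg_right B3
      (by positivity : (0:ℝ) ≤ Real.exp (s^2*c) * Real.Gamma a ^ 2 * Real.sqrt a)
    linarith [hh]
  have step3 : Real.Gamma (u+1) * (Real.Gamma a ^ 2 * Real.exp (s^2*c)) /
        (Real.Gamma (u+1/2) * (Real.Gamma a * (Real.sqrt a * Real.Gamma a)))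
      ≤ Real.Gamma (u+1) * (Real.Gamma (a+s) * Real.Gamma (a-s)) /
        (Real.Gamma (u+1/2) * (Real.Gamma a * Real.Gamma (a+1/2))) := by
    have hGs1 : 0 < Real.Gamma (a+s) := Real.Gamma_pos_of_pos (by cases abs_lt.1 hsa; linarith)
    have hGs2 : 0 < Real.Gamma (a-s) := Real.Gamma_pos_of_pos (by cases abs_lt.1 hsa; linarith)
    apply div_le_div₀ (by positivity)
    · exact mul_le_mul_of_nonneg_left B1 hgU1.le
    · exact hden3
    · apply mul_le_mul_of_nonneg_left _ hgU2.le
      exact mul_le_mul_of_nonneg_left B2 hgA.le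
  exact le_trans step1 (le_trans step2 step3)
end

section
/- Let x ≥ 0 and let w ≥ 0 satisfy w · e^w = x (i.e., w = W(x) is the value of the Lambert W function at x). Then 0.6321 · ln(x + 1) ≤ w ≤ ln(x + 1). -/
/-- Lemma 9 (bounds on the Lambert W function): if `x ≥ 0` and `w ≥ 0`
satisfies `w·e^w = x` (i.e. `w = W(x)`), then
`0.6321·ln(x+1) ≤ w ≤ ln(x+1)`. -/
theorem stmt_14 (x w : ℝ) (hx : 0 ≤ x) (hw : 0 ≤ w)
    (hlambert : w * Real.exp w = x) :
    0.6321 * Real.log (x + 1) ≤ w ∧ w ≤ Real.log (x + 1) := by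
  have hx1 : (0:ℝ) < x + 1 := by linarith
  have hew : (0:ℝ) < Real.exp w := Real.exp_pos w
  constructor
  · -- lower bound
    set b : ℝ := 3679/6321 with hb
    have hbw : 0 ≤ b * w := by positivity
    -- cubic Taylor lower bound for exp (b*w)
    have htaylor : 1 + b*w + (b*w)^2/2 + (b*w)^3/6 ≤ Real.exp (b*w) := by
      have h := Real.sum_le_exp_of_nonneg hbw 4
      simp [Finset.sum_range_succ, Nat.factorial] at h
      nlinarith [h]
    have hA : w^2 + w + 1 ≤ Real.exp (b*w) * (1 + w) := by
      nlinarith [htaylor, sq_nonneg w, sq_nonneg (b*w), pow_le_pow_left₀ hw (le_refl w) 3,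
        mul_nonneg hw hw, mul_nonneg (mul_nonneg hw hw) hw]
    -- exp(-w) ≤ 1/(1+w), i.e. (1+w) ≤ exp w
    have hB : 1 + w ≤ Real.exp w := by linarith [Real.add_one_le_exp w]
    -- exp(b*w) ≥ w + exp(-w)
    have hC : w + Real.exp (-w) ≤ Real.exp (b*w) := by
      have h1w : (0:ℝ) < 1 + w := by linarith
      have hinv : Real.exp (-w) ≤ 1 / (1+w) := by
        rw [Real.exp_neg, inv_eq_one_div]
        exact one_div_le_one_div_of_le h1w hB
      have hone : 1/(1+w) * (1+w) = 1 := div_mul_cancel₀ 1 (ne_of_gt h1w)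
      nlinarith [hA, hone, hinv, h1w]
    -- multiply by exp w
    have hD : w * Real.exp w + 1 ≤ Real.exp (w * (10000/6321)) := by
      have := mul_le_mul_of_nonneg_left hC (le_of_lt hew)
      rw [mul_add, ← Real.exp_add] at this
      simp at this
      have heq : Real.exp w * Real.exp (b*w) = Real.exp (w * (10000/6321)) := by
        rw [← Real.exp_add, hb]; ring_nf
      nlinarith [this, heq]
    have hlog : Real.log (x+1) ≤ w * (10000/6321) := by
      rw [Real.log_le_iff_le_exp hx1]
      linarith [hD, hlambert]
    nlinarith [hlog, Real.log_nonneg (by linarith : (1:ℝ) ≤ x + 1)]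
  · -- upper bound
    have h1 : 1 - w ≤ Real.exp (-w) := by
      have := Real.add_one_le_exp (-w)
      linarith
    have h2 : Real.exp w * (1 - w) ≤ 1 := by
      calc Real.exp w * (1 - w) ≤ Real.exp w * Real.exp (-w) :=
            mul_le_mul_of_nonneg_left h1 (le_of_lt hew)
        _ = 1 := by rw [← Real.exp_add]; simp
    have h3 : Real.exp w ≤ x + 1 := by nlinarith [hlambert]
    calc w = Real.log (Real.exp w) := (Real.log_exp w).symm
      _ ≤ Real.log (x+1) := Real.log_le_log hew h3
end

section
/- Let α > 0, β > 0, and y ≥ 0. Then sup_{x ≥ 0} ( x·y − β·exp(x²/(2α)) ) ≤ y · √( α · ln(α·y²/β² + 1) ) − β. -/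
set_option maxHeartbeats 1600000 in
/-- Lemma 10 (upper bound on the Fenchel conjugate of `β·exp(x²/(2α))`):
for `α, β > 0` and `y ≥ 0`,
`sup_{x ≥ 0} (x·y - β·exp(x²/(2α))) ≤ y·√(α·ln(α·y²/β² + 1)) - β`. -/
theorem stmt_15 (α β y : ℝ) (hα : 0 < α) (hβ : 0 < β) (hy : 0 ≤ y) :
    (⨆ x : Set.Ici (0 : ℝ), ((x : ℝ) * y - β * Real.exp ((x : ℝ) ^ 2 / (2 * α)))) ≤
      y * Real.sqrt (α * Real.log (α * y ^ 2 / β ^ 2 + 1)) - β := by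
  set L : ℝ := α * y ^ 2 / β ^ 2 + 1 with hLdef
  have hL1 : 1 ≤ L := by
    have h0 : 0 ≤ α * y ^ 2 / β ^ 2 := by positivity
    simp only [hLdef]; linarith
  have hLpos : 0 < L := by linarith
  have hlog : 0 ≤ Real.log L := Real.log_nonneg hL1
  set s : ℝ := Real.sqrt (α * Real.log L) with hsdef
  have hs0 : 0 ≤ s := Real.sqrt_nonneg _
  have hs2 : s ^ 2 = α * Real.log L := Real.sq_sqrt (by positivity)
  have hy2 : y ^ 2 = β ^ 2 * (L - 1) / α := by
    simp only [hLdef]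
    field_simp
    ring
  -- e^a - 1 ≤ a e^a with a = log L
  have haux : L - 1 ≤ Real.log L * L := by
    have h := Real.add_one_le_exp (-Real.log L)
    rw [Real.exp_neg, Real.exp_log hLpos] at h
    have h2 := mul_le_mul_of_nonneg_right h hLpos.le
    rw [inv_mul_cancel₀ (ne_of_gt hLpos)] at h2
    nlinarith
  set E : ℝ := Real.exp (s ^ 2 / (2 * α)) with hEdef
  have hE0 : 0 < E := Real.exp_pos _
  have hE1 : 1 ≤ E := Real.one_le_exp (by positivity)
  have hEsq : E ^ 2 = L := by
    have h : s ^ 2 / (2 * α) + s ^ 2 / (2 * α) = Real.log L := by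
      rw [hs2]; field_simp; ring
    rw [hEdef, pow_two, ← Real.exp_add, h, Real.exp_log hLpos]
  have hyA : y ≤ β * s / α * E := by
    have hR0 : 0 ≤ β * s / α * E := by positivity
    have hsq : y ^ 2 ≤ (β * s / α * E) ^ 2 := by
      have e1 : (β * s / α * E) ^ 2 = β ^ 2 * s ^ 2 / α ^ 2 * E ^ 2 := by ring
      rw [e1, hEsq, hs2, hy2]
      have e2 : β ^ 2 * (α * Real.log L) / α ^ 2 * L = β ^ 2 * (Real.log L * L) / α := by
        field_simp
      rw [e2, div_le_div_iff₀ hα hα]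
      nlinarith [mul_le_mul_of_nonneg_left haux (sq_nonneg β), sq_nonneg α]
    nlinarith [hsq, hR0, hy]
  clear_value L s E
  apply ciSup_le
  intro x
  obtain ⟨x, hx0⟩ := x
  simp only [Set.mem_Ici] at hx0
  show x * y - β * Real.exp (x ^ 2 / (2 * α)) ≤ y * s - β
  set F : ℝ := Real.exp (x ^ 2 / (2 * α)) with hFdef
  have hF1 : 1 ≤ F := Real.one_le_exp (by positivity)
  clear_value F
  rcases le_total x s with hxs | hxs
  · have h1 : x * y ≤ s * y := mul_le_mul_of_nonneg_right hxs hy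
    have h2 : β * 1 ≤ β * F := mul_le_mul_of_nonneg_left hF1 hβ.le
    linarith
  · -- tangent line inequality
    have htan : E * (1 + (x ^ 2 - s ^ 2) / (2 * α)) ≤ F := by
      have e1 : F = E * Real.exp ((x ^ 2 - s ^ 2) / (2 * α)) := by
        rw [hFdef, hEdef, ← Real.exp_add]
        congr 1
        field_simp
        ring
      rw [e1]
      have h := Real.add_one_le_exp ((x ^ 2 - s ^ 2) / (2 * α))
      nlinarith [hE0.le]
    have h2 : y * (x - s) ≤ β * s / α * E * (x - s) :=
      mul_le_mul_of_nonneg_right hyA (by linarith)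
    have h3 : s * (x - s) ≤ (x ^ 2 - s ^ 2) / 2 := by nlinarith [sq_nonneg (x - s)]
    have h4 : β * s / α * E * (x - s) ≤ β * E * ((x ^ 2 - s ^ 2) / (2 * α)) := by
      have e1 : β * s / α * E * (x - s) = β * E * (s * (x - s)) / α := by ring
      have e2 : β * E * ((x ^ 2 - s ^ 2) / (2 * α)) = β * E * ((x ^ 2 - s ^ 2) / 2) / α := by
        ring
      rw [e1, e2, div_le_div_iff₀ hα hα]
      nlinarith [mul_le_mul_of_nonneg_left h3 (show (0:ℝ) ≤ β * E by positivity)]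
    have h5 : β * E * ((x ^ 2 - s ^ 2) / (2 * α)) ≤ β * (F - E) := by
      nlinarith [mul_le_mul_of_nonneg_left htan hβ.le]
    have h6 : β * 1 ≤ β * E := mul_le_mul_of_nonneg_left hE1 hβ.le
    nlinarith [h2, h4, h5, h6]
end
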